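/- arXiv:2509.20747 — 14 statements merged into one kernel-verified Lean document; each statement's English description precedes it below -/
import Mathlib

section
/- Suppose p : Ω_h × [0,∞) → ℝ is differentiable in its time variable and satisfies the state-constrained forward (master) equation: for every x ∈ Ω_h and t ≥ 0, ∂_t p(x,t) = (1/h)·Σ_{j=1}^M 1[x − ν_j·h ∈ Ω_h]·(Φ_j⁺(x − ν_j·h)·p(x − ν_j·h, t) − Φ_j⁻(x)·p(x,t)) + (1/h)·Σ_{j=1}^M 1[x + ν_j·h ∈ Ω_h]·(Φ_j⁻(x + ν_j·h)·p(x + ν_j·h, t) − Φ_j⁺(x)·p(x,t)). Then the total probability in Ω_h is conserved: for every t ≥ 0, Σ_{x ∈ Ω_h} p(x,t) = Σ_{x ∈ Ω_h} p(x,0). -/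
/-! Every jump `x → x ± ν_j h` between two grid points appears twice in `∑_x ∂_t p(x,t)`:
as a gain at its target and as an equal loss at its source. Translating the summation
variable by `ν_j h` pairs them up, so the total mass has zero right derivative on
`[0, ∞)` and is therefore constant. -/

open scoped Classical BigOperators
open MeasureTheory

noncomputable section

/-- Shift a grid point `x` by the integer vector `ν` scaled by `h`. -/
def shiftPt {N : ℕ} (h : ℝ) (x : Fin N → ℝ) (ν : Fin N → ℤ) : Fin N → ℝ :=
  fun k => x k + (ν k : ℝ) * h

/-- The state-constrained discrete Hamiltonian `H_h`. -/
def discHam {N M : ℕ} (h : ℝ) (Ωh : Finset (Fin N → ℝ)) (ν : Fin M → Fin N → ℤ)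
    (Φp Φm : Fin M → (Fin N → ℝ) → ℝ) (u : (Fin N → ℝ) → ℝ) (x : Fin N → ℝ) : ℝ :=
  ∑ j : Fin M,
    ((if shiftPt h x (ν j) ∈ Ωh then
        Φp j x * (Real.exp ((u (shiftPt h x (ν j)) - u x) / h) - 1) else 0)
      + (if shiftPt h x (-(ν j)) ∈ Ωh then
        Φm j x * (Real.exp ((u (shiftPt h x (-(ν j))) - u x) / h) - 1) else 0))

lemma shiftPt_eq_add {N : ℕ} (h : ℝ) (x : Fin N → ℝ) (v : Fin N → ℤ) :
    shiftPt h x v = x + fun k => (v k : ℝ) * h :=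
  rfl

lemma shiftPt_neg_eq_sub {N : ℕ} (h : ℝ) (x : Fin N → ℝ) (v : Fin N → ℤ) :
    shiftPt h x (-v) = x - fun k => (v k : ℝ) * h := by
  funext k
  simp [shiftPt, sub_eq_add_neg]

lemma Finset.sum_ite_add_mem_eq_sum_ite_sub_mem {G M : Type*} [AddGroup G] [DecidableEq G]
    [AddCommMonoid M] (S : Finset G) (a : G) (g : G → M) :
    ∑ x ∈ S, (if x + a ∈ S then g (x + a) else 0)
      = ∑ x ∈ S, (if x - a ∈ S then g x else 0) := by
  rw [← Finset.sum_filter, ← Finset.sum_filter]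
  refine Finset.sum_nbij' (· + a) (· - a) ?_ ?_ ?_ ?_ ?_ <;> simp +contextual

lemma Finset.sum_gain_sub_loss_eq_zero {G M : Type*} [AddCommGroup G] [DecidableEq G]
    [AddCommGroup M] (S : Finset G) (a : G) (f g : G → M) :
    ∑ x ∈ S, ((if x - a ∈ S then f (x - a) - g x else 0)
      + (if x + a ∈ S then g (x + a) - f x else 0)) = 0 := by
  have ite_sub_zero (P : Prop) [Decidable P] (b c : M) :
      (if P then b - c else 0) = (if P then b else 0) - (if P then c else 0) := by
    split_ifs <;> simp
  simp only [ite_sub_zero, Finset.sum_add_distrib, Finset.sum_sub_distrib]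
  have hf := Finset.sum_ite_add_mem_eq_sum_ite_sub_mem S (-a) f
  simp only [← sub_eq_add_neg, sub_neg_eq_add] at hf
  rw [hf, Finset.sum_ite_add_mem_eq_sum_ite_sub_mem]
  abel

lemma eq_of_hasDerivWithinAt_Ici_zero {E : Type*} [NormedAddCommGroup E] [NormedSpace ℝ E]
    {f : ℝ → E} {a : ℝ} (hf : ∀ s ∈ Set.Ici a, HasDerivWithinAt f 0 (Set.Ici a) s) :
    ∀ t ∈ Set.Ici a, f t = f a := fun t ht =>
  constant_of_has_deriv_right_zero
    (fun s hs => (hf s hs.1).continuousWithinAt.mono Set.Icc_subset_Ici_self)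
    (fun s hs => (hf s hs.1).mono (Set.Ici_subset_Ici.2 hs.1)) t ⟨ht, le_rfl⟩

theorem forward_equation_mass_conservation_general
    {N M : ℕ}
    (h : ℝ)
    (ν : Fin M → Fin N → ℤ)
    (Φp Φm : Fin M → (Fin N → ℝ) → ℝ)
    (Ωh : Finset (Fin N → ℝ))
    (p : (Fin N → ℝ) → ℝ → ℝ)
    (hp : ∀ x ∈ Ωh, ∀ t ∈ Set.Ici (0:ℝ),
      HasDerivWithinAt (fun s => p x s)
        ((1 / h) * ∑ j : Fin M,
            ((if shiftPt h x (-(ν j)) ∈ Ωh then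
                Φp j (shiftPt h x (-(ν j))) * p (shiftPt h x (-(ν j))) t
                  - Φm j x * p x t else 0)
              + (if shiftPt h x (ν j) ∈ Ωh then
                Φm j (shiftPt h x (ν j)) * p (shiftPt h x (ν j)) t
                  - Φp j x * p x t else 0)))
        (Set.Ici 0) t) :
    ∀ t ∈ Set.Ici (0:ℝ), ∑ x ∈ Ωh, p x t = ∑ x ∈ Ωh, p x 0 := by
  refine eq_of_hasDerivWithinAt_Ici_zero fun t ht => ?_
  refine (HasDerivWithinAt.fun_sum fun x hx => hp x hx t ht).congr_deriv ?_
  rw [← Finset.mul_sum, Finset.sum_comm, Finset.sum_eq_zero fun j _ => ?_, mul_zero]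
  simp only [shiftPt_neg_eq_sub]
  simp only [shiftPt_eq_add]
  exact Finset.sum_gain_sub_loss_eq_zero Ωh _ (fun y => Φp j y * p y t) (fun y => Φm j y * p y t)

/-- **Conservation of total probability** for the state-constrained forward
(master) equation on the grid `Ω_h`. -/
theorem forward_equation_mass_conservation
    {N M : ℕ} (hN : 0 < N) (hM : 0 < M)
    (h : ℝ) (hh : 0 < h)
    (Ω : Set (Fin N → ℝ)) (hΩo : IsOpen Ω) (hΩne : Ω.Nonempty)
    (hΩbd : Bornology.IsBounded Ω)
    (hΩpos : closure Ω ⊆ {x : Fin N → ℝ | ∀ k, 0 < x k})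
    (ν : Fin M → Fin N → ℤ)
    (Φp Φm : Fin M → (Fin N → ℝ) → ℝ)
    (hΦpc : ∀ j, ContinuousOn (Φp j) (closure Ω))
    (hΦmc : ∀ j, ContinuousOn (Φm j) (closure Ω))
    (hΦp0 : ∀ j, ∀ x ∈ closure Ω, 0 ≤ Φp j x)
    (hΦm0 : ∀ j, ∀ x ∈ closure Ω, 0 ≤ Φm j x)
    (Ωh : Finset (Fin N → ℝ))
    (hΩh : ∀ x : Fin N → ℝ,
      x ∈ Ωh ↔ ((∃ i : Fin N → ℕ, ∀ k, x k = (i k : ℝ) * h) ∧ x ∈ closure Ω))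
    (hne : Ωh.Nonempty)
    (p : (Fin N → ℝ) → ℝ → ℝ)
    (hp : ∀ x ∈ Ωh, ∀ t ∈ Set.Ici (0:ℝ),
      HasDerivWithinAt (fun s => p x s)
        ((1 / h) * ∑ j : Fin M,
            ((if shiftPt h x (-(ν j)) ∈ Ωh then
                Φp j (shiftPt h x (-(ν j))) * p (shiftPt h x (-(ν j))) t
                  - Φm j x * p x t else 0)
              + (if shiftPt h x (ν j) ∈ Ωh then
                Φm j (shiftPt h x (ν j)) * p (shiftPt h x (ν j)) t
                  - Φp j x * p x t else 0)))
        (Set.Ici 0) t) :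
    ∀ t ∈ Set.Ici (0:ℝ), ∑ x ∈ Ωh, p x t = ∑ x ∈ Ωh, p x 0 :=
  forward_equation_mass_conservation_general h ν Φp Φm Ωh p hp
end
end

section
/- Let Δt > 0 and f, g : Ω_h → ℝ. Suppose u : Ω_h → ℝ solves the discrete resolvent problem with data f, i.e. u(x) − Δt·(H_h u)(x) = f(x) for all x ∈ Ω_h, and v : Ω_h → ℝ solves the discrete resolvent problem with data g. If f(x) ≤ g(x) for all x ∈ Ω_h, then u(x) ≤ v(x) for all x ∈ Ω_h. -/
open scoped Classical BigOperators
open MeasureTheory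

noncomputable section

/-- **Monotonicity of the discrete resolvent**: if `f ≤ g` on `Ω_h` then the
corresponding solutions of the resolvent problem satisfy `u ≤ v` on `Ω_h`. -/
theorem discrete_resolvent_monotone
    {N M : ℕ} (hN : 0 < N) (hM : 0 < M)
    (h : ℝ) (hh : 0 < h)
    (Ω : Set (Fin N → ℝ)) (hΩo : IsOpen Ω) (hΩne : Ω.Nonempty)
    (hΩbd : Bornology.IsBounded Ω)
    (hΩpos : closure Ω ⊆ {x : Fin N → ℝ | ∀ k, 0 < x k})
    (ν : Fin M → Fin N → ℤ)
    (Φp Φm : Fin M → (Fin N → ℝ) → ℝ)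
    (hΦpc : ∀ j, ContinuousOn (Φp j) (closure Ω))
    (hΦmc : ∀ j, ContinuousOn (Φm j) (closure Ω))
    (hΦp0 : ∀ j, ∀ x ∈ closure Ω, 0 ≤ Φp j x)
    (hΦm0 : ∀ j, ∀ x ∈ closure Ω, 0 ≤ Φm j x)
    (Ωh : Finset (Fin N → ℝ))
    (hΩh : ∀ x : Fin N → ℝ,
      x ∈ Ωh ↔ ((∃ i : Fin N → ℕ, ∀ k, x k = (i k : ℝ) * h) ∧ x ∈ closure Ω))
    (hne : Ωh.Nonempty)
    (Δt : ℝ) (hΔt : 0 < Δt) (f g u v : (Fin N → ℝ) → ℝ)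
    (hu : ∀ x ∈ Ωh, u x - Δt * discHam h Ωh ν Φp Φm u x = f x)
    (hv : ∀ x ∈ Ωh, v x - Δt * discHam h Ωh ν Φp Φm v x = g x)
    (hfg : ∀ x ∈ Ωh, f x ≤ g x) :
    ∀ x ∈ Ωh, u x ≤ v x := by
  classical
  obtain ⟨x₀, hx₀, hmax⟩ := Ωh.exists_max_image (fun y => u y - v y) hne
  have hx₀cl : x₀ ∈ closure Ω := ((hΩh x₀).mp hx₀).2
  have key : discHam h Ωh ν Φp Φm u x₀ ≤ discHam h Ωh ν Φp Φm v x₀ := by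
    apply Finset.sum_le_sum
    intro j _
    have estep : ∀ y ∈ Ωh,
        Real.exp ((u y - u x₀) / h) - 1 ≤ Real.exp ((v y - v x₀) / h) - 1 := by
      intro y hy
      have := hmax y hy
      have : (u y - u x₀) / h ≤ (v y - v x₀) / h := by
        apply div_le_div_of_nonneg_right ?_ hh.le
        linarith
      simpa using Real.exp_le_exp.mpr this
    apply add_le_add
    · split_ifs with hmem
      · exact mul_le_mul_of_nonneg_left (estep _ hmem) (hΦp0 j x₀ hx₀cl)
      · exact le_rfl
    · split_ifs with hmem
      · exact mul_le_mul_of_nonneg_left (estep _ hmem) (hΦm0 j x₀ hx₀cl)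
      · exact le_rfl
  have hd : u x₀ - v x₀ ≤ 0 := by
    have h1 := hu x₀ hx₀
    have h2 := hv x₀ hx₀
    have h3 := hfg x₀ hx₀
    nlinarith [mul_le_mul_of_nonneg_left key hΔt.le]
  intro x hx
  have := hmax x hx
  linarith
end
end

section
/- Let Δt > 0 and f, g : Ω_h → ℝ. Suppose u : Ω_h → ℝ solves the discrete resolvent problem with data f, i.e. u(x) − Δt·(H_h u)(x) = f(x) for all x ∈ Ω_h, and v : Ω_h → ℝ solves the discrete resolvent problem with data g. Then the resolvent is nonexpansive: max_{x ∈ Ω_h} |u(x) − v(x)| ≤ max_{x ∈ Ω_h} |f(x) − g(x)|. In particular, the solution of the discrete resolvent problem with given data is unique. -/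
open scoped Classical BigOperators
open MeasureTheory

noncomputable section

lemma comp_aux {N M : ℕ} (h : ℝ) (hh : 0 < h)
    (Ωh : Finset (Fin N → ℝ)) (hne : Ωh.Nonempty)
    (ν : Fin M → Fin N → ℤ) (Φp Φm : Fin M → (Fin N → ℝ) → ℝ)
    (hΦp0 : ∀ j, ∀ x ∈ Ωh, 0 ≤ Φp j x) (hΦm0 : ∀ j, ∀ x ∈ Ωh, 0 ≤ Φm j x)
    (Δt : ℝ) (hΔt : 0 < Δt) (f g u v : (Fin N → ℝ) → ℝ)
    (hu : ∀ x ∈ Ωh, u x - Δt * discHam h Ωh ν Φp Φm u x = f x)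
    (hv : ∀ x ∈ Ωh, v x - Δt * discHam h Ωh ν Φp Φm v x = g x) :
    Ωh.sup' hne (fun x => u x - v x) ≤ Ωh.sup' hne (fun x => f x - g x) := by
  obtain ⟨x₀, hx₀, hmax⟩ := Finset.exists_mem_eq_sup' hne (fun x => u x - v x)
  rw [hmax]
  have hmaxpt : ∀ y ∈ Ωh, u y - v y ≤ u x₀ - v x₀ := by
    intro y hy
    rw [← hmax] at *
    exact Finset.le_sup' (fun x => u x - v x) hy
  have hH : discHam h Ωh ν Φp Φm u x₀ ≤ discHam h Ωh ν Φp Φm v x₀ := by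
    apply Finset.sum_le_sum
    intro j _
    have key : ∀ (y : Fin N → ℝ), y ∈ Ωh → ∀ c : ℝ, 0 ≤ c →
        c * (Real.exp ((u y - u x₀) / h) - 1) ≤ c * (Real.exp ((v y - v x₀) / h) - 1) := by
      intro y hy c hc
      apply mul_le_mul_of_nonneg_left _ hc
      have : u y - u x₀ ≤ v y - v x₀ := by have := hmaxpt y hy; linarith
      have := Real.exp_le_exp.mpr ((div_le_div_iff_of_pos_right hh).mpr this)
      linarith
    apply add_le_add <;> split_ifs with hmem
    · exact key _ hmem _ (hΦp0 j x₀ hx₀)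
    · exact le_rfl
    · exact key _ hmem _ (hΦm0 j x₀ hx₀)
    · exact le_rfl
  have h1 := hu x₀ hx₀
  have h2 := hv x₀ hx₀
  have : u x₀ - v x₀ ≤ f x₀ - g x₀ := by nlinarith
  exact this.trans (Finset.le_sup' (fun x => f x - g x) hx₀)

/-- **Nonexpansiveness of the discrete resolvent** in the sup norm, and
(in particular) uniqueness of solutions with given data. -/
theorem discrete_resolvent_nonexpansive
    {N M : ℕ} (hN : 0 < N) (hM : 0 < M)
    (h : ℝ) (hh : 0 < h)
    (Ω : Set (Fin N → ℝ)) (hΩo : IsOpen Ω) (hΩne : Ω.Nonempty)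
    (hΩbd : Bornology.IsBounded Ω)
    (hΩpos : closure Ω ⊆ {x : Fin N → ℝ | ∀ k, 0 < x k})
    (ν : Fin M → Fin N → ℤ)
    (Φp Φm : Fin M → (Fin N → ℝ) → ℝ)
    (hΦpc : ∀ j, ContinuousOn (Φp j) (closure Ω))
    (hΦmc : ∀ j, ContinuousOn (Φm j) (closure Ω))
    (hΦp0 : ∀ j, ∀ x ∈ closure Ω, 0 ≤ Φp j x)
    (hΦm0 : ∀ j, ∀ x ∈ closure Ω, 0 ≤ Φm j x)
    (Ωh : Finset (Fin N → ℝ))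
    (hΩh : ∀ x : Fin N → ℝ,
      x ∈ Ωh ↔ ((∃ i : Fin N → ℕ, ∀ k, x k = (i k : ℝ) * h) ∧ x ∈ closure Ω))
    (hne : Ωh.Nonempty)
    (Δt : ℝ) (hΔt : 0 < Δt) (f g u v : (Fin N → ℝ) → ℝ)
    (hu : ∀ x ∈ Ωh, u x - Δt * discHam h Ωh ν Φp Φm u x = f x)
    (hv : ∀ x ∈ Ωh, v x - Δt * discHam h Ωh ν Φp Φm v x = g x) :
    (Ωh.sup' hne (fun x => |u x - v x|) ≤ Ωh.sup' hne (fun x => |f x - g x|)) ∧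
    ((∀ x ∈ Ωh, f x = g x) → ∀ x ∈ Ωh, u x = v x) := by
  have hp0 : ∀ j, ∀ x ∈ Ωh, 0 ≤ Φp j x := fun j x hx => hΦp0 j x ((hΩh x).mp hx).2
  have hm0 : ∀ j, ∀ x ∈ Ωh, 0 ≤ Φm j x := fun j x hx => hΦm0 j x ((hΩh x).mp hx).2
  have huv := comp_aux h hh Ωh hne ν Φp Φm hp0 hm0 Δt hΔt f g u v hu hv
  have hvu := comp_aux h hh Ωh hne ν Φp Φm hp0 hm0 Δt hΔt g f v u hv hu
  have habs : ∀ (a b : (Fin N → ℝ) → ℝ),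
      Ωh.sup' hne (fun x => a x - b x) ≤ Ωh.sup' hne (fun x => |a x - b x|) := by
    intro a b
    apply Finset.sup'_le
    intro x hx
    exact le_trans (le_abs_self _) (Finset.le_sup' (fun x => |a x - b x|) hx)
  have hmain : Ωh.sup' hne (fun x => |u x - v x|) ≤ Ωh.sup' hne (fun x => |f x - g x|) := by
    apply Finset.sup'_le
    intro x hx
    rw [abs_sub_le_iff]
    constructor
    · exact le_trans (Finset.le_sup' (fun x => u x - v x) hx) (huv.trans (habs f g))
    · have : Ωh.sup' hne (fun x => |g x - f x|) = Ωh.sup' hne (fun x => |f x - g x|) := by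
        congr 1; ext y; rw [abs_sub_comm]
      exact le_trans (Finset.le_sup' (fun x => v x - u x) hx)
        (hvu.trans ((habs g f).trans this.le))
  refine ⟨hmain, fun hfg x hx => ?_⟩
  have h0 : Ωh.sup' hne (fun x => |f x - g x|) = 0 := by
    apply le_antisymm
    · apply Finset.sup'_le
      intro y hy
      simp [hfg y hy]
    · obtain ⟨y, hy⟩ := hne
      exact le_trans (abs_nonneg _) (Finset.le_sup' (fun x => |f x - g x|) hy)
  have := le_trans (Finset.le_sup' (fun x => |u x - v x|) hx) (hmain.trans h0.le)
  have := abs_nonneg (u x - v x)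
  have : |u x - v x| = 0 := by linarith
  linarith [abs_eq_zero.mp this, sub_eq_zero.mp (abs_eq_zero.mp this)]
end
end

section
/- Let Δt > 0 and f : Ω_h → ℝ, and suppose u : Ω_h → ℝ solves the discrete resolvent problem with data f, i.e. u(x) − Δt·(H_h u)(x) = f(x) for all x ∈ Ω_h. Then max_{x ∈ Ω_h} |(H_h u)(x)| = (1/Δt)·max_{x ∈ Ω_h} |u(x) − f(x)| ≤ max_{x ∈ Ω_h} |(H_h f)(x)|. -/
open scoped Classical BigOperators
open MeasureTheory

noncomputable section

/-- Monotonicity of the discrete Hamiltonian at a point where differences compare. -/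
lemma discHam_mono_at {N M : ℕ} (h : ℝ) (hh : 0 < h)
    (Ωh : Finset (Fin N → ℝ)) (ν : Fin M → Fin N → ℤ)
    (Φp Φm : Fin M → (Fin N → ℝ) → ℝ)
    (u v : (Fin N → ℝ) → ℝ) (x₀ : Fin N → ℝ)
    (hp : ∀ j, 0 ≤ Φp j x₀) (hm : ∀ j, 0 ≤ Φm j x₀)
    (hcmp : ∀ y ∈ Ωh, u y - u x₀ ≤ v y - v x₀) :
    discHam h Ωh ν Φp Φm u x₀ ≤ discHam h Ωh ν Φp Φm v x₀ := by
  unfold discHam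
  apply Finset.sum_le_sum
  intro j _
  apply add_le_add
  · split_ifs with hc
    · have h2 := Real.exp_le_exp.mpr ((div_le_div_iff_of_pos_right hh).mpr (hcmp _ hc))
      exact mul_le_mul_of_nonneg_left (by linarith) (hp j)
    · exact le_rfl
  · split_ifs with hc
    · have h2 := Real.exp_le_exp.mpr ((div_le_div_iff_of_pos_right hh).mpr (hcmp _ hc))
      exact mul_le_mul_of_nonneg_left (by linarith) (hm j)
    · exact le_rfl

/-- For a solution of the discrete resolvent problem `u - Δt·H_h u = f`, one has
`max |H_h u| = (1/Δt)·max |u - f| ≤ max |H_h f|` over `Ω_h`. -/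
theorem discrete_resolvent_hamiltonian_bound
    {N M : ℕ} (hN : 0 < N) (hM : 0 < M)
    (h : ℝ) (hh : 0 < h)
    (Ω : Set (Fin N → ℝ)) (hΩo : IsOpen Ω) (hΩne : Ω.Nonempty)
    (hΩbd : Bornology.IsBounded Ω)
    (hΩpos : closure Ω ⊆ {x : Fin N → ℝ | ∀ k, 0 < x k})
    (ν : Fin M → Fin N → ℤ)
    (Φp Φm : Fin M → (Fin N → ℝ) → ℝ)
    (hΦpc : ∀ j, ContinuousOn (Φp j) (closure Ω))
    (hΦmc : ∀ j, ContinuousOn (Φm j) (closure Ω))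
    (hΦp0 : ∀ j, ∀ x ∈ closure Ω, 0 ≤ Φp j x)
    (hΦm0 : ∀ j, ∀ x ∈ closure Ω, 0 ≤ Φm j x)
    (Ωh : Finset (Fin N → ℝ))
    (hΩh : ∀ x : Fin N → ℝ,
      x ∈ Ωh ↔ ((∃ i : Fin N → ℕ, ∀ k, x k = (i k : ℝ) * h) ∧ x ∈ closure Ω))
    (hne : Ωh.Nonempty)
    (Δt : ℝ) (hΔt : 0 < Δt) (f u : (Fin N → ℝ) → ℝ)
    (hu : ∀ x ∈ Ωh, u x - Δt * discHam h Ωh ν Φp Φm u x = f x) :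
    Ωh.sup' hne (fun x => |discHam h Ωh ν Φp Φm u x|)
        = (1 / Δt) * Ωh.sup' hne (fun x => |u x - f x|) ∧
    (1 / Δt) * Ωh.sup' hne (fun x => |u x - f x|)
        ≤ Ωh.sup' hne (fun x => |discHam h Ωh ν Φp Φm f x|) := by
  have key : ∀ x ∈ Ωh, u x - f x = Δt * discHam h Ωh ν Φp Φm u x := by
    intro x hx; have := hu x hx; linarith
  set S := Ωh.sup' hne (fun x => |discHam h Ωh ν Φp Φm f x|) with hS
  constructor
  · apply le_antisymm
    · apply Finset.sup'_le
      intro x hx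
      have heq : |discHam h Ωh ν Φp Φm u x| = (1 / Δt) * |u x - f x| := by
        rw [key x hx, abs_mul, abs_of_pos hΔt]; field_simp
      rw [heq]
      exact mul_le_mul_of_nonneg_left
        (Finset.le_sup' (fun x => |u x - f x|) hx) (by positivity)
    · rw [one_div, inv_mul_le_iff₀ hΔt]
      apply Finset.sup'_le
      intro x hx
      rw [key x hx, abs_mul, abs_of_pos hΔt]
      exact mul_le_mul_of_nonneg_left
        (Finset.le_sup' (fun x => |discHam h Ωh ν Φp Φm u x|) hx) hΔt.le
  · rw [one_div, inv_mul_le_iff₀ hΔt]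
    apply Finset.sup'_le
    intro x hx
    -- max point
    obtain ⟨x₀, hx₀, hx₀max⟩ := Finset.exists_mem_eq_sup' hne (fun y => u y - f y)
    obtain ⟨x₁, hx₁, hx₁min⟩ := Finset.exists_mem_eq_inf' hne (fun y => u y - f y)
    have hx₀cl : x₀ ∈ closure Ω := ((hΩh x₀).mp hx₀).2
    have hx₁cl : x₁ ∈ closure Ω := ((hΩh x₁).mp hx₁).2
    have hub : u x₀ - f x₀ ≤ Δt * S := by
      have hmono : discHam h Ωh ν Φp Φm u x₀ ≤ discHam h Ωh ν Φp Φm f x₀ := by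
        apply discHam_mono_at h hh Ωh ν Φp Φm u f x₀
          (fun j => hΦp0 j x₀ hx₀cl) (fun j => hΦm0 j x₀ hx₀cl)
        intro y hy
        have h1 : u y - f y ≤ u x₀ - f x₀ := by
          exact hx₀max ▸ Finset.le_sup' (fun y => u y - f y) hy
        linarith
      have hSle : discHam h Ωh ν Φp Φm f x₀ ≤ S :=
        le_trans (le_abs_self _)
          (Finset.le_sup' (fun x => |discHam h Ωh ν Φp Φm f x|) hx₀)
      rw [key x₀ hx₀]
      exact mul_le_mul_of_nonneg_left (le_trans hmono hSle) hΔt.le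
    have hlb : -(Δt * S) ≤ u x₁ - f x₁ := by
      have hmono : discHam h Ωh ν Φp Φm f x₁ ≤ discHam h Ωh ν Φp Φm u x₁ := by
        apply discHam_mono_at h hh Ωh ν Φp Φm f u x₁
          (fun j => hΦp0 j x₁ hx₁cl) (fun j => hΦm0 j x₁ hx₁cl)
        intro y hy
        have h1 : u x₁ - f x₁ ≤ u y - f y := by
          exact hx₁min ▸ Finset.inf'_le (fun y => u y - f y) hy
        linarith
      have hSle : -S ≤ discHam h Ωh ν Φp Φm f x₁ :=
        le_trans (neg_le_neg
          (Finset.le_sup' (fun x => |discHam h Ωh ν Φp Φm f x|) hx₁))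
          (neg_abs_le _)
      rw [key x₁ hx₁, ← mul_neg]
      exact mul_le_mul_of_nonneg_left (le_trans hSle hmono) hΔt.le
    have h1 : u x - f x ≤ u x₀ - f x₀ := by
      exact hx₀max ▸ Finset.le_sup' (fun y => u y - f y) hx
    have h2 : u x₁ - f x₁ ≤ u x - f x := by
      exact hx₁min ▸ Finset.inf'_le (fun y => u y - f y) hx
    rw [abs_le]
    constructor <;> linarith
end
end

section
/- For every u^0 : Ω_h → ℝ there exists exactly one function u_h : Ω_h × [0,∞) → ℝ such that t ↦ u_h(x,t) is continuously differentiable on [0,∞) for each x ∈ Ω_h, u_h(x,0) = u^0(x) for all x ∈ Ω_h, and ∂_t u_h(x,t) = (H_h u_h(·,t))(x) for all x ∈ Ω_h and all t ≥ 0 (i.e. u_h is the unique global classical solution of the state-constrained discrete Hamilton–Jacobi equation with initial datum u^0). -/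
open scoped Classical BigOperators
open MeasureTheory

noncomputable section

/-- `u` is a global classical solution on `[0,∞)` of the state-constrained
discrete Hamilton–Jacobi equation `∂ₜ u = H_h u` on `Ω_h` with initial datum `u0`:
for every grid point, the time slice is continuously differentiable on `[0,∞)`
(the derivative `H_h u(·,t)` depends continuously on `t`) and the equation holds. -/
def solvesDHJ {N M : ℕ} (h : ℝ) (Ωh : Finset (Fin N → ℝ)) (ν : Fin M → Fin N → ℤ)
    (Φp Φm : Fin M → (Fin N → ℝ) → ℝ)
    (u0 : (Fin N → ℝ) → ℝ) (u : (Fin N → ℝ) → ℝ → ℝ) : Prop :=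
  (∀ x ∈ Ωh, u x 0 = u0 x) ∧
  (∀ x ∈ Ωh, ∀ t ∈ Set.Ici (0:ℝ),
    HasDerivWithinAt (fun s => u x s)
      (discHam h Ωh ν Φp Φm (fun y => u y t) x) (Set.Ici 0) t) ∧
  (∀ x ∈ Ωh,
    ContinuousOn (fun t => discHam h Ωh ν Φp Φm (fun y => u y t) x) (Set.Ici 0))


/-!
The Cole–Hopf substitution `w = exp (u / h)` turns `∂ₜ u = H_h u` into the linear system
`∂ₜ w = A w`, where `(A w)(x) = h⁻¹ Σⱼ Φⱼ^±(x) (w(x ± νⱼ h) - w(x))`, summed over the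
neighbours `x ± νⱼ h` that lie in `Ω_h`. The off-diagonal part of `A` is nonnegative, so
`A + c` preserves the nonnegative cone for large `c` and `exp (t A)` maps positive vectors to
positive vectors. Hence `u = h log (exp (t A) exp (u⁰ / h))` is a global solution, and
conversely `exp (v / h)` solves the linear system for every solution `v`, so uniqueness is
uniqueness for a Lipschitz ODE.
-/

open NormedSpace

section LinearFlow

variable {E : Type*} [NormedAddCommGroup E] [NormedSpace ℝ E] [CompleteSpace E]

theorem hasDerivAt_exp_smul_apply (A : E →L[ℝ] E) (w : E) (t : ℝ) :
    HasDerivAt (fun s : ℝ => exp (s • A) w) (A (exp (t • A) w)) t :=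
  (ContinuousLinearMap.apply ℝ E w).hasFDerivAt.comp_hasDerivAt t
    (hasDerivAt_exp_smul_const' A t)

theorem eq_exp_smul_apply_of_hasDerivWithinAt (A : E →L[ℝ] E) {f : ℝ → E}
    (hf : ∀ t ∈ Set.Ici (0 : ℝ), HasDerivWithinAt f (A (f t)) (Set.Ici 0) t)
    {t : ℝ} (ht : 0 ≤ t) :
    f t = exp (t • A) (f 0) := by
  refine ODE_solution_unique (v := fun _ => A) (K := ‖A‖₊) (fun _ => A.lipschitz)
    (fun s hs => (hf s hs.1).continuousWithinAt.mono Set.Icc_subset_Ici_self)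
    (fun s hs => (hf s hs.1).mono (Set.Ici_subset_Ici.2 hs.1))
    (fun s _ => (hasDerivAt_exp_smul_apply A (f 0) s).continuousAt.continuousWithinAt)
    (fun s _ => (hasDerivAt_exp_smul_apply A (f 0) s).hasDerivWithinAt) ?_ ⟨ht, le_rfl⟩
  simp

theorem exp_smul_add_smul_one (A : E →L[ℝ] E) (c t : ℝ) :
    exp (t • (A + c • 1)) = Real.exp (t * c) • exp (t • A) := by
  have hcomm : Commute (t • A) ((t * c) • (1 : E →L[ℝ] E)) :=
    (Commute.one_right _).smul_right _
  have hball : ∀ x : E →L[ℝ] E, x ∈ Metric.eball 0 (expSeries ℝ (E →L[ℝ] E)).radius := by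
    simp [expSeries_radius_eq_top]
  rw [smul_add, smul_smul, add_comm, exp_add_of_commute_of_mem_ball hcomm.symm (hball _) (hball _),
    ← Algebra.algebraMap_eq_smul_one, ← algebraMap_exp_comm, ← Real.exp_eq_exp_ℝ,
    ← Algebra.smul_def]

variable [PartialOrder E] [IsOrderedAddMonoid E] [OrderClosedTopology E] [PosSMulMono ℝ E]

theorem le_exp_smul_apply {B : E →L[ℝ] E} (hB : ∀ w, 0 ≤ w → 0 ≤ B w) {w : E} (hw : 0 ≤ w)
    {t : ℝ} (ht : 0 ≤ t) : w ≤ exp (t • B) w := by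
  have hpow : ∀ k : ℕ, 0 ≤ (B ^ k) w := by
    intro k
    induction k with
    | zero => simpa using hw
    | succ k ih => rw [pow_succ']; exact hB _ ih
  have hsum := (exp_series_hasSum_exp' (𝕂 := ℝ) (t • B)).mapL (ContinuousLinearMap.apply ℝ E w)
  simpa using le_hasSum hsum 0 fun k _ => by
    simpa [smul_pow, smul_smul] using smul_nonneg (by positivity) (hpow k)

end LinearFlow

theorem exp_smul_apply_pos {ι : Type*} [Fintype ι] {A : (ι → ℝ) →L[ℝ] (ι → ℝ)} {c : ℝ}
    (hA : ∀ w, 0 ≤ w → 0 ≤ A w + c • w) {w : ι → ℝ} (hw : ∀ i, 0 < w i)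
    {t : ℝ} (ht : 0 ≤ t) (i : ι) : 0 < exp (t • A) w i := by
  have hle : w ≤ exp (t • (A + c • 1)) w :=
    le_exp_smul_apply (fun v hv => by simpa using hA v hv) (fun i => (hw i).le) ht
  rw [exp_smul_add_smul_one] at hle
  exact pos_of_mul_pos_right ((hw i).trans_le (hle i)) (Real.exp_pos _).le

section ColeHopf

variable {N M : ℕ}

def gridLift (Ωh : Finset (Fin N → ℝ)) (w : Ωh → ℝ) (y : Fin N → ℝ) : ℝ :=
  if hy : y ∈ Ωh then w ⟨y, hy⟩ else 0

def gridJump (Ωh : Finset (Fin N → ℝ)) (w : Ωh → ℝ) (x : Ωh) (y : Fin N → ℝ) : ℝ :=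
  if hy : y ∈ Ωh then w ⟨y, hy⟩ - w x else 0

@[simp]
theorem gridLift_coe {Ωh : Finset (Fin N → ℝ)} (w : Ωh → ℝ) (x : Ωh) : gridLift Ωh w x = w x :=
  dif_pos x.2

theorem gridJump_add {Ωh : Finset (Fin N → ℝ)} (w v : Ωh → ℝ) (x : Ωh) (y : Fin N → ℝ) :
    gridJump Ωh (w + v) x y = gridJump Ωh w x y + gridJump Ωh v x y := by
  unfold gridJump
  split_ifs
  · rw [Pi.add_apply, Pi.add_apply]; ring
  · rw [add_zero]

theorem gridJump_smul {Ωh : Finset (Fin N → ℝ)} (c : ℝ) (w : Ωh → ℝ) (x : Ωh) (y : Fin N → ℝ) :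
    gridJump Ωh (c • w) x y = c * gridJump Ωh w x y := by
  unfold gridJump
  split_ifs
  · rw [Pi.smul_apply, Pi.smul_apply, smul_eq_mul, smul_eq_mul, mul_sub]
  · rw [mul_zero]

theorem neg_le_gridJump {Ωh : Finset (Fin N → ℝ)} {w : Ωh → ℝ} (hw : 0 ≤ w) (x : Ωh)
    (y : Fin N → ℝ) : -w x ≤ gridJump Ωh w x y := by
  have hw' : ∀ z, 0 ≤ w z := hw
  unfold gridJump
  split_ifs with hy
  · linarith [hw' ⟨y, hy⟩]
  · linarith [hw' x]

def coleHopfGenerator (h : ℝ) (Ωh : Finset (Fin N → ℝ)) (ν : Fin M → Fin N → ℤ)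
    (Φp Φm : Fin M → (Fin N → ℝ) → ℝ) : (Ωh → ℝ) →L[ℝ] (Ωh → ℝ) :=
  LinearMap.toContinuousLinearMap
    { toFun := fun w x => h⁻¹ * ∑ j, (Φp j x * gridJump Ωh w x (shiftPt h x (ν j))
          + Φm j x * gridJump Ωh w x (shiftPt h x (-(ν j))))
      map_add' := fun w v => by
        ext x
        simp only [gridJump_add, Pi.add_apply, ← mul_add, ← Finset.sum_add_distrib]
        congr 1
        exact Finset.sum_congr rfl fun j _ => by ring
      map_smul' := fun c w => by
        ext x
        simp only [gridJump_smul, Pi.smul_apply, smul_eq_mul, RingHom.id_apply, Finset.mul_sum]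
        exact Finset.sum_congr rfl fun j _ => by ring }

variable {h : ℝ} {Ωh : Finset (Fin N → ℝ)} {ν : Fin M → Fin N → ℤ}
  {Φp Φm : Fin M → (Fin N → ℝ) → ℝ}

theorem coleHopfGenerator_apply (w : Ωh → ℝ) (x : Ωh) :
    coleHopfGenerator h Ωh ν Φp Φm w x = h⁻¹ * ∑ j, (Φp j x * gridJump Ωh w x (shiftPt h x (ν j))
      + Φm j x * gridJump Ωh w x (shiftPt h x (-(ν j)))) :=
  rfl

theorem exists_coleHopfGenerator_add_smul_nonneg (hh : 0 < h)
    (hΦp : ∀ j, ∀ x ∈ Ωh, 0 ≤ Φp j x) (hΦm : ∀ j, ∀ x ∈ Ωh, 0 ≤ Φm j x) :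
    ∃ c : ℝ, ∀ w, 0 ≤ w → 0 ≤ coleHopfGenerator h Ωh ν Φp Φm w + c • w := by
  set rate : Ωh → ℝ := fun x => h⁻¹ * ∑ j, (Φp j x + Φm j x)
  refine ⟨∑ x, rate x, fun w hw x => ?_⟩
  have hrate : ∀ x, 0 ≤ rate x := fun x =>
    mul_nonneg (inv_nonneg.2 hh.le)
      (Finset.sum_nonneg fun j _ => add_nonneg (hΦp j x x.2) (hΦm j x x.2))
  have hlocal : -(rate x * w x) ≤ coleHopfGenerator h Ωh ν Φp Φm w x := by
    calc -(rate x * w x) = h⁻¹ * ∑ j, (Φp j x * -w x + Φm j x * -w x) := by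
          simp only [rate, Finset.sum_mul, mul_assoc, ← mul_neg, ← Finset.sum_neg_distrib]
          congr 1
          exact Finset.sum_congr rfl fun j _ => by ring
      _ ≤ _ := by
          rw [coleHopfGenerator_apply]
          gcongr with j
          · exact hΦp j x x.2
          · exact neg_le_gridJump hw x _
          · exact hΦm j x x.2
          · exact neg_le_gridJump hw x _
  have hsum : rate x * w x ≤ (∑ y, rate y) * w x :=
    mul_le_mul_of_nonneg_right (Finset.single_le_sum (fun y _ => hrate y) (Finset.mem_univ x))
      (hw x)
  show 0 ≤ coleHopfGenerator h Ωh ν Φp Φm w x + (∑ y, rate y) * w x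
  linarith

theorem exp_div_mul_ite_eq_gridJump (u : (Fin N → ℝ) → ℝ) (x : Ωh)
    (y : Fin N → ℝ) (φ : ℝ) :
    Real.exp (u x / h) * (if y ∈ Ωh then φ * (Real.exp ((u y - u x) / h) - 1) else 0)
      = φ * gridJump Ωh (fun z => Real.exp (u z / h)) x y := by
  unfold gridJump
  split_ifs
  · rw [sub_div, Real.exp_sub]
    field_simp
  · simp

theorem exp_div_mul_discHam (hh : h ≠ 0) (u : (Fin N → ℝ) → ℝ) (x : Ωh) :
    Real.exp (u x / h) * discHam h Ωh ν Φp Φm u x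
      = h * coleHopfGenerator h Ωh ν Φp Φm (fun y => Real.exp (u y / h)) x := by
  rw [coleHopfGenerator_apply, ← mul_assoc, mul_inv_cancel₀ hh, one_mul, discHam, Finset.mul_sum]
  exact Finset.sum_congr rfl fun j _ => by
    rw [mul_add, exp_div_mul_ite_eq_gridJump, exp_div_mul_ite_eq_gridJump]

theorem solvesDHJ_log_gridLift (hh : 0 < h) {u0 : (Fin N → ℝ) → ℝ} {W : ℝ → Ωh → ℝ}
    (hW : ∀ t, HasDerivAt W (coleHopfGenerator h Ωh ν Φp Φm (W t)) t)
    (hWpos : ∀ t ≥ 0, ∀ x, 0 < W t x) (hW0 : W 0 = fun x : Ωh => Real.exp (u0 x / h)) :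
    solvesDHJ h Ωh ν Φp Φm u0 (fun x t => h * Real.log (gridLift Ωh (W t) x)) := by
  set A := coleHopfGenerator h Ωh ν Φp Φm
  have hHam : ∀ t ≥ 0, ∀ x : Ωh,
      discHam h Ωh ν Φp Φm (fun y => h * Real.log (gridLift Ωh (W t) y)) x
        = h * (A (W t) x / W t x) := by
    intro t ht x
    have hexp : (fun y : Ωh => Real.exp (h * Real.log (gridLift Ωh (W t) y) / h)) = W t :=
      funext fun y => by
        rw [gridLift_coe, mul_div_cancel_left₀ _ hh.ne', Real.exp_log (hWpos t ht y)]
    have hmul := exp_div_mul_discHam (ν := ν) (Φp := Φp) (Φm := Φm) hh.ne'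
      (fun y => h * Real.log (gridLift Ωh (W t) y)) x
    rw [congrFun hexp x, hexp] at hmul
    rw [mul_div_assoc', eq_div_iff (hWpos t ht x).ne', mul_comm, hmul]
  have hWc : Continuous W := continuous_iff_continuousAt.2 fun t => (hW t).continuousAt
  refine ⟨fun x hx => ?_, fun x hx t ht => ?_, fun x hx => ?_⟩
  · lift x to Ωh using hx
    dsimp only
    rw [gridLift_coe, hW0, Real.log_exp, mul_div_cancel₀ _ hh.ne']
  · lift x to Ωh using hx
    simp only [gridLift_coe]
    rw [hHam t ht x]
    exact (((hasDerivAt_pi.1 (hW t) x).log (hWpos t ht x).ne').const_mul h).hasDerivWithinAt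
  · lift x to Ωh using hx
    refine ContinuousOn.congr ?_ fun t ht => hHam t ht x
    exact continuousOn_const.mul ((by fun_prop : Continuous fun t => A (W t) x).continuousOn.div
      (by fun_prop : Continuous fun t => W t x).continuousOn fun t ht => (hWpos t ht x).ne')

theorem exp_div_eq_exp_smul_apply_of_solvesDHJ (hh : h ≠ 0) {u0 : (Fin N → ℝ) → ℝ}
    {v : (Fin N → ℝ) → ℝ → ℝ} (hv : solvesDHJ h Ωh ν Φp Φm u0 v) {t : ℝ} (ht : 0 ≤ t)
    (x : Ωh) :
    Real.exp (v x t / h)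
      = exp (t • coleHopfGenerator h Ωh ν Φp Φm) (fun y => Real.exp (u0 y / h)) x := by
  obtain ⟨hinit, hderiv, -⟩ := hv
  have hflow : ∀ s ∈ Set.Ici (0 : ℝ), HasDerivWithinAt (fun s (y : Ωh) => Real.exp (v y s / h))
      (coleHopfGenerator h Ωh ν Φp Φm fun y => Real.exp (v y s / h)) (Set.Ici 0) s := by
    intro s hs
    refine hasDerivWithinAt_pi.2 fun y => ?_
    refine ((hderiv y y.2 s hs).div_const h).exp.congr_deriv ?_
    rw [mul_div_assoc', div_eq_iff hh, exp_div_mul_discHam hh (fun y => v y s) y, mul_comm]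
  simpa [hinit] using congrFun (eq_exp_smul_apply_of_hasDerivWithinAt _ hflow ht) x

end ColeHopf

theorem discrete_HJE_wellposed_general
    {N M : ℕ}
    (h : ℝ) (hh : 0 < h)
    (Ω : Set (Fin N → ℝ))
    (ν : Fin M → Fin N → ℤ)
    (Φp Φm : Fin M → (Fin N → ℝ) → ℝ)
    (hΦp0 : ∀ j, ∀ x ∈ closure Ω, 0 ≤ Φp j x)
    (hΦm0 : ∀ j, ∀ x ∈ closure Ω, 0 ≤ Φm j x)
    (Ωh : Finset (Fin N → ℝ))
    (hΩh : ∀ x : Fin N → ℝ,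
      x ∈ Ωh ↔ ((∃ i : Fin N → ℕ, ∀ k, x k = (i k : ℝ) * h) ∧ x ∈ closure Ω))
    (u0 : (Fin N → ℝ) → ℝ) :
    ∃ u : (Fin N → ℝ) → ℝ → ℝ,
      solvesDHJ h Ωh ν Φp Φm u0 u ∧
      ∀ v : (Fin N → ℝ) → ℝ → ℝ, solvesDHJ h Ωh ν Φp Φm u0 v →
        ∀ x ∈ Ωh, ∀ t ∈ Set.Ici (0:ℝ), u x t = v x t := by
  have hΦp : ∀ j, ∀ x ∈ Ωh, 0 ≤ Φp j x := fun j x hx => hΦp0 j x ((hΩh x).1 hx).2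
  have hΦm : ∀ j, ∀ x ∈ Ωh, 0 ≤ Φm j x := fun j x hx => hΦm0 j x ((hΩh x).1 hx).2
  obtain ⟨c, hc⟩ := exists_coleHopfGenerator_add_smul_nonneg (ν := ν) hh hΦp hΦm
  refine ⟨_, solvesDHJ_log_gridLift hh (hasDerivAt_exp_smul_apply _ _)
    (fun t ht => exp_smul_apply_pos hc (fun y => Real.exp_pos (u0 y / h)) ht) (by simp), ?_⟩
  intro v hv x hx t ht
  lift x to Ωh using hx
  rw [gridLift_coe, ← exp_div_eq_exp_smul_apply_of_solvesDHJ hh.ne' hv ht, Real.log_exp,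
    mul_div_cancel₀ _ hh.ne']

/-- **Well-posedness of the discrete HJE**: for every initial datum there exists a
global classical solution of the state-constrained discrete Hamilton–Jacobi
equation, and it is unique on `Ω_h × [0,∞)`. -/
theorem discrete_HJE_wellposed
    {N M : ℕ} (hN : 0 < N) (hM : 0 < M)
    (h : ℝ) (hh : 0 < h)
    (Ω : Set (Fin N → ℝ)) (hΩo : IsOpen Ω) (hΩne : Ω.Nonempty)
    (hΩbd : Bornology.IsBounded Ω)
    (hΩpos : closure Ω ⊆ {x : Fin N → ℝ | ∀ k, 0 < x k})
    (ν : Fin M → Fin N → ℤ)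
    (Φp Φm : Fin M → (Fin N → ℝ) → ℝ)
    (hΦpc : ∀ j, ContinuousOn (Φp j) (closure Ω))
    (hΦmc : ∀ j, ContinuousOn (Φm j) (closure Ω))
    (hΦp0 : ∀ j, ∀ x ∈ closure Ω, 0 ≤ Φp j x)
    (hΦm0 : ∀ j, ∀ x ∈ closure Ω, 0 ≤ Φm j x)
    (Ωh : Finset (Fin N → ℝ))
    (hΩh : ∀ x : Fin N → ℝ,
      x ∈ Ωh ↔ ((∃ i : Fin N → ℕ, ∀ k, x k = (i k : ℝ) * h) ∧ x ∈ closure Ω))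
    (hne : Ωh.Nonempty)
    (u0 : (Fin N → ℝ) → ℝ) :
    ∃ u : (Fin N → ℝ) → ℝ → ℝ,
      solvesDHJ h Ωh ν Φp Φm u0 u ∧
      ∀ v : (Fin N → ℝ) → ℝ → ℝ, solvesDHJ h Ωh ν Φp Φm u0 v →
        ∀ x ∈ Ωh, ∀ t ∈ Set.Ici (0:ℝ), u x t = v x t :=
  discrete_HJE_wellposed_general h hh Ω ν Φp Φm hΦp0 hΦm0 Ωh hΩh u0
end
end

section
/- Let u_h and ũ_h solve the discrete Hamilton–Jacobi equation with initial data u^0 and ũ^0 respectively. Then the flow is a contraction in the sup norm: for every t ≥ 0, max_{x ∈ Ω_h} |u_h(x,t) − ũ_h(x,t)| ≤ max_{x ∈ Ω_h} |u^0(x) − ũ^0(x)|. -/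
open scoped Classical BigOperators
open MeasureTheory

noncomputable section

/-- Core analytic lemma: if each `w x` has a right derivative `d x t` on `[0,∞)`, and at every
time the derivative at any maximizer is nonpositive, then the max is nonincreasing. -/
lemma max_nonincreasing {α : Type*} (Ωh : Finset α) (hne : Ωh.Nonempty)
    (w d : α → ℝ → ℝ)
    (hderiv : ∀ x ∈ Ωh, ∀ t ∈ Set.Ici (0:ℝ),
      HasDerivWithinAt (w x) (d x t) (Set.Ici 0) t)
    (hmax : ∀ t ∈ Set.Ici (0:ℝ), ∀ x ∈ Ωh, (∀ y ∈ Ωh, w y t ≤ w x t) → d x t ≤ 0) :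
    ∀ t ∈ Set.Ici (0:ℝ),
      Ωh.sup' hne (fun x => w x t) ≤ Ωh.sup' hne (fun x => w x 0) := by
  intro T hT
  set m : ℝ → ℝ := fun t => Ωh.sup' hne (fun x => w x t) with hm
  have hwc : ∀ x ∈ Ωh, ContinuousOn (w x) (Set.Ici 0) := fun x hx t ht =>
    (hderiv x hx t ht).continuousWithinAt
  have hmc : ContinuousOn m (Set.Icc 0 T) := by
    apply (ContinuousOn.finset_sup'_apply hne (f := w) (t := Set.Ici (0:ℝ))
      (fun x hx => hwc x hx)).mono
    exact Set.Icc_subset_Ici_self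
  have key := image_le_of_liminf_slope_right_le_deriv_boundary (f := m)
    (a := 0) (b := T) hmc (B := fun _ => m 0) (B' := fun _ => 0) le_rfl
    continuousOn_const (fun x _ => (hasDerivWithinAt_const _ _ _))
    ?_ (Set.mem_Icc.2 ⟨hT, le_rfl⟩)
  · exact key
  · -- Dini condition
    intro t ht r hr
    have ht0 : (0:ℝ) ≤ t := ht.1
    -- maximizer
    obtain ⟨x₀, hx₀, hx₀eq⟩ := Finset.exists_mem_eq_sup' hne (fun x => w x t)
    have hsub : Set.Ioi t ⊆ Set.Ici (0:ℝ) \ {t} := fun z hz =>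
      ⟨le_trans ht0 (le_of_lt hz), ne_of_gt hz⟩
    have hle : (nhdsWithin t (Set.Ioi t)) ≤ nhdsWithin t (Set.Ici 0 \ {t}) :=
      nhdsWithin_mono t hsub
    have claim : ∀ x ∈ Ωh, ∀ᶠ z in nhdsWithin t (Set.Ioi t),
        w x z < m t + r * (z - t) := by
      intro x hx
      by_cases hxm : w x t = m t
      · -- maximizer: derivative ≤ 0 < r
        have hd0 : d x t ≤ 0 := by
          apply hmax t ht0 x hx
          intro y hy
          rw [hxm, hm]
          exact Finset.le_sup' (fun x => w x t) hy
        have hslope : Filter.Tendsto (slope (w x) t)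
            (nhdsWithin t (Set.Ici 0 \ {t})) (nhds (d x t)) :=
          hasDerivWithinAt_iff_tendsto_slope.1 (hderiv x hx t ht0)
        have : ∀ᶠ z in nhdsWithin t (Set.Ioi t), slope (w x) t z < r :=
          (hslope.mono_left hle).eventually_lt_const (lt_of_le_of_lt hd0 hr)
        filter_upwards [this, self_mem_nhdsWithin] with z hz hz'
        have hzt : (0:ℝ) < z - t := sub_pos.2 hz'
        rw [slope_def_field] at hz
        have h2 : w x z - w x t < r * (z - t) := (div_lt_iff₀ hzt).1 hz
        linarith [hxm.le, hxm.ge]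
      · -- non-maximizer
        have hlt : w x t < m t := by
          have : w x t ≤ m t := Finset.le_sup' (fun x => w x t) hx
          exact lt_of_le_of_ne this hxm
        have hcont : Filter.Tendsto (w x) (nhdsWithin t (Set.Ioi t)) (nhds (w x t)) :=
          ((hwc x hx t ht0).mono_left (nhdsWithin_mono t (fun z hz => le_trans ht0 hz.le)))
        have : ∀ᶠ z in nhdsWithin t (Set.Ioi t), w x z < m t :=
          hcont.eventually_lt_const hlt
        filter_upwards [this, self_mem_nhdsWithin] with z hz hz'
        have : 0 < r * (z - t) := mul_pos hr (sub_pos.2 hz')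
        linarith
    have hall : ∀ᶠ z in nhdsWithin t (Set.Ioi t),
        ∀ x ∈ Ωh, w x z < m t + r * (z - t) := by
      rw [Filter.eventually_all_finset]
      exact claim
    apply Filter.Eventually.frequently
    filter_upwards [hall, self_mem_nhdsWithin] with z hz hz'
    have hzt : (0:ℝ) < z - t := sub_pos.2 hz'
    have hmz : m z < m t + r * (z - t) := by
      rw [hm]
      exact (Finset.sup'_lt_iff hne).2 hz
    rw [slope_def_field, div_lt_iff₀ hzt]
    linarith



/-- Dissipativity of the discrete Hamiltonian at a maximizer of `uu - vv`. -/
lemma discHam_dissip {N M : ℕ} (h : ℝ) (hh : 0 < h) (Ωh : Finset (Fin N → ℝ))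
    (ν : Fin M → Fin N → ℤ) (Φp Φm : Fin M → (Fin N → ℝ) → ℝ)
    (x : Fin N → ℝ) (hΦp : ∀ j, 0 ≤ Φp j x) (hΦm : ∀ j, 0 ≤ Φm j x)
    (uu vv : (Fin N → ℝ) → ℝ)
    (hmax : ∀ y ∈ Ωh, uu y - vv y ≤ uu x - vv x) :
    discHam h Ωh ν Φp Φm uu x ≤ discHam h Ωh ν Φp Φm vv x := by
  unfold discHam
  apply Finset.sum_le_sum
  intro j _
  have key : ∀ (z : Fin N → ℝ), z ∈ Ωh → ∀ (c : ℝ), 0 ≤ c →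
      c * (Real.exp ((uu z - uu x) / h) - 1) ≤ c * (Real.exp ((vv z - vv x) / h) - 1) := by
    intro z hz c hc
    apply mul_le_mul_of_nonneg_left _ hc
    have h1 : uu z - uu x ≤ vv z - vv x := by have := hmax z hz; linarith
    have h2 : (uu z - uu x) / h ≤ (vv z - vv x) / h := by gcongr
    exact sub_le_sub_right (Real.exp_le_exp.2 h2) 1
  apply add_le_add
  · split_ifs with hmem
    · exact key _ hmem _ (hΦp j)
    · exact le_rfl
  · split_ifs with hmem
    · exact key _ hmem _ (hΦm j)
    · exact le_rfl

/-- **Contraction in the sup norm** for the discrete HJE flow. -/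
theorem discrete_HJE_contraction
    {N M : ℕ} (hN : 0 < N) (hM : 0 < M)
    (h : ℝ) (hh : 0 < h)
    (Ω : Set (Fin N → ℝ)) (hΩo : IsOpen Ω) (hΩne : Ω.Nonempty)
    (hΩbd : Bornology.IsBounded Ω)
    (hΩpos : closure Ω ⊆ {x : Fin N → ℝ | ∀ k, 0 < x k})
    (ν : Fin M → Fin N → ℤ)
    (Φp Φm : Fin M → (Fin N → ℝ) → ℝ)
    (hΦpc : ∀ j, ContinuousOn (Φp j) (closure Ω))
    (hΦmc : ∀ j, ContinuousOn (Φm j) (closure Ω))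
    (hΦp0 : ∀ j, ∀ x ∈ closure Ω, 0 ≤ Φp j x)
    (hΦm0 : ∀ j, ∀ x ∈ closure Ω, 0 ≤ Φm j x)
    (Ωh : Finset (Fin N → ℝ))
    (hΩh : ∀ x : Fin N → ℝ,
      x ∈ Ωh ↔ ((∃ i : Fin N → ℕ, ∀ k, x k = (i k : ℝ) * h) ∧ x ∈ closure Ω))
    (hne : Ωh.Nonempty)
    (u0 v0 : (Fin N → ℝ) → ℝ) (u v : (Fin N → ℝ) → ℝ → ℝ)
    (hu : solvesDHJ h Ωh ν Φp Φm u0 u)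
    (hv : solvesDHJ h Ωh ν Φp Φm v0 v) :
    ∀ t ∈ Set.Ici (0:ℝ),
      Ωh.sup' hne (fun x => |u x t - v x t|) ≤ Ωh.sup' hne (fun x => |u0 x - v0 x|) := by
  obtain ⟨hu0, hud, -⟩ := hu
  obtain ⟨hv0, hvd, -⟩ := hv
  have hcl : ∀ x ∈ Ωh, x ∈ closure Ω := fun x hx => ((hΩh x).1 hx).2
  have mono1 := max_nonincreasing Ωh hne (fun x t => u x t - v x t)
    (fun x t => discHam h Ωh ν Φp Φm (fun y => u y t) x
      - discHam h Ωh ν Φp Φm (fun y => v y t) x)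
    (fun x hx t ht => (hud x hx t ht).sub (hvd x hx t ht))
    (fun t ht x hx hmx => sub_nonpos.2 (discHam_dissip h hh Ωh ν Φp Φm x
      (fun j => hΦp0 j x (hcl x hx)) (fun j => hΦm0 j x (hcl x hx)) _ _ hmx))
  have mono2 := max_nonincreasing Ωh hne (fun x t => v x t - u x t)
    (fun x t => discHam h Ωh ν Φp Φm (fun y => v y t) x
      - discHam h Ωh ν Φp Φm (fun y => u y t) x)
    (fun x hx t ht => (hvd x hx t ht).sub (hud x hx t ht))
    (fun t ht x hx hmx => sub_nonpos.2 (discHam_dissip h hh Ωh ν Φp Φm x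
      (fun j => hΦp0 j x (hcl x hx)) (fun j => hΦm0 j x (hcl x hx)) _ _ hmx))
  intro t ht
  have hR1 : Ωh.sup' hne (fun x => u x 0 - v x 0) ≤ Ωh.sup' hne (fun x => |u0 x - v0 x|) := by
    apply Finset.sup'_le
    intro y hy
    rw [hu0 y hy, hv0 y hy]
    exact (le_abs_self _).trans (Finset.le_sup' (fun x => |u0 x - v0 x|) hy)
  have hR2 : Ωh.sup' hne (fun x => v x 0 - u x 0) ≤ Ωh.sup' hne (fun x => |u0 x - v0 x|) := by
    apply Finset.sup'_le
    intro y hy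
    rw [hu0 y hy, hv0 y hy]
    have : v0 y - u0 y ≤ |u0 y - v0 y| := by
      rw [abs_sub_comm]; exact le_abs_self _
    exact this.trans (Finset.le_sup' (fun x => |u0 x - v0 x|) hy)
  apply Finset.sup'_le
  intro x hx
  rw [abs_sub_le_iff]
  constructor
  · exact (Finset.le_sup' (fun y => u y t - v y t) hx).trans ((mono1 t ht).trans hR1)
  · exact (Finset.le_sup' (fun y => v y t - u y t) hx).trans ((mono2 t ht).trans hR2)
end
end

section
/- Let u_h solve the discrete Hamilton–Jacobi equation with initial datum u^0. Then for every x ∈ Ω_h and every t ≥ 0, min_{y ∈ Ω_h} u^0(y) ≤ u_h(x,t) ≤ max_{y ∈ Ω_h} u^0(y). -/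
open scoped Classical BigOperators
open MeasureTheory

noncomputable section

section AuxLemmas
open Filter Set
open scoped Topology

/-- Maximum principle for a finite system of ODEs: if at any time the derivative is
nonpositive at every running maximizer, then the pointwise sup is dominated by its
initial value. -/
lemma finset_sup'_decay {α : Type*} (s : Finset α) (hne : s.Nonempty)
    (f g : α → ℝ → ℝ)
    (hderiv : ∀ x ∈ s, ∀ t ∈ Set.Ici (0:ℝ), HasDerivWithinAt (f x) (g x t) (Set.Ici 0) t)
    (hmax : ∀ t ∈ Set.Ici (0:ℝ), ∀ x ∈ s, (∀ y ∈ s, f y t ≤ f x t) → g x t ≤ 0) :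
    ∀ t ∈ Set.Ici (0:ℝ), s.sup' hne (fun x => f x t) ≤ s.sup' hne (fun x => f x 0) := by
  intro T hT
  set S : ℝ → ℝ := fun t => s.sup' hne (fun x => f x t) with hSdef
  have hcont : ∀ x ∈ s, ContinuousOn (f x) (Set.Ici 0) := fun x hx t ht =>
    (hderiv x hx t ht).continuousWithinAt
  have hScont : ContinuousOn S (Set.Ici 0) :=
    ContinuousOn.finset_sup'_apply hne (fun x hx => hcont x hx)
  have key : ∀ z ∈ Set.Icc (0:ℝ) T, S z ≤ S 0 := by
    apply image_le_of_liminf_slope_right_le_deriv_boundary (B := fun _ => S 0) (B' := fun _ => 0)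
      (hScont.mono Set.Icc_subset_Ici_self) le_rfl continuousOn_const
      (fun x _ => hasDerivWithinAt_const _ _ _)
    intro t ht r hr
    by_contra hcon
    rw [Filter.not_frequently] at hcon
    have ht0 : (0:ℝ) ≤ t := ht.1
    have hIoi : Set.Ioi t ⊆ Set.Ici (0:ℝ) := fun z hz => le_of_lt (lt_of_le_of_lt ht0 hz)
    have hgt : ∀ᶠ z in 𝓝[>] t, t < z := self_mem_nhdsWithin
    have hev : ∀ᶠ z in 𝓝[>] t, ∃ x ∈ s, S t + r * (z - t) ≤ f x z := by
      filter_upwards [hcon, hgt] with z hz hz'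
      rw [not_lt] at hz
      obtain ⟨x, hx, hxe⟩ := Finset.exists_mem_eq_sup' hne (fun x => f x z)
      refine ⟨x, hx, ?_⟩
      rw [slope_def_field, le_div_iff₀ (sub_pos.2 hz')] at hz
      have : S z = f x z := hxe
      linarith
    have hpig : ∃ x ∈ s, ∃ᶠ z in 𝓝[>] t, S t + r * (z - t) ≤ f x z := by
      by_contra hc
      push_neg at hc
      have hall : ∀ᶠ z in 𝓝[>] t, ∀ x ∈ s, ¬ (S t + r * (z - t) ≤ f x z) :=
        Filter.eventually_all_finset s |>.mpr fun x hx =>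
          (Filter.not_frequently.mp (by simpa using hc x hx))
      obtain ⟨z, h1, h2⟩ := (hall.and hev).exists
      obtain ⟨x, hx, hle⟩ := h2
      exact h1 x hx hle
    obtain ⟨x, hx, hfreq⟩ := hpig
    set l : Filter ℝ := 𝓝[>] t ⊓ Filter.principal {z | S t + r * (z - t) ≤ f x z} with hl
    haveI : l.NeBot := Filter.frequently_iff_neBot.mp hfreq
    have hll : l ≤ 𝓝[>] t := inf_le_left
    have hmem : ∀ᶠ z in l, S t + r * (z - t) ≤ f x z :=
      Filter.eventually_inf_principal.mpr (Filter.Eventually.of_forall fun z h => h)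
    have hlid : Filter.Tendsto id l (𝓝 t) :=
      (tendsto_id.mono_left (hll.trans nhdsWithin_le_nhds))
    have h2 : Filter.Tendsto (fun z => S t + r * (z - t)) l (𝓝 (S t)) := by
      have hz : Filter.Tendsto (fun z : ℝ => S t + r * (z - t)) (𝓝 t)
          (𝓝 (S t + r * (t - t))) :=
        Filter.Tendsto.const_add _ ((tendsto_id.sub_const t).const_mul r)
      have := hz.comp hlid
      simpa [Function.comp] using this
    have h1 : Filter.Tendsto (f x) l (𝓝 (f x t)) :=
      (hcont x hx t ht0).mono_left (hll.trans (nhdsWithin_mono t hIoi))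
    have hfxt : S t ≤ f x t := le_of_tendsto_of_tendsto h2 h1 hmem
    have hfx : f x t = S t := le_antisymm (Finset.le_sup' (fun x => f x t) hx) hfxt
    have hg : g x t ≤ 0 :=
      hmax t ht0 x hx fun y hy => (Finset.le_sup' (fun x => f x t) hy).trans hfxt
    have hslope : Filter.Tendsto (slope (f x) t) l (𝓝 (g x t)) := by
      have := hasDerivWithinAt_iff_tendsto_slope.mp (hderiv x hx t ht0)
      exact this.mono_left (hll.trans (nhdsWithin_mono t fun z hz =>
        ⟨hIoi hz, ne_of_gt hz⟩))
    have hsl : ∀ᶠ z in l, r ≤ slope (f x) t z := by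
      filter_upwards [hmem, hgt.filter_mono hll] with z hz hz'
      rw [slope_def_field, le_div_iff₀ (sub_pos.2 hz')]
      linarith
    have : r ≤ g x t := ge_of_tendsto hslope hsl
    linarith
  exact key T ⟨hT, le_rfl⟩

lemma finset_sup'_neg_eq {α : Type*} (s : Finset α) (hne : s.Nonempty) (f : α → ℝ) :
    s.sup' hne (fun x => -f x) = - s.inf' hne f := by
  apply le_antisymm
  · exact Finset.sup'_le _ _ fun x hx => neg_le_neg (Finset.inf'_le f hx)
  · obtain ⟨x, hx, he⟩ := Finset.exists_mem_eq_inf' hne f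
    rw [he]
    exact Finset.le_sup' (fun x => -f x) hx

end AuxLemmas

section MainProof

open Filter Set
open scoped Topology

/-- **Contraction/comparison with the initial datum**: the solution of the
discrete HJE stays between the min and the max of the initial datum on `Ω_h`. -/
theorem discrete_HJE_min_max_bound
    {N M : ℕ} (hN : 0 < N) (hM : 0 < M)
    (h : ℝ) (hh : 0 < h)
    (Ω : Set (Fin N → ℝ)) (hΩo : IsOpen Ω) (hΩne : Ω.Nonempty)
    (hΩbd : Bornology.IsBounded Ω)
    (hΩpos : closure Ω ⊆ {x : Fin N → ℝ | ∀ k, 0 < x k})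
    (ν : Fin M → Fin N → ℤ)
    (Φp Φm : Fin M → (Fin N → ℝ) → ℝ)
    (hΦpc : ∀ j, ContinuousOn (Φp j) (closure Ω))
    (hΦmc : ∀ j, ContinuousOn (Φm j) (closure Ω))
    (hΦp0 : ∀ j, ∀ x ∈ closure Ω, 0 ≤ Φp j x)
    (hΦm0 : ∀ j, ∀ x ∈ closure Ω, 0 ≤ Φm j x)
    (Ωh : Finset (Fin N → ℝ))
    (hΩh : ∀ x : Fin N → ℝ,
      x ∈ Ωh ↔ ((∃ i : Fin N → ℕ, ∀ k, x k = (i k : ℝ) * h) ∧ x ∈ closure Ω))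
    (hne : Ωh.Nonempty)
    (u0 : (Fin N → ℝ) → ℝ) (u : (Fin N → ℝ) → ℝ → ℝ)
    (hu : solvesDHJ h Ωh ν Φp Φm u0 u) :
    ∀ x ∈ Ωh, ∀ t ∈ Set.Ici (0:ℝ),
      Ωh.inf' hne u0 ≤ u x t ∧ u x t ≤ Ωh.sup' hne u0 := by
  obtain ⟨hinit, hderiv, -⟩ := hu
  have hupperH : ∀ s ∈ Set.Ici (0:ℝ), ∀ y ∈ Ωh, (∀ z ∈ Ωh, u z s ≤ u y s) →
      discHam h Ωh ν Φp Φm (fun z => u z s) y ≤ 0 := by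
    intro s hs y hy hmaxy
    have hyΩ : y ∈ closure Ω := ((hΩh y).mp hy).2
    simp only [discHam]
    refine Finset.sum_nonpos fun j _ => ?_
    have key : ∀ (w : Fin N → ℝ) (Φ : ℝ), 0 ≤ Φ →
        (if w ∈ Ωh then Φ * (Real.exp ((u w s - u y s) / h) - 1) else 0) ≤ 0 := by
      intro w Φ hΦ
      split_ifs with hw
      · refine mul_nonpos_of_nonneg_of_nonpos hΦ ?_
        rw [sub_nonpos, Real.exp_le_one_iff]
        exact div_nonpos_of_nonpos_of_nonneg (sub_nonpos.2 (hmaxy w hw)) hh.le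
      · exact le_rfl
    exact add_nonpos (key _ _ (hΦp0 j y hyΩ)) (key _ _ (hΦm0 j y hyΩ))
  have hlowerH : ∀ s ∈ Set.Ici (0:ℝ), ∀ y ∈ Ωh, (∀ z ∈ Ωh, -(u z s) ≤ -(u y s)) →
      -(discHam h Ωh ν Φp Φm (fun z => u z s) y) ≤ 0 := by
    intro s hs y hy hminy
    have hyΩ : y ∈ closure Ω := ((hΩh y).mp hy).2
    rw [neg_nonpos]
    simp only [discHam]
    refine Finset.sum_nonneg fun j _ => ?_
    have key : ∀ (w : Fin N → ℝ) (Φ : ℝ), 0 ≤ Φ →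
        (0:ℝ) ≤ (if w ∈ Ωh then Φ * (Real.exp ((u w s - u y s) / h) - 1) else 0) := by
      intro w Φ hΦ
      split_ifs with hw
      · refine mul_nonneg hΦ ?_
        rw [sub_nonneg]
        refine Real.one_le_exp (div_nonneg (sub_nonneg.2 ?_) hh.le)
        exact neg_le_neg_iff.mp (hminy w hw)
      · exact le_rfl
    exact add_nonneg (key _ _ (hΦp0 j y hyΩ)) (key _ _ (hΦm0 j y hyΩ))
  intro x hx t ht
  constructor
  · have hlow := finset_sup'_decay Ωh hne (fun y s => -(u y s))
      (fun y s => -(discHam h Ωh ν Φp Φm (fun z => u z s) y))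
      (fun y hy s hs => (hderiv y hy s hs).neg) hlowerH t ht
    rw [finset_sup'_neg_eq, finset_sup'_neg_eq, neg_le_neg_iff] at hlow
    have h0 : Ωh.inf' hne (fun y => u y 0) = Ωh.inf' hne u0 :=
      Finset.inf'_congr hne rfl (fun y hy => hinit y hy)
    calc Ωh.inf' hne u0 = Ωh.inf' hne (fun y => u y 0) := h0.symm
      _ ≤ Ωh.inf' hne (fun y => u y t) := hlow
      _ ≤ u x t := Finset.inf'_le _ hx
  · have hup := finset_sup'_decay Ωh hne (fun y s => u y s)
      (fun y s => discHam h Ωh ν Φp Φm (fun z => u z s) y)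
      (fun y hy s hs => hderiv y hy s hs) hupperH t ht
    have h0 : Ωh.sup' hne (fun y => u y 0) = Ωh.sup' hne u0 :=
      Finset.sup'_congr hne rfl (fun y hy => hinit y hy)
    calc u x t ≤ Ωh.sup' hne (fun y => u y t) := Finset.le_sup' (fun y => u y t) hx
      _ ≤ Ωh.sup' hne (fun y => u y 0) := hup
      _ = Ωh.sup' hne u0 := h0

end MainProof

end
end

section
/- Let u_h solve the discrete Hamilton–Jacobi equation with initial datum u^0. Then the time derivative is controlled by the discrete Hamiltonian of the initial datum: for every x ∈ Ω_h and every t ≥ 0, |∂_t u_h(x,t)| ≤ max_{y ∈ Ω_h} |(H_h u^0)(y)|. -/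
open scoped Classical BigOperators
open MeasureTheory

noncomputable section

/-!
Differentiating the equation in time, `w := ∂ₜu_h = H_h u_h` solves the linear system
`∂ₜw(x) = Σ_y c_{xy}(t) (w(y) - w(x))` with coefficients
`c_{xy} = Φ^±(x) e^{(u(y) - u(x))/h} / h ≥ 0`.
At a maximizer of `w(·,t)` every term is nonpositive, so the maximum of `w` over the grid is
nonincreasing in time; symmetrically its minimum is nondecreasing. Hence
`|w(x,t)| ≤ max_y |w(y,0)| = max_y |H_h u⁰(y)|`.
-/

open Set Filter Topology

theorem eventually_slope_finset_sup'_lt {ι : Type*} {s : Finset ι} (hs : s.Nonempty)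
    {f : ι → ℝ → ℝ} {f' : ι → ℝ} {x : ℝ}
    (hf : ∀ i ∈ s, HasDerivWithinAt (f i) (f' i) (Ici x) x)
    (hmax : ∀ i ∈ s, IsMaxOn (f · x) s i → f' i ≤ 0) {r : ℝ} (hr : 0 < r) :
    ∀ᶠ z in 𝓝[>] x, slope (fun t => s.sup' hs (f · t)) x z < r := by
  set M : ℝ → ℝ := fun t => s.sup' hs (f · t)
  have hterm : ∀ i ∈ s, ∀ᶠ z in 𝓝[>] x, (f i z - M x) / (z - x) < r := by
    intro i hi
    rcases (Finset.le_sup' (f · x) hi).eq_or_lt with hxmax | hlt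
    · have hslope : Tendsto (slope (f i) x) (𝓝[>] x) (𝓝 (f' i)) :=
        (hasDerivWithinAt_iff_tendsto_slope' (lt_irrefl x)).1 (hf i hi).Ioi_of_Ici
      have hf'i : f' i < r :=
        (hmax i hi fun j hj => (Finset.le_sup' (f · x) hj).trans hxmax.ge).trans_lt hr
      filter_upwards [hslope.eventually_lt_const hf'i] with z hz
      rwa [slope_def_field, hxmax] at hz
    · have hcont : Tendsto (f i) (𝓝[>] x) (𝓝 (f i x)) :=
        ((hf i hi).continuousWithinAt.mono Ioi_subset_Ici_self).tendsto
      filter_upwards [hcont.eventually_lt_const hlt, self_mem_nhdsWithin] with z hz hxz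
      exact (div_neg_of_neg_of_pos (sub_neg.2 hz) (sub_pos.2 hxz)).trans hr
  filter_upwards [(Finset.eventually_all s).2 hterm] with z hz
  obtain ⟨i, hi, hMz⟩ := Finset.exists_mem_eq_sup' hs (f · z)
  rw [slope_def_field]
  simpa only [M, hMz] using hz i hi

theorem antitoneOn_finset_sup'_of_deriv_nonpos_of_isMaxOn {ι : Type*} {s : Finset ι}
    (hs : s.Nonempty) {f f' : ι → ℝ → ℝ} {a : ℝ}
    (hf : ∀ i ∈ s, ∀ t ∈ Ici a, HasDerivWithinAt (f i) (f' i t) (Ici a) t)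
    (hmax : ∀ t ∈ Ici a, ∀ i ∈ s, IsMaxOn (f · t) s i → f' i t ≤ 0) :
    AntitoneOn (fun t => s.sup' hs (f · t)) (Ici a) := by
  intro t₁ ht₁ t₂ _ h₁₂
  have hsub : Icc t₁ t₂ ⊆ Ici a := Icc_subset_Ici_self.trans (Ici_subset_Ici.2 ht₁)
  have hcont : ContinuousOn (fun t => s.sup' hs (f · t)) (Icc t₁ t₂) := fun t ht =>
    Tendsto.finset_sup'_nhds_apply hs fun i hi =>
      ((hf i hi t (hsub ht)).continuousWithinAt.mono hsub).tendsto
  refine image_le_of_liminf_slope_right_le_deriv_boundary hcont le_rfl continuousOn_const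
    (fun _ _ => hasDerivWithinAt_const _ _ _) (fun t ht r hr => ?_) (right_mem_Icc.2 h₁₂)
  have hta : a ≤ t := le_trans ht₁ ht.1
  exact (eventually_slope_finset_sup'_lt hs
    (fun i hi => (hf i hi t hta).mono (Ici_subset_Ici.2 hta)) (hmax t hta) hr).frequently

theorem abs_le_finset_sup'_abs_of_deriv_sign_at_extrema {ι : Type*} {s : Finset ι}
    (hs : s.Nonempty) {f f' : ι → ℝ → ℝ} {a : ℝ}
    (hf : ∀ i ∈ s, ∀ t ∈ Ici a, HasDerivWithinAt (f i) (f' i t) (Ici a) t)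
    (hmax : ∀ t ∈ Ici a, ∀ i ∈ s, IsMaxOn (f · t) s i → f' i t ≤ 0)
    (hmin : ∀ t ∈ Ici a, ∀ i ∈ s, IsMinOn (f · t) s i → 0 ≤ f' i t) {i : ι} (hi : i ∈ s)
    {t : ℝ} (ht : t ∈ Ici a) :
    |f i t| ≤ s.sup' hs (fun j => |f j a|) := by
  have hup := antitoneOn_finset_sup'_of_deriv_nonpos_of_isMaxOn hs hf hmax self_mem_Ici ht ht
  have hdown := antitoneOn_finset_sup'_of_deriv_nonpos_of_isMaxOn hs (f := fun i t => -f i t)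
    (fun i hi t ht => (hf i hi t ht).neg)
    (fun t ht i hi hi' => neg_nonpos.2 (hmin t ht i hi (by simpa using hi'.neg)))
    self_mem_Ici ht ht
  rw [abs_le]
  constructor
  · calc -s.sup' hs (fun j => |f j a|) ≤ -s.sup' hs (fun j => -f j a) :=
          neg_le_neg (Finset.sup'_mono_fun fun j _ => neg_le_abs _)
      _ ≤ -s.sup' hs (fun j => -f j t) := neg_le_neg hdown
      _ ≤ f i t := neg_le.1 (Finset.le_sup' (fun j => -f j t) hi)
  · calc f i t ≤ s.sup' hs (fun j => f j t) := Finset.le_sup' (fun j => f j t) hi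
      _ ≤ s.sup' hs (fun j => f j a) := hup
      _ ≤ s.sup' hs (fun j => |f j a|) := Finset.sup'_mono_fun fun j _ => le_abs_self _

def discHamLin {N M : ℕ} (h : ℝ) (Ωh : Finset (Fin N → ℝ)) (ν : Fin M → Fin N → ℤ)
    (Φp Φm : Fin M → (Fin N → ℝ) → ℝ) (u v : (Fin N → ℝ) → ℝ) (x : Fin N → ℝ) : ℝ :=
  ∑ j : Fin M,
    ((if shiftPt h x (ν j) ∈ Ωh then
        Φp j x * (Real.exp ((u (shiftPt h x (ν j)) - u x) / h)
          * ((v (shiftPt h x (ν j)) - v x) / h)) else 0)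
      + (if shiftPt h x (-(ν j)) ∈ Ωh then
        Φm j x * (Real.exp ((u (shiftPt h x (-(ν j))) - u x) / h)
          * ((v (shiftPt h x (-(ν j))) - v x) / h)) else 0))

section DiscreteHamiltonian

variable {N M : ℕ} {h : ℝ} {Ωh : Finset (Fin N → ℝ)} {ν : Fin M → Fin N → ℤ}
  {Φp Φm : Fin M → (Fin N → ℝ) → ℝ} {x : Fin N → ℝ}

theorem discHam_congr {u v : (Fin N → ℝ) → ℝ} (hx : x ∈ Ωh) (huv : ∀ y ∈ Ωh, u y = v y) :
    discHam h Ωh ν Φp Φm u x = discHam h Ωh ν Φp Φm v x := by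
  unfold discHam
  refine Finset.sum_congr rfl fun j _ => ?_
  congr 1 <;> (split_ifs with hj <;> [rw [huv _ hx, huv _ hj]; rfl])

theorem hasDerivWithinAt_discHam {u : (Fin N → ℝ) → ℝ → ℝ} {u' : (Fin N → ℝ) → ℝ}
    {s : Set ℝ} {t : ℝ} (hx : x ∈ Ωh) (hu : ∀ y ∈ Ωh, HasDerivWithinAt (u y) (u' y) s t) :
    HasDerivWithinAt (fun τ => discHam h Ωh ν Φp Φm (fun y => u y τ) x)
      (discHamLin h Ωh ν Φp Φm (fun y => u y t) u' x) s t := by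
  have hterm : ∀ y ∈ Ωh, ∀ Φ : ℝ,
      HasDerivWithinAt (fun τ => Φ * (Real.exp ((u y τ - u x τ) / h) - 1))
        (Φ * (Real.exp ((u y t - u x t) / h) * ((u' y - u' x) / h))) s t := fun y hy Φ =>
    ((((hu y hy).sub (hu x hx)).div_const h).exp.sub_const 1).const_mul Φ
  refine HasDerivWithinAt.fun_sum fun j _ => HasDerivWithinAt.add ?_ ?_ <;>
    (split_ifs with hj <;> [exact hterm _ hj _; exact hasDerivWithinAt_const _ _ _])

theorem discHamLin_nonpos_of_isMaxOn {u v : (Fin N → ℝ) → ℝ} (hh : 0 < h)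
    (hΦp : ∀ j, 0 ≤ Φp j x) (hΦm : ∀ j, 0 ≤ Φm j x) (hv : IsMaxOn v Ωh x) :
    discHamLin h Ωh ν Φp Φm u v x ≤ 0 := by
  have hterm : ∀ y ∈ Ωh, ∀ Φ : ℝ, 0 ≤ Φ →
      Φ * (Real.exp ((u y - u x) / h) * ((v y - v x) / h)) ≤ 0 := fun y hy Φ hΦ =>
    mul_nonpos_of_nonneg_of_nonpos hΦ <| mul_nonpos_of_nonneg_of_nonpos (Real.exp_pos _).le <|
      div_nonpos_of_nonpos_of_nonneg (sub_nonpos.2 (hv hy)) hh.le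
  refine Finset.sum_nonpos fun j _ => add_nonpos ?_ ?_ <;> split_ifs with hj
  exacts [hterm _ hj _ (hΦp j), le_rfl, hterm _ hj _ (hΦm j), le_rfl]

theorem discHamLin_neg (u v : (Fin N → ℝ) → ℝ) :
    discHamLin h Ωh ν Φp Φm u (fun y => -v y) x = -discHamLin h Ωh ν Φp Φm u v x := by
  simp only [discHamLin, ← Finset.sum_neg_distrib]
  refine Finset.sum_congr rfl fun j _ => ?_
  split_ifs <;> ring

theorem discHamLin_nonneg_of_isMinOn {u v : (Fin N → ℝ) → ℝ} (hh : 0 < h)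
    (hΦp : ∀ j, 0 ≤ Φp j x) (hΦm : ∀ j, 0 ≤ Φm j x) (hv : IsMinOn v Ωh x) :
    0 ≤ discHamLin h Ωh ν Φp Φm u v x := by
  simpa [discHamLin_neg] using discHamLin_nonpos_of_isMaxOn (u := u) hh hΦp hΦm hv.neg

end DiscreteHamiltonian

theorem discrete_HJE_time_derivative_bound_general
    {N M : ℕ}
    (h : ℝ) (hh : 0 < h)
    (Ω : Set (Fin N → ℝ))
    (ν : Fin M → Fin N → ℤ)
    (Φp Φm : Fin M → (Fin N → ℝ) → ℝ)
    (hΦp0 : ∀ j, ∀ x ∈ closure Ω, 0 ≤ Φp j x)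
    (hΦm0 : ∀ j, ∀ x ∈ closure Ω, 0 ≤ Φm j x)
    (Ωh : Finset (Fin N → ℝ))
    (hΩh : ∀ x : Fin N → ℝ,
      x ∈ Ωh ↔ ((∃ i : Fin N → ℕ, ∀ k, x k = (i k : ℝ) * h) ∧ x ∈ closure Ω))
    (hne : Ωh.Nonempty)
    (u0 : (Fin N → ℝ) → ℝ) (u : (Fin N → ℝ) → ℝ → ℝ)
    (hu : solvesDHJ h Ωh ν Φp Φm u0 u) :
    ∀ x ∈ Ωh, ∀ t ∈ Set.Ici (0:ℝ),
      |discHam h Ωh ν Φp Φm (fun y => u y t) x|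
        ≤ Ωh.sup' hne (fun y => |discHam h Ωh ν Φp Φm u0 y|) := by
  obtain ⟨hinit, hderiv, -⟩ := hu
  have hΦ : ∀ x ∈ Ωh, (∀ j, 0 ≤ Φp j x) ∧ ∀ j, 0 ≤ Φm j x := fun x hx =>
    ⟨fun j => hΦp0 j x ((hΩh x).1 hx).2, fun j => hΦm0 j x ((hΩh x).1 hx).2⟩
  set w : (Fin N → ℝ) → ℝ → ℝ := fun x t => discHam h Ωh ν Φp Φm (fun y => u y t) x
  have hw0 : ∀ y ∈ Ωh, w y 0 = discHam h Ωh ν Φp Φm u0 y := fun y hy =>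
    discHam_congr hy hinit
  intro x hx t ht
  simpa only [w, Finset.sup'_congr hne rfl fun y hy => congrArg abs (hw0 y hy)] using
    abs_le_finset_sup'_abs_of_deriv_sign_at_extrema hne (f := w)
      (f' := fun x t => discHamLin h Ωh ν Φp Φm (fun y => u y t) (fun y => w y t) x)
      (fun x hx t ht => hasDerivWithinAt_discHam hx fun y hy => hderiv y hy t ht)
      (fun _ _ x hx hmax => discHamLin_nonpos_of_isMaxOn hh (hΦ x hx).1 (hΦ x hx).2 hmax)
      (fun _ _ x hx hmin => discHamLin_nonneg_of_isMinOn hh (hΦ x hx).1 (hΦ x hx).2 hmin)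
      hx ht

/-- The time derivative `∂ₜ u_h(x,t) = (H_h u_h(·,t))(x)` of the solution of the
discrete HJE is controlled by the discrete Hamiltonian of the initial datum. -/
theorem discrete_HJE_time_derivative_bound
    {N M : ℕ} (hN : 0 < N) (hM : 0 < M)
    (h : ℝ) (hh : 0 < h)
    (Ω : Set (Fin N → ℝ)) (hΩo : IsOpen Ω) (hΩne : Ω.Nonempty)
    (hΩbd : Bornology.IsBounded Ω)
    (hΩpos : closure Ω ⊆ {x : Fin N → ℝ | ∀ k, 0 < x k})
    (ν : Fin M → Fin N → ℤ)
    (Φp Φm : Fin M → (Fin N → ℝ) → ℝ)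
    (hΦpc : ∀ j, ContinuousOn (Φp j) (closure Ω))
    (hΦmc : ∀ j, ContinuousOn (Φm j) (closure Ω))
    (hΦp0 : ∀ j, ∀ x ∈ closure Ω, 0 ≤ Φp j x)
    (hΦm0 : ∀ j, ∀ x ∈ closure Ω, 0 ≤ Φm j x)
    (Ωh : Finset (Fin N → ℝ))
    (hΩh : ∀ x : Fin N → ℝ,
      x ∈ Ωh ↔ ((∃ i : Fin N → ℕ, ∀ k, x k = (i k : ℝ) * h) ∧ x ∈ closure Ω))
    (hne : Ωh.Nonempty)
    (u0 : (Fin N → ℝ) → ℝ) (u : (Fin N → ℝ) → ℝ → ℝ)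
    (hu : solvesDHJ h Ωh ν Φp Φm u0 u) :
    ∀ x ∈ Ωh, ∀ t ∈ Set.Ici (0:ℝ),
      |discHam h Ωh ν Φp Φm (fun y => u y t) x|
        ≤ Ωh.sup' hne (fun y => |discHam h Ωh ν Φp Φm u0 y|) :=
  discrete_HJE_time_derivative_bound_general h hh Ω ν Φp Φm hΦp0 hΦm0 Ωh hΩh hne u0 u hu
end
end

section
/- Suppose u_0 : closure(Ω) → ℝ is Lipschitz continuous with constant K > 0 with respect to the Euclidean distance, and let u_h solve the discrete Hamilton–Jacobi equation with initial datum the restriction of u_0 to Ω_h. Then for every x ∈ Ω_h and every t ≥ 0, |∂_t u_h(x,t)| ≤ C_0, where C_0 := Σ_{j=1}^M (sup_{closure(Ω)} Φ_j⁺ + sup_{closure(Ω)} Φ_j⁻)·(exp(K·‖ν_j‖) − 1), ‖ν_j‖ being the Euclidean norm of ν_j; in particular the constant C_0 does not involve the grid size h. -/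
open scoped Classical BigOperators
open MeasureTheory

noncomputable section

/-
The discrete equation is a finite system of ODEs whose right-hand side at `x` is increasing in
the differences `u y - u x`. Hence it obeys a comparison principle: at a grid point where the
difference of a subsolution and a supersolution is maximal, its right derivative is `≤ 0`, so the
maximal difference cannot grow. The Lipschitz bound on `u₀` gives `|H_h u₀| ≤ C₀` on the grid,
independently of `h` because `exp (K h ‖ν‖ / h) = exp (K ‖ν‖)`; so `u₀ ± C₀ t` are super- and
subsolutions and `|u_h(t) - u₀| ≤ C₀ t`. Time translates of `u_h` are again solutions, so comparing
`u_h(· + s)` with `u_h` gives `|u_h(t + s) - u_h(t)| ≤ C₀ s`, which bounds `∂ₜ u_h = H_h u_h`.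
-/

open Set Filter Topology

section RunningMaximum

variable {ι : Type*} {s : Finset ι} {d d' : ι → ℝ → ℝ}

/-- Just to the right of `t` the maximum is attained only at indices already maximal at `t`,
where the right derivative is nonpositive. -/
lemma eventually_slope_sup'_lt {t r : ℝ} (hs : s.Nonempty)
    (hd : ∀ i ∈ s, HasDerivWithinAt (d i) (d' i t) (Ici t) t)
    (hmax : ∀ i ∈ s, (∀ j ∈ s, d j t ≤ d i t) → d' i t ≤ 0) (hr : 0 < r) :
    ∀ᶠ z in 𝓝[>] t, slope (fun τ => s.sup' hs (d · τ)) t z < r := by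
  set m := fun τ => s.sup' hs (d · τ)
  have hIoi : ∀ i ∈ s, HasDerivWithinAt (d i) (d' i t) (Ioi t) t :=
    fun i hi => (hd i hi).mono Ioi_subset_Ici_self
  have key : ∀ i ∈ s, ∀ᶠ z in 𝓝[>] t, t < z → d i z = m z → slope m t z < r := by
    intro i hi
    by_cases hi_max : ∀ j ∈ s, d j t ≤ d i t
    · have hmt : m t = d i t :=
        le_antisymm (Finset.sup'_le _ _ hi_max) (Finset.le_sup' (d · t) hi)
      have hslope : Tendsto (slope (d i) t) (𝓝[>] t) (𝓝 (d' i t)) := by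
        simpa using hasDerivWithinAt_iff_tendsto_slope.1 (hIoi i hi)
      filter_upwards [hslope.eventually_lt_const ((hmax i hi hi_max).trans_lt hr)]
        with z hz _ hdz
      simpa only [slope_def_field, m, ← hdz, hmt] using hz
    · push Not at hi_max
      obtain ⟨j, hj, hij⟩ := hi_max
      have hlt : d i t < m t := hij.trans_le (Finset.le_sup' (d · t) hj)
      filter_upwards [((hIoi i hi).continuousWithinAt.eventually_lt_const hlt)]
        with z hz htz hdz
      rw [slope_def_field]
      exact (div_neg_of_neg_of_pos (by rw [← hdz]; linarith) (sub_pos.2 htz)).trans hr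
  filter_upwards [(Filter.eventually_all_finset s).2 key, self_mem_nhdsWithin] with z hz htz
  obtain ⟨i, hi, hiz⟩ := Finset.exists_mem_eq_sup' hs (d · z)
  exact hz i hi htz hiz.symm

theorem le_of_deriv_nonpos_at_max {a B : ℝ}
    (hd : ∀ i ∈ s, ∀ t ∈ Ici a, HasDerivWithinAt (d i) (d' i t) (Ici a) t)
    (hmax : ∀ i ∈ s, ∀ t ∈ Ici a, (∀ j ∈ s, d j t ≤ d i t) → d' i t ≤ 0)
    (ha : ∀ i ∈ s, d i a ≤ B) : ∀ i ∈ s, ∀ t ∈ Ici a, d i t ≤ B := by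
  intro i hi t ht
  have hs : s.Nonempty := ⟨i, hi⟩
  suffices s.sup' hs (d · t) ≤ B from (Finset.le_sup' (d · t) hi).trans this
  refine image_le_of_liminf_slope_right_le_deriv_boundary (B' := fun _ => 0)
    (ContinuousOn.finset_sup'_apply hs fun i hi τ hτ =>
      (hd i hi τ hτ.1).continuousWithinAt.mono Icc_subset_Ici_self)
    (Finset.sup'_le _ _ ha) continuousOn_const (fun _ _ => hasDerivWithinAt_const _ _ _)
    (fun τ hτ r hr => ?_) ⟨ht, le_rfl⟩
  have hτ' : τ ∈ Ici a := hτ.1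
  exact (eventually_slope_sup'_lt hs (fun i hi => (hd i hi τ hτ').mono (Ici_subset_Ici.2 hτ'))
    (fun i hi => hmax i hi τ hτ') hr).frequently

end RunningMaximum

lemma abs_le_of_hasDerivWithinAt_Ici {f : ℝ → ℝ} {f' t L : ℝ}
    (hf : HasDerivWithinAt f f' (Ici t) t) (hL : ∀ s > 0, |f (t + s) - f t| ≤ L * s) :
    |f'| ≤ L := by
  have hslope : Tendsto (slope f t) (𝓝[>] t) (𝓝 f') := by
    simpa using hasDerivWithinAt_iff_tendsto_slope.1 (hf.mono Ioi_subset_Ici_self)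
  refine le_of_tendsto hslope.abs ?_
  filter_upwards [self_mem_nhdsWithin] with τ (hτ : t < τ)
  have hpos : 0 < τ - t := sub_pos.2 hτ
  rw [slope_def_field, abs_div, abs_of_pos hpos, div_le_iff₀ hpos]
  simpa using hL (τ - t) hpos

lemma abs_exp_sub_one_le (a : ℝ) : |Real.exp a - 1| ≤ Real.exp |a| - 1 := by
  rcases le_total 0 a with ha | ha
  · rw [abs_of_nonneg ha, abs_of_nonneg (by linarith [Real.add_one_le_exp a])]
  · -- `1 - exp a = exp a * (exp (-a) - 1)` with `exp a ≤ 1`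
    rw [abs_of_nonpos ha, abs_of_nonpos (by linarith [Real.exp_le_one_iff.2 ha])]
    have hneg : 0 ≤ Real.exp (-a) - 1 := by linarith [Real.add_one_le_exp (-a)]
    have hprod : Real.exp a * Real.exp (-a) = 1 := by rw [← Real.exp_add]; simp
    nlinarith [Real.exp_le_one_iff.2 ha, Real.exp_pos a]

-- The equation of `solvesDHJ` without the initial condition.
def IsDHJSolution {N M : ℕ} (h : ℝ) (Ωh : Finset (Fin N → ℝ)) (ν : Fin M → Fin N → ℤ)
    (Φp Φm : Fin M → (Fin N → ℝ) → ℝ) (u : (Fin N → ℝ) → ℝ → ℝ) : Prop :=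
  ∀ x ∈ Ωh, ∀ t ∈ Ici (0 : ℝ),
    HasDerivWithinAt (u x) (discHam h Ωh ν Φp Φm (fun y => u y t) x) (Ici 0) t

section DiscreteHamiltonian

variable {N M : ℕ} {h : ℝ} {Ωh : Finset (Fin N → ℝ)} {ν : Fin M → Fin N → ℤ}
  {Φp Φm : Fin M → (Fin N → ℝ) → ℝ}

lemma discHam_add_const (v : (Fin N → ℝ) → ℝ) (x : Fin N → ℝ) (c : ℝ) :
    discHam h Ωh ν Φp Φm (fun y => v y + c) x = discHam h Ωh ν Φp Φm v x := by
  simp only [discHam, add_sub_add_right_eq_sub]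

lemma discHam_le_of_forall_sub_le (hh : 0 < h) {x : Fin N → ℝ}
    (hΦp : ∀ j, 0 ≤ Φp j x) (hΦm : ∀ j, 0 ≤ Φm j x) {v w : (Fin N → ℝ) → ℝ}
    (hmax : ∀ y ∈ Ωh, v y - w y ≤ v x - w x) :
    discHam h Ωh ν Φp Φm v x ≤ discHam h Ωh ν Φp Φm w x := by
  have hterm : ∀ y, ∀ Φ : ℝ, 0 ≤ Φ →
      (if y ∈ Ωh then Φ * (Real.exp ((v y - v x) / h) - 1) else 0)
        ≤ if y ∈ Ωh then Φ * (Real.exp ((w y - w x) / h) - 1) else 0 := by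
    intro y Φ hΦ
    split_ifs with hy
    · have hvw : (v y - v x) / h ≤ (w y - w x) / h :=
        div_le_div_of_nonneg_right (by linarith [hmax y hy]) hh.le
      gcongr
    · exact le_rfl
  exact Finset.sum_le_sum fun j _ => add_le_add (hterm _ _ (hΦp j)) (hterm _ _ (hΦm j))

theorem discHam_comparison (hh : 0 < h) (hΦp : ∀ j, ∀ x ∈ Ωh, 0 ≤ Φp j x)
    (hΦm : ∀ j, ∀ x ∈ Ωh, 0 ≤ Φm j x) {f g F G : (Fin N → ℝ) → ℝ → ℝ}
    (hf : ∀ x ∈ Ωh, ∀ t ∈ Ici (0 : ℝ), HasDerivWithinAt (f x) (F x t) (Ici 0) t)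
    (hg : ∀ x ∈ Ωh, ∀ t ∈ Ici (0 : ℝ), HasDerivWithinAt (g x) (G x t) (Ici 0) t)
    (hF : ∀ x ∈ Ωh, ∀ t ∈ Ici (0 : ℝ), F x t ≤ discHam h Ωh ν Φp Φm (fun y => f y t) x)
    (hG : ∀ x ∈ Ωh, ∀ t ∈ Ici (0 : ℝ), discHam h Ωh ν Φp Φm (fun y => g y t) x ≤ G x t)
    {B : ℝ} (h0 : ∀ x ∈ Ωh, f x 0 - g x 0 ≤ B) :
    ∀ x ∈ Ωh, ∀ t ∈ Ici (0 : ℝ), f x t - g x t ≤ B :=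
  le_of_deriv_nonpos_at_max (d := fun x t => f x t - g x t) (d' := fun x t => F x t - G x t)
    (fun x hx t ht => (hf x hx t ht).sub (hg x hx t ht))
    (fun x hx t ht hmax => by
      have := discHam_le_of_forall_sub_le (ν := ν) hh (fun j => hΦp j x hx)
        (fun j => hΦm j x hx) hmax
      linarith [hF x hx t ht, hG x hx t ht])
    h0

namespace IsDHJSolution

variable {u : (Fin N → ℝ) → ℝ → ℝ}

theorem abs_sub_le (hh : 0 < h) (hΦp : ∀ j, ∀ x ∈ Ωh, 0 ≤ Φp j x)
    (hΦm : ∀ j, ∀ x ∈ Ωh, 0 ≤ Φm j x) {v : (Fin N → ℝ) → ℝ → ℝ}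
    (hu : IsDHJSolution h Ωh ν Φp Φm u) (hv : IsDHJSolution h Ωh ν Φp Φm v) {B : ℝ}
    (h0 : ∀ x ∈ Ωh, |u x 0 - v x 0| ≤ B) :
    ∀ x ∈ Ωh, ∀ t ∈ Ici (0 : ℝ), |u x t - v x t| ≤ B := by
  intro x hx t ht
  rw [abs_sub_le_iff]
  exact ⟨discHam_comparison hh hΦp hΦm hu hv (fun _ _ _ _ => le_rfl) (fun _ _ _ _ => le_rfl)
      (fun y hy => (abs_sub_le_iff.1 (h0 y hy)).1) x hx t ht,
    discHam_comparison hh hΦp hΦm hv hu (fun _ _ _ _ => le_rfl) (fun _ _ _ _ => le_rfl)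
      (fun y hy => (abs_sub_le_iff.1 (h0 y hy)).2) x hx t ht⟩

theorem comp_add_const (hu : IsDHJSolution h Ωh ν Φp Φm u) {s : ℝ} (hs : 0 ≤ s) :
    IsDHJSolution h Ωh ν Φp Φm (fun x t => u x (t + s)) := by
  intro x hx t ht
  have hshift : HasDerivWithinAt (· + s) 1 (Ici 0) t := (hasDerivWithinAt_id t _).add_const s
  simpa [Function.comp_def] using (hu x hx (t + s) (add_nonneg ht hs)).comp t hshift
    fun τ (hτ : 0 ≤ τ) => add_nonneg hτ hs

/-- Since `H_h` ignores additive constants, `u(·, 0) ± C t` are a super- and a subsolution. -/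
theorem abs_sub_initial_le (hh : 0 < h) (hΦp : ∀ j, ∀ x ∈ Ωh, 0 ≤ Φp j x)
    (hΦm : ∀ j, ∀ x ∈ Ωh, 0 ≤ Φm j x) (hu : IsDHJSolution h Ωh ν Φp Φm u) {C : ℝ}
    (hC : ∀ x ∈ Ωh, |discHam h Ωh ν Φp Φm (fun y => u y 0) x| ≤ C) :
    ∀ x ∈ Ωh, ∀ t ∈ Ici (0 : ℝ), |u x t - u x 0| ≤ C * t := by
  have hlin : ∀ (x : Fin N → ℝ) (c t : ℝ),
      HasDerivWithinAt (fun τ => u x 0 + c * τ) c (Ici 0) t := fun x c t => by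
    simpa using ((hasDerivWithinAt_id t _).const_mul c).const_add (u x 0)
  have hupper := discHam_comparison hh hΦp hΦm hu (fun x _ t _ => hlin x C t)
    (fun _ _ _ _ => le_rfl)
    (fun x hx t _ => (discHam_add_const _ x _).trans_le (abs_le.1 (hC x hx)).2)
    (B := 0) (fun x _ => by simp)
  have hlower := discHam_comparison hh hΦp hΦm (fun x _ t _ => hlin x (-C) t) hu
    (fun x hx t _ => (abs_le.1 (hC x hx)).1.trans_eq (discHam_add_const _ x _).symm)
    (fun _ _ _ _ => le_rfl) (B := 0) (fun x _ => by simp)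
  intro x hx t ht
  rw [abs_sub_le_iff]
  constructor <;> linarith [hupper x hx t ht, hlower x hx t ht]

theorem abs_sub_le_of_abs_discHam_initial_le (hh : 0 < h) (hΦp : ∀ j, ∀ x ∈ Ωh, 0 ≤ Φp j x)
    (hΦm : ∀ j, ∀ x ∈ Ωh, 0 ≤ Φm j x) (hu : IsDHJSolution h Ωh ν Φp Φm u) {C : ℝ}
    (hC : ∀ x ∈ Ωh, |discHam h Ωh ν Φp Φm (fun y => u y 0) x| ≤ C) {s : ℝ} (hs : 0 ≤ s) :
    ∀ x ∈ Ωh, ∀ t ∈ Ici (0 : ℝ), |u x (t + s) - u x t| ≤ C * s :=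
  (hu.comp_add_const hs).abs_sub_le hh hΦp hΦm hu fun x hx => by
    simpa using hu.abs_sub_initial_le hh hΦp hΦm hC x hx s hs

theorem abs_discHam_le (hh : 0 < h) (hΦp : ∀ j, ∀ x ∈ Ωh, 0 ≤ Φp j x)
    (hΦm : ∀ j, ∀ x ∈ Ωh, 0 ≤ Φm j x) (hu : IsDHJSolution h Ωh ν Φp Φm u) {C : ℝ}
    (hC : ∀ x ∈ Ωh, |discHam h Ωh ν Φp Φm (fun y => u y 0) x| ≤ C) :
    ∀ x ∈ Ωh, ∀ t ∈ Ici (0 : ℝ), |discHam h Ωh ν Φp Φm (fun y => u y t) x| ≤ C := by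
  intro x hx t ht
  exact abs_le_of_hasDerivWithinAt_Ici ((hu x hx t ht).mono (Ici_subset_Ici.2 ht))
    fun s hs => hu.abs_sub_le_of_abs_discHam_initial_le hh hΦp hΦm hC hs.le x hx t ht

end IsDHJSolution

end DiscreteHamiltonian

section LipschitzData

variable {N M : ℕ} {h : ℝ} {Ωh : Finset (Fin N → ℝ)} {u : (Fin N → ℝ) → ℝ} {x : Fin N → ℝ}
  {K : ℝ}

lemma sqrt_sum_sq_shiftPt_sub (hh : 0 ≤ h) (μ : Fin N → ℤ) :
    √(∑ k, (shiftPt h x μ k - x k) ^ 2) = h * √(∑ k, ((μ k : ℝ)) ^ 2) := by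
  have hsum : ∑ k, (shiftPt h x μ k - x k) ^ 2 = h ^ 2 * ∑ k, ((μ k : ℝ)) ^ 2 := by
    rw [Finset.mul_sum]
    exact Finset.sum_congr rfl fun k _ => by simp only [shiftPt]; ring
  rw [hsum, Real.sqrt_mul (sq_nonneg h), Real.sqrt_sq hh]

lemma abs_ite_mul_exp_sub_one_le (hh : 0 < h) (hK : 0 ≤ K)
    (hu : ∀ y ∈ Ωh, |u y - u x| ≤ K * √(∑ k, (y k - x k) ^ 2)) (μ : Fin N → ℤ) {Φ P : ℝ}
    (hΦ : Φ ∈ Icc 0 P) :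
    |if shiftPt h x μ ∈ Ωh then Φ * (Real.exp ((u (shiftPt h x μ) - u x) / h) - 1) else 0|
      ≤ P * (Real.exp (K * √(∑ k, ((μ k : ℝ)) ^ 2)) - 1) := by
  have hP : 0 ≤ P := hΦ.1.trans hΦ.2
  split_ifs with hy
  · have hquot : |(u (shiftPt h x μ) - u x) / h| ≤ K * √(∑ k, ((μ k : ℝ)) ^ 2) := by
      rw [abs_div, abs_of_pos hh, div_le_iff₀ hh]
      calc |u (shiftPt h x μ) - u x| ≤ K * (h * √(∑ k, ((μ k : ℝ)) ^ 2)) := by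
            rw [← sqrt_sum_sq_shiftPt_sub hh.le]; exact hu _ hy
        _ = K * √(∑ k, ((μ k : ℝ)) ^ 2) * h := by ring
    rw [abs_mul, abs_of_nonneg hΦ.1]
    exact mul_le_mul hΦ.2 ((abs_exp_sub_one_le _).trans (by gcongr)) (abs_nonneg _) hP
  · simpa using mul_nonneg hP (sub_nonneg.2 (Real.one_le_exp (by positivity)))

variable {ν : Fin M → Fin N → ℤ} {Φp Φm : Fin M → (Fin N → ℝ) → ℝ} {P Q : Fin M → ℝ}

theorem abs_discHam_le_of_lipschitz (hh : 0 < h) (hK : 0 ≤ K)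
    (hu : ∀ y ∈ Ωh, |u y - u x| ≤ K * √(∑ k, (y k - x k) ^ 2))
    (hΦp : ∀ j, Φp j x ∈ Icc 0 (P j)) (hΦm : ∀ j, Φm j x ∈ Icc 0 (Q j)) :
    |discHam h Ωh ν Φp Φm u x|
      ≤ ∑ j, (P j + Q j) * (Real.exp (K * √(∑ k, ((ν j k : ℝ)) ^ 2)) - 1) := by
  refine (Finset.abs_sum_le_sum_abs _ _).trans (Finset.sum_le_sum fun j _ => ?_)
  have hneg := abs_ite_mul_exp_sub_one_le hh hK hu (-ν j) (hΦm j)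
  simp only [Pi.neg_apply, Int.cast_neg, neg_sq] at hneg
  rw [add_mul]
  exact (abs_add_le _ _).trans
    (add_le_add (abs_ite_mul_exp_sub_one_le hh hK hu (ν j) (hΦp j)) hneg)

end LipschitzData

theorem discrete_HJE_uniform_time_derivative_bound_general
    {N M : ℕ}
    (h : ℝ) (hh : 0 < h)
    (Ω : Set (Fin N → ℝ))
    (hΩbd : Bornology.IsBounded Ω)
    (ν : Fin M → Fin N → ℤ)
    (Φp Φm : Fin M → (Fin N → ℝ) → ℝ)
    (hΦpc : ∀ j, ContinuousOn (Φp j) (closure Ω))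
    (hΦmc : ∀ j, ContinuousOn (Φm j) (closure Ω))
    (hΦp0 : ∀ j, ∀ x ∈ closure Ω, 0 ≤ Φp j x)
    (hΦm0 : ∀ j, ∀ x ∈ closure Ω, 0 ≤ Φm j x)
    (Ωh : Finset (Fin N → ℝ))
    (hΩh : ∀ x : Fin N → ℝ,
      x ∈ Ωh ↔ ((∃ i : Fin N → ℕ, ∀ k, x k = (i k : ℝ) * h) ∧ x ∈ closure Ω))
    (u0 : (Fin N → ℝ) → ℝ) (K : ℝ) (hK : 0 < K)
    (hLip : ∀ x ∈ closure Ω, ∀ y ∈ closure Ω,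
      |u0 x - u0 y| ≤ K * Real.sqrt (∑ k, (x k - y k) ^ 2))
    (u : (Fin N → ℝ) → ℝ → ℝ)
    (hu : solvesDHJ h Ωh ν Φp Φm u0 u) :
    ∀ x ∈ Ωh, ∀ t ∈ Set.Ici (0:ℝ),
      |discHam h Ωh ν Φp Φm (fun y => u y t) x|
        ≤ ∑ j : Fin M,
            (sSup (Φp j '' closure Ω) + sSup (Φm j '' closure Ω)) *
              (Real.exp (K * Real.sqrt (∑ k, ((ν j k : ℝ)) ^ 2)) - 1) := by
  obtain ⟨hu0, hsol : IsDHJSolution h Ωh ν Φp Φm u, -⟩ := hu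
  have hcl : ∀ x ∈ Ωh, x ∈ closure Ω := fun x hx => ((hΩh x).1 hx).2
  have hcpt : IsCompact (closure Ω) := hΩbd.isCompact_closure
  have hΦp : ∀ j, ∀ x ∈ closure Ω, Φp j x ∈ Icc 0 (sSup (Φp j '' closure Ω)) := fun j x hx =>
    ⟨hΦp0 j x hx, le_csSup (hcpt.bddAbove_image (hΦpc j)) (mem_image_of_mem _ hx)⟩
  have hΦm : ∀ j, ∀ x ∈ closure Ω, Φm j x ∈ Icc 0 (sSup (Φm j '' closure Ω)) := fun j x hx =>
    ⟨hΦm0 j x hx, le_csSup (hcpt.bddAbove_image (hΦmc j)) (mem_image_of_mem _ hx)⟩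
  refine hsol.abs_discHam_le hh (fun j x hx => (hΦp j x (hcl x hx)).1)
    (fun j x hx => (hΦm j x (hcl x hx)).1) fun x hx => ?_
  refine abs_discHam_le_of_lipschitz hh hK.le (fun y hy => ?_) (fun j => hΦp j x (hcl x hx))
    (fun j => hΦm j x (hcl x hx))
  rw [hu0 y hy, hu0 x hx]
  exact hLip y (hcl y hy) x (hcl x hx)

/-- For Lipschitz initial data (with respect to the Euclidean distance), the time
derivative of the solution of the discrete HJE is bounded uniformly in the grid
size `h` by the explicit constant
`C₀ = Σⱼ (sup Φⱼ⁺ + sup Φⱼ⁻)·(exp(K·‖νⱼ‖) − 1)`. -/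
theorem discrete_HJE_uniform_time_derivative_bound
    {N M : ℕ} (hN : 0 < N) (hM : 0 < M)
    (h : ℝ) (hh : 0 < h)
    (Ω : Set (Fin N → ℝ)) (hΩo : IsOpen Ω) (hΩne : Ω.Nonempty)
    (hΩbd : Bornology.IsBounded Ω)
    (hΩpos : closure Ω ⊆ {x : Fin N → ℝ | ∀ k, 0 < x k})
    (ν : Fin M → Fin N → ℤ)
    (Φp Φm : Fin M → (Fin N → ℝ) → ℝ)
    (hΦpc : ∀ j, ContinuousOn (Φp j) (closure Ω))
    (hΦmc : ∀ j, ContinuousOn (Φm j) (closure Ω))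
    (hΦp0 : ∀ j, ∀ x ∈ closure Ω, 0 ≤ Φp j x)
    (hΦm0 : ∀ j, ∀ x ∈ closure Ω, 0 ≤ Φm j x)
    (Ωh : Finset (Fin N → ℝ))
    (hΩh : ∀ x : Fin N → ℝ,
      x ∈ Ωh ↔ ((∃ i : Fin N → ℕ, ∀ k, x k = (i k : ℝ) * h) ∧ x ∈ closure Ω))
    (hne : Ωh.Nonempty)
    (u0 : (Fin N → ℝ) → ℝ) (K : ℝ) (hK : 0 < K)
    (hLip : ∀ x ∈ closure Ω, ∀ y ∈ closure Ω,
      |u0 x - u0 y| ≤ K * Real.sqrt (∑ k, (x k - y k) ^ 2))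
    (u : (Fin N → ℝ) → ℝ → ℝ)
    (hu : solvesDHJ h Ωh ν Φp Φm u0 u) :
    ∀ x ∈ Ωh, ∀ t ∈ Set.Ici (0:ℝ),
      |discHam h Ωh ν Φp Φm (fun y => u y t) x|
        ≤ ∑ j : Fin M,
            (sSup (Φp j '' closure Ω) + sSup (Φm j '' closure Ω)) *
              (Real.exp (K * Real.sqrt (∑ k, ((ν j k : ℝ)) ^ 2)) - 1) :=
  discrete_HJE_uniform_time_derivative_bound_general h hh Ω hΩbd ν Φp Φm hΦpc hΦmc hΦp0 hΦm0 Ωh hΩh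
    u0 K hK hLip u hu
end
end

section
/- If s ∈ ℝⁿ satisfies Σ_{k=1}^n s_k ≠ 0, or s_{k₀} < 0 for some index k₀ ≠ i, then the Legendre transform is infinite: sup_{φ ∈ ℝⁿ} (Σ_{k=1}^n s_k·φ_k − G(φ)) = +∞. -/
open scoped BigOperators

noncomputable section

/-- `G(φ) = Σ_{k ≠ i} c_k·(exp((φ_k − φ_i)/h) − 1)`. -/
def legG {n : ℕ} (h : ℝ) (i : Fin n) (c : Fin n → ℝ) (φ : Fin n → ℝ) : ℝ :=
  ∑ k ∈ Finset.univ.erase i, c k * (Real.exp ((φ k - φ i) / h) - 1)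

/-- If `Σ s_k ≠ 0`, or `s_{k₀} < 0` for some `k₀ ≠ i`, then the Legendre transform
`sup_φ (Σ s_k φ_k − G(φ))` is `+∞`: the values are unbounded above. -/
theorem legendre_transform_infinite
    {n : ℕ} (hn : 2 ≤ n) (i : Fin n) (h : ℝ) (hh : 0 < h)
    (c : Fin n → ℝ) (hc : ∀ k, k ≠ i → 0 ≤ c k)
    (s : Fin n → ℝ)
    (hs : (∑ k, s k) ≠ 0 ∨ ∃ k, k ≠ i ∧ s k < 0) :
    ∀ C : ℝ, ∃ φ : Fin n → ℝ, C < (∑ k, s k * φ k) - legG h i c φ := by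
  intro C
  rcases hs with hS | ⟨k₀, hk₀i, hk₀⟩
  · -- constant vector
    refine ⟨fun _ => (C + 1) / (∑ k, s k), ?_⟩
    have hG : legG h i c (fun _ => (C + 1) / (∑ k, s k)) = 0 := by
      unfold legG
      simp
    rw [hG, sub_zero, ← Finset.sum_mul]
    rw [mul_div_cancel₀ _ hS]
    linarith
  · -- spike at k₀
    set t : ℝ := min ((C + 1) / s k₀) 0 with ht
    refine ⟨fun k => if k = k₀ then t else 0, ?_⟩
    have ht0 : t ≤ 0 := min_le_right _ _
    have hsum : (∑ k, s k * (if k = k₀ then t else 0)) = s k₀ * t := by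
      rw [Finset.sum_eq_single k₀]
      · simp
      · intro b _ hb; simp [hb]
      · simp
    have hst : C + 1 ≤ s k₀ * t := by
      have h1 : t ≤ (C + 1) / s k₀ := min_le_left _ _
      have := mul_le_mul_of_nonpos_left h1 hk₀.le
      rwa [mul_div_cancel₀ _ hk₀.ne] at this
    have hG : legG h i c (fun k => if k = k₀ then t else 0) ≤ 0 := by
      unfold legG
      apply Finset.sum_nonpos
      intro k hk
      have hki : k ≠ i := Finset.ne_of_mem_erase hk
      have hik₀ : i ≠ k₀ := fun e => hk₀i e.symm
      by_cases hkk : k = k₀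
      · subst hkk
        simp only [if_pos rfl, if_neg hik₀, sub_zero, if_true, eq_self_iff_true]
        apply mul_nonpos_of_nonneg_of_nonpos (hc _ hki)
        have : Real.exp (t / h) ≤ 1 := by
          rw [← Real.exp_zero]
          exact Real.exp_le_exp.mpr (div_nonpos_of_nonpos_of_nonneg ht0 hh.le)
        linarith
      · simp [hkk, hik₀]
    have : s k₀ * t - legG h i c (fun k => if k = k₀ then t else 0) ≥ C + 1 := by
      linarith
    rw [hsum]
    linarith
end
end

section
/- Assume c_k > 0 for all k ≠ i. If s ∈ ℝⁿ satisfies s_k ≥ 0 for all k ≠ i and Σ_{k=1}^n s_k = 0, then sup_{φ ∈ ℝⁿ} (Σ_{k=1}^n s_k·φ_k − G(φ)) = Σ_{k ≠ i} c_k·((h·s_k/c_k)·log(h·s_k/c_k) − h·s_k/c_k + 1), with the convention 0·log 0 := 0; moreover this value is finite and nonnegative. -/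
open scoped BigOperators

noncomputable section

/-!
Since `Σ s_k = 0`, the objective only depends on the differences `u_k = φ_k - φ_i`, and in
these free variables it is the sum of the independent one-variable terms
`s_k u_k - c_k (exp (u_k / h) - 1)`; the supremum of such a sum is the sum of the suprema.
Substituting `u = h x`, each term is `c_k` times `t x - (exp x - 1)` with `t = h s_k / c_k`,
whose supremum is `klFun t = t log t - t + 1`: the bound is the tangent-line inequality
`exp y ≥ 1 + y` at `y = x - log t`, the value is attained at `x = log t` when `t > 0`, and
approached as `x → -∞` when `t = 0`. Nonnegativity is `klFun ≥ 0` on `[0, ∞)`.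
-/

open Real Set InformationTheory

theorem mul_sub_exp_sub_one_le_klFun {t : ℝ} (ht : 0 ≤ t) (x : ℝ) :
    t * x - (exp x - 1) ≤ klFun t := by
  rcases ht.eq_or_lt with rfl | ht
  · simp [klFun_zero, (exp_pos x).le]
  · have key := mul_le_mul_of_nonneg_left (add_one_le_exp (x - log t)) ht.le
    rw [exp_sub, exp_log ht, mul_div_cancel₀ _ ht.ne'] at key
    rw [klFun]
    linarith

theorem isLUB_range_mul_sub_exp_sub_one {t : ℝ} (ht : 0 ≤ t) :
    IsLUB (range fun x => t * x - (exp x - 1)) (klFun t) := by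
  have hub : klFun t ∈ upperBounds (range fun x => t * x - (exp x - 1)) := by
    rintro _ ⟨x, rfl⟩
    exact mul_sub_exp_sub_one_le_klFun ht x
  rcases ht.eq_or_lt with rfl | ht
  · rw [klFun_zero] at hub ⊢
    refine ⟨hub, fun b hb => not_lt.1 fun hb1 => ?_⟩
    have hpos : 0 < (1 - b) / 2 := by linarith
    have := hb ⟨log ((1 - b) / 2), rfl⟩
    simp only [zero_mul, zero_sub, exp_log hpos] at this
    linarith
  · refine IsGreatest.isLUB ⟨⟨log t, ?_⟩, hub⟩
    simp only [exp_log ht, klFun]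
    ring

theorem isLUB_range_mul_sub_mul_exp_div_sub_one {s c h : ℝ} (hs : 0 ≤ s) (hc : 0 < c)
    (hh : 0 < h) :
    IsLUB (range fun u => s * u - c * (exp (u / h) - 1)) (c * klFun (h * s / c)) := by
  have hscale : (range fun u => s * u - c * (exp (u / h) - 1)) =
      (c * ·) '' range fun x => h * s / c * x - (exp x - 1) := by
    rw [← (mul_left_surjective₀ hh.ne').range_comp, ← range_comp]
    congr 1
    ext x
    simp only [Function.comp_apply, mul_div_cancel_left₀ _ hh.ne']
    field_simp
  rw [hscale]
  exact (isLUB_range_mul_sub_exp_sub_one (by positivity)).mul_left hc.le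

theorem isLUB_range_sum_apply {ι α : Type*} [Nonempty α] (E : Finset ι) {f : ι → α → ℝ}
    {a : ι → ℝ} (hf : ∀ k ∈ E, IsLUB (range (f k)) (a k)) :
    IsLUB (range fun y : ι → α => ∑ k ∈ E, f k (y k)) (∑ k ∈ E, a k) := by
  refine ⟨?_, fun b hb => le_of_forall_pos_lt_add fun ε hε => ?_⟩
  · rintro _ ⟨y, rfl⟩
    exact Finset.sum_le_sum fun k hk => (hf k hk).1 ⟨y k, rfl⟩
  set δ := ε / (E.card + 1)
  have hδ : 0 < δ := by positivity
  have hnear : ∀ k, ∃ x, k ∈ E → a k - δ < f k x := fun k => by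
    by_cases hk : k ∈ E
    · obtain ⟨_, ⟨x, rfl⟩, hx, -⟩ := (hf k hk).exists_between_sub_self hδ
      exact ⟨x, fun _ => hx⟩
    · exact ⟨Classical.arbitrary α, fun h => absurd h hk⟩
  choose y hy using hnear
  have hcard : E.card * δ < ε := by
    rw [mul_div_assoc', div_lt_iff₀ (by positivity)]
    linarith
  calc ∑ k ∈ E, a k = ∑ k ∈ E, (a k - δ) + E.card * δ := by
        simp [Finset.sum_sub_distrib]
    _ ≤ b + E.card * δ := by
        gcongr
        exact le_trans (Finset.sum_le_sum fun k hk => (hy k hk).le) (hb ⟨y, rfl⟩)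
    _ < b + ε := by linarith

theorem sum_mul_eq_sum_erase_mul_sub {ι : Type*} [Fintype ι] [DecidableEq ι] {s : ι → ℝ}
    (hsum : ∑ k, s k = 0) (i : ι) (φ : ι → ℝ) :
    ∑ k, s k * φ k = ∑ k ∈ Finset.univ.erase i, s k * (φ k - φ i) := by
  rw [Finset.sum_erase _ (by simp)]
  simp [mul_sub, Finset.sum_sub_distrib, ← Finset.sum_mul, hsum]

theorem range_sum_mul_sub_legG {n : ℕ} (i : Fin n) (h : ℝ) (c s : Fin n → ℝ)
    (hsum : ∑ k, s k = 0) :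
    (range fun φ : Fin n → ℝ => (∑ k, s k * φ k) - legG h i c φ) =
      range fun u : Fin n → ℝ =>
        ∑ k ∈ Finset.univ.erase i, (s k * u k - c k * (exp (u k / h) - 1)) := by
  have hobj : ∀ φ : Fin n → ℝ, (∑ k, s k * φ k) - legG h i c φ =
      ∑ k ∈ Finset.univ.erase i, (s k * (φ k - φ i) - c k * (exp ((φ k - φ i) / h) - 1)) := by
    intro φ
    rw [sum_mul_eq_sum_erase_mul_sub hsum i, legG, Finset.sum_sub_distrib]
  ext v
  constructor
  · rintro ⟨φ, rfl⟩
    exact ⟨fun k => φ k - φ i, (hobj φ).symm⟩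
  · rintro ⟨u, rfl⟩
    refine ⟨Function.update u i 0, (hobj _).trans (Finset.sum_congr rfl fun k hk => ?_)⟩
    simp [Function.update_of_ne (Finset.ne_of_mem_erase hk)]

theorem legendre_transform_value_general
    {n : ℕ} (i : Fin n) (h : ℝ) (hh : 0 < h)
    (c : Fin n → ℝ) (hc : ∀ k, k ≠ i → 0 < c k)
    (s : Fin n → ℝ) (hs0 : ∀ k, k ≠ i → 0 ≤ s k) (hsum : ∑ k, s k = 0) :
    IsLUB (Set.range fun φ : Fin n → ℝ => (∑ k, s k * φ k) - legG h i c φ)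
        (∑ k ∈ Finset.univ.erase i,
          c k * ((h * s k / c k) * Real.log (h * s k / c k) - h * s k / c k + 1)) ∧
    0 ≤ ∑ k ∈ Finset.univ.erase i,
          c k * ((h * s k / c k) * Real.log (h * s k / c k) - h * s k / c k + 1) := by
  have hcE k (hk : k ∈ Finset.univ.erase i) := hc k (Finset.ne_of_mem_erase hk)
  have hsE k (hk : k ∈ Finset.univ.erase i) := hs0 k (Finset.ne_of_mem_erase hk)
  have hklFun : ∀ k ∈ Finset.univ.erase i,
      c k * ((h * s k / c k) * log (h * s k / c k) - h * s k / c k + 1) =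
        c k * klFun (h * s k / c k) := fun k _ => by rw [klFun]; ring
  rw [Finset.sum_congr rfl hklFun, range_sum_mul_sub_legG i h c s hsum]
  refine ⟨?_, Finset.sum_nonneg fun k hk => ?_⟩
  · refine isLUB_range_sum_apply (f := fun k u => s k * u - c k * (exp (u / h) - 1)) _
      fun k hk => ?_
    exact isLUB_range_mul_sub_mul_exp_div_sub_one (hsE k hk) (hcE k hk) hh
  · exact mul_nonneg (hcE k hk).le
      (klFun_nonneg (div_nonneg (mul_nonneg hh.le (hsE k hk)) (hcE k hk).le))

/-- If `c_k > 0` for all `k ≠ i`, `s_k ≥ 0` for all `k ≠ i` and `Σ s_k = 0`, then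
the Legendre transform `sup_φ (Σ s_k φ_k − G(φ))` equals
`Σ_{k ≠ i} c_k·((h s_k/c_k)·log(h s_k/c_k) − h s_k/c_k + 1)`
(with `0·log 0 = 0`, which holds by convention for `Real.log 0 = 0`); this value is
a finite least upper bound and it is nonnegative. -/
theorem legendre_transform_value
    {n : ℕ} (hn : 2 ≤ n) (i : Fin n) (h : ℝ) (hh : 0 < h)
    (c : Fin n → ℝ) (hc : ∀ k, k ≠ i → 0 < c k)
    (s : Fin n → ℝ) (hs0 : ∀ k, k ≠ i → 0 ≤ s k) (hsum : ∑ k, s k = 0) :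
    IsLUB (Set.range fun φ : Fin n → ℝ => (∑ k, s k * φ k) - legG h i c φ)
        (∑ k ∈ Finset.univ.erase i,
          c k * ((h * s k / c k) * Real.log (h * s k / c k) - h * s k / c k + 1)) ∧
    0 ≤ ∑ k ∈ Finset.univ.erase i,
          c k * ((h * s k / c k) * Real.log (h * s k / c k) - h * s k / c k + 1) :=
  legendre_transform_value_general i h hh c hc s hs0 hsum
end
end

section
/- Let u_h solve the discrete Hamilton–Jacobi equation with initial datum f : Ω_h → ℝ, let x_l ∈ Ω_h and t > 0. Then for every admissible control pair (v, p) one has the lower bound u_h(x_l, t) ≥ Σ_{x ∈ Ω_h} f(x)·p(t, x) − ∫₀ᵗ Σ_{x ∈ Ω_h} L_h(x, v(s, ·, ·))·p(s, x) ds. -/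
open scoped Classical BigOperators
open MeasureTheory

noncomputable section

/-- Off-diagonal transition kernel: `Φ(x,y) = Φⱼ⁺(x)` if `y = x + νⱼ·h`,
`Φⱼ⁻(x)` if `y = x − νⱼ·h`, and `0` otherwise (assuming the signed reaction
vectors are pairwise distinct). -/
def kerOff {N M : ℕ} (h : ℝ) (ν : Fin M → Fin N → ℤ)
    (Φp Φm : Fin M → (Fin N → ℝ) → ℝ) (x y : Fin N → ℝ) : ℝ :=
  ∑ j : Fin M,
    ((if y = shiftPt h x (ν j) then Φp j x else 0)
      + (if y = shiftPt h x (-(ν j)) then Φm j x else 0))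

/-- The kernel `Φ : Ω_h × Ω_h → ℝ`, with the diagonal
`Φ(x,x) = −Σ_{y ∈ Ω_h, y ≠ x} Φ(x,y)`. -/
def kernel {N M : ℕ} (h : ℝ) (Ωh : Finset (Fin N → ℝ)) (ν : Fin M → Fin N → ℤ)
    (Φp Φm : Fin M → (Fin N → ℝ) → ℝ) (x y : Fin N → ℝ) : ℝ :=
  if y = x then -∑ z ∈ Ωh.erase x, kerOff h ν Φp Φm x z
  else kerOff h ν Φp Φm x y

/-- The discrete Lagrangian
`L_h(x,w) = Σ_{y ∈ Ω_h ∩ {x ± νⱼ·h}} Φ(x,y)·(w(x,y)·log w(x,y) − w(x,y) + 1)`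
(the convention `0·log 0 = 0` holds since `Real.log 0 = 0`). -/
def discLag {N M : ℕ} (h : ℝ) (Ωh : Finset (Fin N → ℝ)) (ν : Fin M → Fin N → ℤ)
    (Φp Φm : Fin M → (Fin N → ℝ) → ℝ) (x : Fin N → ℝ)
    (w : (Fin N → ℝ) → (Fin N → ℝ) → ℝ) : ℝ :=
  ∑ j : Fin M,
    ((if shiftPt h x (ν j) ∈ Ωh then
        kernel h Ωh ν Φp Φm x (shiftPt h x (ν j)) *
          (w x (shiftPt h x (ν j)) * Real.log (w x (shiftPt h x (ν j)))
            - w x (shiftPt h x (ν j)) + 1) else 0)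
      + (if shiftPt h x (-(ν j)) ∈ Ωh then
        kernel h Ωh ν Φp Φm x (shiftPt h x (-(ν j))) *
          (w x (shiftPt h x (-(ν j))) * Real.log (w x (shiftPt h x (-(ν j))))
            - w x (shiftPt h x (-(ν j))) + 1) else 0))

/-- An admissible control pair `(v, p)` for the optimal-control representation of
the solution of the discrete HJE, started from `x_l` on the time horizon `[0,t]`. -/
def Admissible {N M : ℕ} (h : ℝ) (Ωh : Finset (Fin N → ℝ)) (ν : Fin M → Fin N → ℤ)
    (Φp Φm : Fin M → (Fin N → ℝ) → ℝ) (xl : Fin N → ℝ) (t : ℝ)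
    (v : ℝ → (Fin N → ℝ) → (Fin N → ℝ) → ℝ) (p : ℝ → (Fin N → ℝ) → ℝ) : Prop :=
  (∀ x y : Fin N → ℝ, ContinuousOn (fun s => v s x y) (Set.Icc 0 t)) ∧
  (∀ x : Fin N → ℝ, p 0 x = if x = xl then 1 else 0) ∧
  (∀ s ∈ Set.Icc (0:ℝ) t, ∀ x : Fin N → ℝ, 0 ≤ p s x) ∧
  (∀ s ∈ Set.Icc (0:ℝ) t, ∀ x y : Fin N → ℝ, y ≠ x → 0 ≤ v s x y) ∧
  (∀ s ∈ Set.Icc (0:ℝ) t, ∀ x ∈ Ωh,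
    ∑ y ∈ Ωh, v s x y * kernel h Ωh ν Φp Φm x y = 0) ∧
  (∀ x ∈ Ωh, ∀ s ∈ Set.Icc (0:ℝ) t,
    HasDerivWithinAt (fun τ => p τ x)
      ((1 / h) * ∑ y ∈ Ωh,
        (v s y x * kernel h Ωh ν Φp Φm y x * p s y
          - v s x y * kernel h Ωh ν Φp Φm x y * p s x))
      (Set.Icc 0 t) s)

/-!
Along an admissible pair, consider the pairing `s ↦ ∑ₓ u(x, t - s) p(s, x)`, which equals
`u(x_l, t)` at `s = 0` and `∑ₓ f(x) p(t, x)` at `s = t`. Its derivative is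
`∑ₓ (u · ∂ₛp - H_h u · p)`. Summation by parts turns `∑ₓ u · ∂ₛp` into
`∑ₓ p(x) ∑_y v(x,y) Φ(x,y) (u(y) - u(x)) / h`, and the Fenchel–Young inequality
`w a ≤ (eᵃ - 1) + (w log w - w + 1)` bounds each term by `p(x) (H_h u(x) + L_h(x, v))`.
Hence the derivative is at most the running cost `∑ₓ L_h(x, v) p(x)`, and integrating over
`[0, t]` gives the bound.
-/

open Finset InformationTheory

theorem Real.mul_le_exp_sub_one_add_klFun {w : ℝ} (hw : 0 ≤ w) (a : ℝ) :
    w * a ≤ (Real.exp a - 1) + klFun w := by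
  rcases hw.eq_or_lt with rfl | hw
  · simp [klFun_zero, (Real.exp_pos a).le]
  · have h := Real.add_one_le_exp (a - Real.log w)
    rw [Real.exp_sub, Real.exp_log hw, le_div_iff₀ hw] at h
    rw [klFun_apply]
    linarith

theorem Finset.sum_mul_sum_sub_comm {α R : Type*} [CommRing R] (S : Finset α) (g : α → R)
    (c : α → α → R) :
    ∑ x ∈ S, g x * ∑ y ∈ S, (c y x - c x y) = ∑ x ∈ S, ∑ y ∈ S, c x y * (g y - g x) := by
  simp only [mul_sum, mul_sub, sum_sub_distrib]
  rw [sum_comm (f := fun x y => g x * c y x)]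
  simp only [mul_comm]

theorem hasDerivAt_sum_comp_sub_mul {α : Type*} (S : Finset α) {u : α → ℝ → ℝ} {u' : α → ℝ}
    {p : ℝ → α → ℝ} {p' : α → ℝ} {t s : ℝ}
    (hu : ∀ x ∈ S, HasDerivAt (u x) (u' x) (t - s))
    (hp : ∀ x ∈ S, HasDerivAt (fun τ => p τ x) (p' x) s) :
    HasDerivAt (fun τ => ∑ x ∈ S, u x (t - τ) * p τ x)
      (∑ x ∈ S, (-u' x * p s x + u x (t - s) * p' x)) s := by
  refine HasDerivAt.fun_sum fun x hx => ?_
  simpa [neg_mul] using ((hu x hx).comp_const_sub t s).fun_mul (hp x hx)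

section Grid

variable {N M : ℕ} {h : ℝ} {ν : Fin M → Fin N → ℤ} {Φp Φm : Fin M → (Fin N → ℝ) → ℝ}

theorem shiftPt_injective (hh : h ≠ 0) (x : Fin N → ℝ) : Function.Injective (shiftPt h x) := by
  intro μ ρ hμρ
  funext k
  have hk := congrFun hμρ k
  simp only [shiftPt, add_right_inj, mul_left_inj' hh] at hk
  exact_mod_cast hk

theorem shiftPt_ne_self (hh : h ≠ 0) (x : Fin N → ℝ) {μ : Fin N → ℤ} (hμ : μ ≠ 0) :
    shiftPt h x μ ≠ x := by
  have h0 : shiftPt h x 0 = x := by funext k; simp [shiftPt]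
  simpa [h0] using (shiftPt_injective hh x).ne hμ

theorem kerOff_nonneg {x : Fin N → ℝ} (hp : ∀ j, 0 ≤ Φp j x) (hm : ∀ j, 0 ≤ Φm j x)
    (y : Fin N → ℝ) : 0 ≤ kerOff h ν Φp Φm x y :=
  sum_nonneg fun j _ => add_nonneg (by split_ifs <;> simp [hp j]) (by split_ifs <;> simp [hm j])

theorem kerOff_shiftPt (hh : h ≠ 0)
    (hsep : Function.Injective (Sum.elim ν (fun j => -(ν j)) : Fin M ⊕ Fin M → Fin N → ℤ))
    (x : Fin N → ℝ) (i : Fin M ⊕ Fin M) :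
    kerOff h ν Φp Φm x (shiftPt h x (Sum.elim ν (fun j => -(ν j)) i)) = Sum.elim Φp Φm i x := by
  have hsum : ∀ y, kerOff h ν Φp Φm x y = ∑ i, if y = shiftPt h x (Sum.elim ν (fun j => -(ν j)) i)
      then Sum.elim Φp Φm i x else 0 := by
    intro y
    simp only [kerOff, Fintype.sum_sum_type, Sum.elim_inl, Sum.elim_inr, sum_add_distrib]
    rfl
  rw [hsum]
  simp only [(shiftPt_injective hh x).eq_iff, hsep.eq_iff]
  simp

theorem sum_erase_kerOff_mul (hh : h ≠ 0) (Ωh : Finset (Fin N → ℝ)) (hν0 : ∀ j, ν j ≠ 0)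
    (x : Fin N → ℝ) (g : (Fin N → ℝ) → ℝ) :
    ∑ y ∈ Ωh.erase x, kerOff h ν Φp Φm x y * g y
      = ∑ j : Fin M,
          ((if shiftPt h x (ν j) ∈ Ωh then Φp j x * g (shiftPt h x (ν j)) else 0)
            + (if shiftPt h x (-(ν j)) ∈ Ωh then
                Φm j x * g (shiftPt h x (-(ν j))) else 0)) := by
  simp only [kerOff, sum_mul, add_mul, ite_mul, zero_mul]
  rw [sum_comm]
  refine sum_congr rfl fun j _ => ?_
  rw [sum_add_distrib, sum_ite_eq', sum_ite_eq']
  simp [mem_erase, shiftPt_ne_self hh x (hν0 j), shiftPt_ne_self hh x (neg_ne_zero.2 (hν0 j))]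

theorem discHam_eq_sum_erase (hh : h ≠ 0) (Ωh : Finset (Fin N → ℝ)) (hν0 : ∀ j, ν j ≠ 0)
    (U : (Fin N → ℝ) → ℝ) (x : Fin N → ℝ) :
    discHam h Ωh ν Φp Φm U x
      = ∑ y ∈ Ωh.erase x, kerOff h ν Φp Φm x y * (Real.exp ((U y - U x) / h) - 1) := by
  rw [sum_erase_kerOff_mul hh Ωh hν0 x]
  rfl

theorem discLag_eq_sum_erase (hh : h ≠ 0) (Ωh : Finset (Fin N → ℝ))
    (hsep : Function.Injective (Sum.elim ν (fun j => -(ν j)) : Fin M ⊕ Fin M → Fin N → ℤ))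
    (hν0 : ∀ j, ν j ≠ 0) (x : Fin N → ℝ) (w : (Fin N → ℝ) → (Fin N → ℝ) → ℝ) :
    discLag h Ωh ν Φp Φm x w = ∑ y ∈ Ωh.erase x, kerOff h ν Φp Φm x y * klFun (w x y) := by
  rw [sum_erase_kerOff_mul hh Ωh hν0 x]
  refine sum_congr rfl fun j _ => ?_
  have hpos := kerOff_shiftPt (Φp := Φp) (Φm := Φm) hh hsep x (.inl j)
  have hneg := kerOff_shiftPt (Φp := Φp) (Φm := Φm) hh hsep x (.inr j)
  simp only [Sum.elim_inl, Sum.elim_inr] at hpos hneg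
  rw [kernel, if_neg (shiftPt_ne_self hh x (hν0 j)), kernel,
    if_neg (shiftPt_ne_self hh x (neg_ne_zero.2 (hν0 j))), hpos, hneg]
  simp only [klFun_apply]
  congr 2 <;> ring

theorem continuousOn_discLag (Ωh : Finset (Fin N → ℝ)) (x : Fin N → ℝ) {I : Set ℝ}
    {v : ℝ → (Fin N → ℝ) → (Fin N → ℝ) → ℝ} (hv : ∀ y, ContinuousOn (fun s => v s x y) I) :
    ContinuousOn (fun s => discLag h Ωh ν Φp Φm x (v s)) I := by
  have hkl : ∀ a : ℝ, a * Real.log a - a + 1 = klFun a := fun a => by rw [klFun_apply]; ring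
  simp only [discLag, hkl]
  refine continuousOn_finsetSum _ fun j _ => ContinuousOn.add ?_ ?_
  · by_cases hc : shiftPt h x (ν j) ∈ Ωh <;> simp only [hc, ite_true, ite_false] <;> fun_prop
  · by_cases hc : shiftPt h x (-(ν j)) ∈ Ωh <;> simp only [hc, ite_true, ite_false] <;> fun_prop

theorem sum_kernel_mul_le_discHam_add_discLag (hh : h ≠ 0) {Ωh : Finset (Fin N → ℝ)}
    (hsep : Function.Injective (Sum.elim ν (fun j => -(ν j)) : Fin M ⊕ Fin M → Fin N → ℤ))
    (hν0 : ∀ j, ν j ≠ 0) {x : Fin N → ℝ} (hx : x ∈ Ωh)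
    (hp : ∀ j, 0 ≤ Φp j x) (hm : ∀ j, 0 ≤ Φm j x)
    {w : (Fin N → ℝ) → (Fin N → ℝ) → ℝ} (hw : ∀ y, y ≠ x → 0 ≤ w x y) (U : (Fin N → ℝ) → ℝ) :
    ∑ y ∈ Ωh, w x y * kernel h Ωh ν Φp Φm x y * ((U y - U x) / h)
      ≤ discHam h Ωh ν Φp Φm U x + discLag h Ωh ν Φp Φm x w := by
  rw [discHam_eq_sum_erase hh Ωh hν0, discLag_eq_sum_erase hh Ωh hsep hν0,
    ← sum_add_distrib, ← sum_erase_add Ωh _ hx, sub_self, zero_div, mul_zero, add_zero]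
  refine sum_le_sum fun y hy => ?_
  have hyx : y ≠ x := ne_of_mem_erase hy
  rw [kernel, if_neg hyx]
  have young := Real.mul_le_exp_sub_one_add_klFun (hw y hyx) ((U y - U x) / h)
  linarith [mul_le_mul_of_nonneg_left young (kerOff_nonneg (h := h) (ν := ν) hp hm y)]

theorem sum_transport_sub_discHam_le_discLag (hh : h ≠ 0) {Ωh : Finset (Fin N → ℝ)}
    (hsep : Function.Injective (Sum.elim ν (fun j => -(ν j)) : Fin M ⊕ Fin M → Fin N → ℤ))
    (hν0 : ∀ j, ν j ≠ 0) (hΦ : ∀ x ∈ Ωh, (∀ j, 0 ≤ Φp j x) ∧ ∀ j, 0 ≤ Φm j x)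
    {w : (Fin N → ℝ) → (Fin N → ℝ) → ℝ} (hw : ∀ x y, y ≠ x → 0 ≤ w x y)
    {q : (Fin N → ℝ) → ℝ} (hq : ∀ x, 0 ≤ q x) (U : (Fin N → ℝ) → ℝ) :
    ∑ x ∈ Ωh, (-discHam h Ωh ν Φp Φm U x * q x + U x * ((1 / h) * ∑ y ∈ Ωh,
        (w y x * kernel h Ωh ν Φp Φm y x * q y - w x y * kernel h Ωh ν Φp Φm x y * q x)))
      ≤ ∑ x ∈ Ωh, discLag h Ωh ν Φp Φm x w * q x := by
  have transport : ∑ x ∈ Ωh, U x * ((1 / h) * ∑ y ∈ Ωh,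
        (w y x * kernel h Ωh ν Φp Φm y x * q y - w x y * kernel h Ωh ν Φp Φm x y * q x))
      = ∑ x ∈ Ωh, q x * ∑ y ∈ Ωh, w x y * kernel h Ωh ν Φp Φm x y * ((U y - U x) / h) := by
    simp only [mul_left_comm (U _), ← mul_sum, sum_mul_sum_sub_comm]
    simp only [mul_sum]
    refine sum_congr rfl fun x _ => sum_congr rfl fun y _ => ?_
    ring
  rw [sum_add_distrib, transport, ← sum_add_distrib]
  refine sum_le_sum fun x hx => ?_
  have key := sum_kernel_mul_le_discHam_add_discLag hh hsep hν0 hx (hΦ x hx).1 (hΦ x hx).2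
    (hw x) U
  linarith [mul_le_mul_of_nonneg_left key (hq x)]

end Grid

theorem discrete_HJE_variational_lower_bound_general
    {N M : ℕ}
    (h : ℝ) (hh : 0 < h)
    (Ω : Set (Fin N → ℝ))
    (ν : Fin M → Fin N → ℤ)
    (Φp Φm : Fin M → (Fin N → ℝ) → ℝ)
    (hΦp0 : ∀ j, ∀ x ∈ closure Ω, 0 ≤ Φp j x)
    (hΦm0 : ∀ j, ∀ x ∈ closure Ω, 0 ≤ Φm j x)
    (Ωh : Finset (Fin N → ℝ))
    (hΩh : ∀ x : Fin N → ℝ,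
      x ∈ Ωh ↔ ((∃ i : Fin N → ℕ, ∀ k, x k = (i k : ℝ) * h) ∧ x ∈ closure Ω))
    (hsep : Function.Injective
      (Sum.elim ν (fun j => -(ν j)) : Fin M ⊕ Fin M → Fin N → ℤ))
    (hν0 : ∀ j, ν j ≠ 0)
    (f : (Fin N → ℝ) → ℝ) (u : (Fin N → ℝ) → ℝ → ℝ)
    (hu : solvesDHJ h Ωh ν Φp Φm f u)
    (xl : Fin N → ℝ) (hxl : xl ∈ Ωh) (t : ℝ) (ht : 0 < t)
    (v : ℝ → (Fin N → ℝ) → (Fin N → ℝ) → ℝ) (p : ℝ → (Fin N → ℝ) → ℝ)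
    (hvp : Admissible h Ωh ν Φp Φm xl t v p) :
    (∑ x ∈ Ωh, f x * p t x)
        - ∫ s in (0:ℝ)..t, ∑ x ∈ Ωh, discLag h Ωh ν Φp Φm x (v s) * p s x
      ≤ u xl t := by
  obtain ⟨hu0, hu', -⟩ := hu
  obtain ⟨hvc, hp0, hp_nonneg, hv_nonneg, -, hp'⟩ := hvp
  have hΦ : ∀ x ∈ Ωh, (∀ j, 0 ≤ Φp j x) ∧ ∀ j, 0 ≤ Φm j x := fun x hx =>
    ⟨fun j => hΦp0 j x ((hΩh x).1 hx).2, fun j => hΦm0 j x ((hΩh x).1 hx).2⟩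
  have hp_cont (x) (hx : x ∈ Ωh) : ContinuousOn (fun s => p s x) (Set.Icc 0 t) :=
    fun s hs => (hp' x hx s hs).continuousWithinAt
  have hu_cont (x) (hx : x ∈ Ωh) : ContinuousOn (fun s => u x (t - s)) (Set.Icc 0 t) := by
    have hux : ContinuousOn (u x) (Set.Ici 0) := fun τ hτ => (hu' x hx τ hτ).continuousWithinAt
    exact hux.comp (by fun_prop) fun s hs => sub_nonneg.2 hs.2
  have cost_cont : ContinuousOn (fun s => ∑ x ∈ Ωh, discLag h Ωh ν Φp Φm x (v s) * p s x)
      (Set.Icc 0 t) :=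
    continuousOn_finsetSum _ fun x hx => (continuousOn_discLag Ωh x (hvc x)).mul (hp_cont x hx)
  have key := intervalIntegral.sub_le_integral_of_hasDeriv_right_of_le
    (g := fun s => ∑ x ∈ Ωh, u x (t - s) * p s x) ht.le
    (continuousOn_finsetSum _ fun x hx => (hu_cont x hx).mul (hp_cont x hx))
    (fun s hs => (hasDerivAt_sum_comp_sub_mul Ωh
      (fun x hx => (hu' x hx _ (sub_pos.2 hs.2).le).hasDerivAt (Ici_mem_nhds (sub_pos.2 hs.2)))
      (fun x hx => (hp' x hx s (Set.Ioo_subset_Icc_self hs)).hasDerivAt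
        (Icc_mem_nhds hs.1 hs.2))).hasDerivWithinAt)
    cost_cont.integrableOn_Icc
    (fun s hs => sum_transport_sub_discHam_le_discLag hh.ne' hsep hν0 hΦ
      (hv_nonneg s (Set.Ioo_subset_Icc_self hs)) (hp_nonneg s (Set.Ioo_subset_Icc_self hs)) _)
  simp only [sub_self, sub_zero, hp0] at key
  rw [sum_congr rfl fun x hx => by rw [hu0 x hx]] at key
  simp only [mul_ite, mul_one, mul_zero, sum_ite_eq', hxl, if_true] at key
  linarith

/-- **Lower bound in the variational representation**: the solution of the
discrete HJE dominates the payoff of every admissible control pair. -/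
theorem discrete_HJE_variational_lower_bound
    {N M : ℕ} (hN : 0 < N) (hM : 0 < M)
    (h : ℝ) (hh : 0 < h)
    (Ω : Set (Fin N → ℝ)) (hΩo : IsOpen Ω) (hΩne : Ω.Nonempty)
    (hΩbd : Bornology.IsBounded Ω)
    (hΩpos : closure Ω ⊆ {x : Fin N → ℝ | ∀ k, 0 < x k})
    (ν : Fin M → Fin N → ℤ)
    (Φp Φm : Fin M → (Fin N → ℝ) → ℝ)
    (hΦpc : ∀ j, ContinuousOn (Φp j) (closure Ω))
    (hΦmc : ∀ j, ContinuousOn (Φm j) (closure Ω))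
    (hΦp0 : ∀ j, ∀ x ∈ closure Ω, 0 ≤ Φp j x)
    (hΦm0 : ∀ j, ∀ x ∈ closure Ω, 0 ≤ Φm j x)
    (Ωh : Finset (Fin N → ℝ))
    (hΩh : ∀ x : Fin N → ℝ,
      x ∈ Ωh ↔ ((∃ i : Fin N → ℕ, ∀ k, x k = (i k : ℝ) * h) ∧ x ∈ closure Ω))
    (hne : Ωh.Nonempty)
    (hsep : Function.Injective
      (Sum.elim ν (fun j => -(ν j)) : Fin M ⊕ Fin M → Fin N → ℤ))
    (hν0 : ∀ j, ν j ≠ 0)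
    (f : (Fin N → ℝ) → ℝ) (u : (Fin N → ℝ) → ℝ → ℝ)
    (hu : solvesDHJ h Ωh ν Φp Φm f u)
    (xl : Fin N → ℝ) (hxl : xl ∈ Ωh) (t : ℝ) (ht : 0 < t)
    (v : ℝ → (Fin N → ℝ) → (Fin N → ℝ) → ℝ) (p : ℝ → (Fin N → ℝ) → ℝ)
    (hvp : Admissible h Ωh ν Φp Φm xl t v p) :
    (∑ x ∈ Ωh, f x * p t x)
        - ∫ s in (0:ℝ)..t, ∑ x ∈ Ωh, discLag h Ωh ν Φp Φm x (v s) * p s x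
      ≤ u xl t :=
  discrete_HJE_variational_lower_bound_general h hh Ω ν Φp Φm hΦp0 hΦm0 Ωh hΩh hsep hν0 f u hu xl
    hxl t ht v p hvp
end
end

section
/- Fix t > 0 and α ∈ [a, b]. (Existence) There exists a triple (η, v, l), with v ∈ L¹_loc([0,∞); ℝ) and (η, l) solving the Skorokhod problem on [a, b] with driver v and initial point α, such that ∫₀ᵗ L̃(η(s), v(s)) ds = 0. (Uniqueness) If (η, v, l) and (η̃, ṽ, l̃) are two such triples, each solving the Skorokhod problem on [a, b] with initial point α and having zero action ∫₀ᵗ L̃(η(s), v(s)) ds = 0 = ∫₀ᵗ L̃(η̃(s), ṽ(s)) ds, then η(s) = η̃(s) for all s ∈ [0, t]. -/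
/-!
`L̃(x, ·)` is the convex conjugate of `H̃(x, ·)`, which vanishes at `p = 0` with slope
`β(x) = Φ̃⁺(x) − Φ̃⁻(x)` there; hence `L̃ ≥ 0`, with equality exactly at the drift `w = β(x)`.
Zero action thus means `v = β(η)` a.e. on `[0, t]`: `η` solves the ODE `η' = β(η)` reflected at
the endpoints of `[a, b]`, with `β` Lipschitz.

Existence: solve `ξ' = β(π ξ)` on `ℝ`, where `π` is the projection onto `[a, b]`. The field is
constant outside `[a, b]`, so once `ξ` leaves the interval it moves away at constant speed and
never returns; `η = π ξ` then solves the Skorokhod problem, `l` being the outward drift while `ξ`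
is outside.

Uniqueness: for two solutions, `D = η − η'` is the primitive of an integrable `G` with
`G D ≤ K D²` a.e., because `β` is `K`-Lipschitz and the reflection terms are monotone
(`l n(η) (η − η') ≥ 0`). So `D² e^{−2Ks}` is absolutely continuous with a.e. nonpositive
derivative, and `D ≡ 0`.
-/

open MeasureTheory

noncomputable section

/-- The outward "normal" of the interval `[a, b]`: `−1` at `a`, `1` at `b`
(and `0` in the interior, where the reflection term vanishes anyway). -/
def bdryNormal (a b x : ℝ) : ℝ := if x = a then -1 else if x = b then 1 else 0

/-- `(η, l)` solves the Skorokhod problem on `[a, b]` with driver `v` and initial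
point `α`: `η` is (locally absolutely) continuous with `η(0) = α`, given in
integral form by `η(s) = α + ∫₀ˢ (v − l·n(η))`, stays in `[a, b]`, `l ≥ 0` a.e.,
and `l = 0` a.e. on `{a < η < b}`. -/
def SkorokhodSol (a b α : ℝ) (v η l : ℝ → ℝ) : Prop :=
  η 0 = α ∧
  (∀ s ∈ Set.Ici (0:ℝ), η s ∈ Set.Icc a b) ∧
  MeasureTheory.LocallyIntegrableOn l (Set.Ici 0) MeasureTheory.volume ∧
  (∀ᵐ s ∂(MeasureTheory.volume.restrict (Set.Ici (0:ℝ))), 0 ≤ l s) ∧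
  (∀ s ∈ Set.Ici (0:ℝ),
    η s = α + ∫ τ in (0:ℝ)..s, (v τ - l τ * bdryNormal a b (η τ))) ∧
  (∀ᵐ s ∂(MeasureTheory.volume.restrict (Set.Ici (0:ℝ))),
    η s ∈ Set.Ioo a b → l s = 0)

/-- The Hamiltonian `H̃(α,p) = Φ̃⁺(α)(eᵖ−1) + Φ̃⁻(α)(e⁻ᵖ−1)`. -/
def Ham1 (Φp Φm : ℝ → ℝ) (α p : ℝ) : ℝ :=
  Φp α * (Real.exp p - 1) + Φm α * (Real.exp (-p) - 1)

/-- The Lagrangian `L̃(α,w) = sup_p (p·w − H̃(α,p))`. -/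
def Lag1 (Φp Φm : ℝ → ℝ) (α w : ℝ) : ℝ :=
  sSup (Set.range fun p : ℝ => p * w - Ham1 Φp Φm α p)

open Set

theorem Lag1_nonneg (Φp Φm : ℝ → ℝ) (x w : ℝ) : 0 ≤ Lag1 Φp Φm x w :=
  Real.sSup_nonneg' ⟨0, ⟨0, by simp [Ham1]⟩, le_rfl⟩

theorem linear_add_sq_le_Ham1 {Φp Φm : ℝ → ℝ} {x : ℝ} (hp : 0 ≤ Φp x) (hm : 0 ≤ Φm x) (p : ℝ) :
    (Φp x - Φm x) * p + min (Φp x) (Φm x) * p ^ 2 / 2 ≤ Ham1 Φp Φm x p := by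
  have hmin_p := min_le_left (Φp x) (Φm x)
  have hmin_m := min_le_right (Φp x) (Φm x)
  rcases le_total 0 p with h | h
  · have e₁ := Real.quadratic_le_exp_of_nonneg h
    have e₂ := Real.add_one_le_exp (-p)
    unfold Ham1
    nlinarith [mul_le_mul_of_nonneg_right hmin_p (sq_nonneg p), sq_nonneg p]
  · have e₁ := Real.quadratic_le_exp_of_nonneg (neg_nonneg.2 h)
    have e₂ := Real.add_one_le_exp p
    unfold Ham1
    nlinarith [mul_le_mul_of_nonneg_right hmin_m (sq_nonneg p), sq_nonneg p]

theorem bddAbove_range_Lag1 {Φp Φm : ℝ → ℝ} {x : ℝ} (hp : 0 < Φp x) (hm : 0 < Φm x) (w : ℝ) :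
    BddAbove (range fun p : ℝ => p * w - Ham1 Φp Φm x p) := by
  set c := min (Φp x) (Φm x)
  have hc : 0 < c := lt_min hp hm
  set d := w - (Φp x - Φm x)
  refine ⟨d ^ 2 / (2 * c), ?_⟩
  rintro _ ⟨p, rfl⟩
  have hH := linear_add_sq_le_Ham1 hp.le hm.le p
  have hsq : p * d - c * p ^ 2 / 2 ≤ d ^ 2 / (2 * c) := by
    rw [le_div_iff₀ (by positivity)]
    nlinarith [sq_nonneg (c * p - d)]
  dsimp only
  linarith

theorem hasDerivAt_mul_sub_Ham1 (Φp Φm : ℝ → ℝ) (x w : ℝ) :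
    HasDerivAt (fun p : ℝ => p * w - Ham1 Φp Φm x p) (w - (Φp x - Φm x)) 0 := by
  have hexp : HasDerivAt (fun p : ℝ => Real.exp p - 1) 1 0 := by
    simpa using (Real.hasDerivAt_exp 0).sub_const 1
  have hexp_neg : HasDerivAt (fun p : ℝ => Real.exp (-p) - 1) (-1) 0 := by
    simpa using ((Real.hasDerivAt_exp (-0)).comp 0 (hasDerivAt_neg 0)).sub_const 1
  have hH := (hexp.const_mul (Φp x)).add (hexp_neg.const_mul (Φm x))
  exact (((hasDerivAt_id 0).mul_const w).sub hH).congr_deriv (by ring)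

theorem Lag1_eq_zero_iff {Φp Φm : ℝ → ℝ} {x : ℝ} (hp : 0 < Φp x) (hm : 0 < Φm x) {w : ℝ} :
    Lag1 Φp Φm x w = 0 ↔ w = Φp x - Φm x := by
  constructor
  · intro h
    have hmax : IsMaxOn (fun p : ℝ => p * w - Ham1 Φp Φm x p) univ 0 := fun p _ => by
      have := le_csSup (bddAbove_range_Lag1 hp hm w) (mem_range_self p)
      simp only [zero_mul, Ham1, sub_self, Real.exp_zero, neg_zero, mul_zero, add_zero]
      exact h ▸ this
    exact sub_eq_zero.1 <|
      (hmax.isLocalMax Filter.univ_mem).hasDerivAt_eq_zero (hasDerivAt_mul_sub_Ham1 Φp Φm x w)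
  · rintro rfl
    refine le_antisymm (Real.sSup_nonpos ?_) (Lag1_nonneg _ _ _ _)
    rintro _ ⟨p, rfl⟩
    have e₁ := Real.add_one_le_exp p
    have e₂ := Real.add_one_le_exp (-p)
    simp only [Ham1]
    nlinarith

theorem exists_forall_hasDerivAt_of_lipschitzWith {E : Type*} [NormedAddCommGroup E]
    [NormedSpace ℝ E] [CompleteSpace E] {f : E → E} {K : NNReal} (hf : LipschitzWith K f)
    (hbdd : Bornology.IsBounded (range f)) (x₀ : E) :
    ∃ ξ : ℝ → E, ξ 0 = x₀ ∧ ∀ s, HasDerivAt ξ (f (ξ s)) s := by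
  obtain ⟨C, hC⟩ := hbdd.exists_norm_le
  have hC0 : 0 ≤ C := (norm_nonneg _).trans (hC _ (mem_range_self x₀))
  -- solutions on the windows `[-(n+1), n+1]`, glued together
  have h0mem : ∀ n : ℕ, (0 : ℝ) ∈ Ioo (-(n + 1 : ℝ)) (n + 1) := fun n => by
    constructor <;> linarith [(n.cast_nonneg : (0 : ℝ) ≤ n)]
  have hPL : ∀ n : ℕ, IsPicardLindelof (fun _ => f) (tmin := -(n + 1)) (tmax := n + 1)
      ⟨0, Ioo_subset_Icc_self (h0mem n)⟩ x₀ (⟨C, hC0⟩ * (n + 1)) 0 ⟨C, hC0⟩ K := fun n =>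
    .of_time_independent (fun x _ => hC _ (mem_range_self x)) hf.lipschitzOnWith
      (by simp; norm_cast)
  choose F hF0 hF using fun n => (hPL n).exists_eq_forall_mem_Icc_hasDerivWithinAt₀
  have hFderiv : ∀ n : ℕ, ∀ s ∈ Ioo (-(n + 1) : ℝ) (n + 1), HasDerivAt (F n) (f (F n s)) s :=
    fun n s hs => (hF n s (Ioo_subset_Icc_self hs)).hasDerivAt (Icc_mem_nhds hs.1 hs.2)
  have hmono : ∀ n m : ℕ, n ≤ m → EqOn (F n) (F m) (Ioo (-(n + 1) : ℝ) (n + 1)) := by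
    intro n m hnm
    have hnm' : (n : ℝ) + 1 ≤ m + 1 := by exact_mod_cast Nat.succ_le_succ hnm
    exact ODE_solution_unique_of_mem_Ioo (s := fun _ => univ) (fun _ _ => hf.lipschitzOnWith)
      (h0mem n)
      (fun s hs => ⟨hFderiv n s hs, trivial⟩)
      (fun s hs => ⟨hFderiv m s ⟨by linarith [hs.1], by linarith [hs.2]⟩, trivial⟩)
      (by rw [hF0, hF0])
  have hagree : ∀ n m : ℕ, ∀ s ∈ Ioo (-(n + 1) : ℝ) (n + 1), s ∈ Ioo (-(m + 1) : ℝ) (m + 1) →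
      F n s = F m s := fun n m s hn hm =>
    (le_total n m).elim (fun h => hmono n m h hn) (fun h => (hmono m n h hm).symm)
  have hwindow : ∀ s : ℝ, s ∈ Ioo (-(⌈|s|⌉₊ + 1) : ℝ) (⌈|s|⌉₊ + 1) := fun s =>
    ⟨by linarith [neg_abs_le s, Nat.le_ceil |s|], by linarith [le_abs_self s, Nat.le_ceil |s|]⟩
  refine ⟨fun s => F ⌈|s|⌉₊ s, by simpa using hF0 0, fun s => ?_⟩
  have hloc : (fun τ => F ⌈|τ|⌉₊ τ) =ᶠ[nhds s] F ⌈|s|⌉₊ :=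
    Filter.eventually_of_mem (Ioo_mem_nhds (hwindow s).1 (hwindow s).2)
      fun τ hτ => hagree _ _ τ (hwindow τ) hτ
  simpa only [hloc.eq_of_nhds] using (hFderiv _ s (hwindow s)).congr_of_eventuallyEq hloc

theorem locallyIntegrable_indicator_comp {β ξ : ℝ → ℝ} (hβ : Continuous β) (hξ : Continuous ξ)
    {S : Set ℝ} (hS : MeasurableSet S) :
    LocallyIntegrable (fun τ => S.indicator β (ξ τ)) volume := by
  have h := ((hβ.comp hξ).locallyIntegrable (μ := volume)).indicator (hξ.measurable hS)
  rwa [show (ξ ⁻¹' S).indicator (β ∘ ξ) = fun τ => S.indicator β (ξ τ) from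
    funext fun τ => indicator_comp_right ξ] at h

section FieldConstantAbove

variable {β ξ : ℝ → ℝ} {b : ℝ} (hξ : ∀ s, HasDerivAt ξ (β (ξ s)) s)
  (hβ : ∀ x, b ≤ x → β x = β b)
include hξ hβ

theorem le_of_apply_nonpos (hc : β b ≤ 0) (h0 : ξ 0 ≤ b) {s : ℝ} (hs : 0 ≤ s) : ξ s ≤ b := by
  refine le_of_forall_pos_le_add fun ε hε => ?_
  obtain ⟨δ, hδ, rfl⟩ : ∃ δ > 0, δ * (s + 1) = ε :=
    ⟨ε / (s + 1), by positivity, div_mul_cancel₀ ε (by positivity)⟩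
  -- fence `b + δ (τ + 1)`: at a contact point `ξ > b`, so `ξ' = β b ≤ 0 < δ`
  refine image_le_of_deriv_right_lt_deriv_boundary (a := 0) (b := s)
    (B := fun τ => b + δ * (τ + 1)) (B' := fun _ => δ)
    (HasDerivAt.continuousOn fun τ _ => hξ τ) (fun τ _ => (hξ τ).hasDerivWithinAt)
    (by linarith)
    (fun τ => ((((hasDerivAt_id τ).add_const 1).const_mul δ).const_add b).congr_deriv (by simp))
    (fun τ hτ hcontact => ?_) ⟨hs, le_rfl⟩
  rw [hcontact, hβ _ (by nlinarith [hτ.1])]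
  linarith

theorem eq_add_mul_of_le {K : NNReal} (hK : LipschitzWith K β) (hc : 0 ≤ β b) {s₀ s : ℝ}
    (hb : b ≤ ξ s₀) (hs : s₀ ≤ s) : ξ s = ξ s₀ + β b * (s - s₀) := by
  refine ODE_solution_unique (v := fun _ => β) (g := fun τ => ξ s₀ + β b * (τ - s₀))
    (fun _ => hK) (HasDerivAt.continuousOn fun τ _ => hξ τ) (fun τ _ => (hξ τ).hasDerivWithinAt)
    (by fun_prop) (fun τ hτ => ?_) (by simp) ⟨hs, le_rfl⟩
  show HasDerivWithinAt _ (β (ξ s₀ + β b * (τ - s₀))) _ _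
  rw [hβ (ξ s₀ + β b * (τ - s₀)) (by nlinarith [hτ.1])]
  simpa using (((hasDerivAt_id τ).sub_const s₀).const_mul (β b)).const_add (ξ s₀)
    |>.hasDerivWithinAt

theorem max_sub_eq_integral_indicator {K : NNReal} (hK : LipschitzWith K β) (h0 : ξ 0 ≤ b)
    {s : ℝ} (hs : 0 ≤ s) : max (ξ s - b) 0 = ∫ τ in 0..s, (Ioi b).indicator β (ξ τ) := by
  have hξc : Continuous ξ := continuous_iff_continuousAt.2 fun τ => (hξ τ).continuousAt
  have hint : ∀ u v, IntervalIntegrable (fun τ => (Ioi b).indicator β (ξ τ)) volume u v :=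
    have hloc := locallyIntegrable_indicator_comp hK.continuous hξc (measurableSet_Ioi (a := b))
    fun u v => (hloc.integrableOn_isCompact isCompact_uIcc).intervalIntegrable
  have hzero : ∀ u, 0 ≤ u → (∀ τ ∈ Icc 0 u, ξ τ ≤ b) →
      ∫ τ in 0..u, (Ioi b).indicator β (ξ τ) = 0 := fun u hu h => by
    refine (intervalIntegral.integral_congr (g := fun _ => (0 : ℝ)) fun τ hτ => ?_).trans (by simp)
    exact indicator_of_notMem (not_lt.2 (h τ (uIcc_of_le hu ▸ hτ))) _
  rcases le_or_gt (β b) 0 with hc | hc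
  · rw [max_eq_right (by linarith [le_of_apply_nonpos hξ hβ hc h0 hs]),
      hzero s hs fun τ hτ => le_of_apply_nonpos hξ hβ hc h0 hτ.1]
  have hstay : ∀ τ σ, τ ≤ σ → b < ξ τ → b < ξ σ := fun τ σ hτσ hτ => by
    rw [eq_add_mul_of_le hξ hβ hK hc.le hτ.le hτσ]
    nlinarith
  rcases le_or_gt (ξ s) b with hsb | hsb
  · rw [max_eq_right (by linarith),
      hzero s hs fun τ hτ => not_lt.1 fun h => (hstay τ s hτ.2 h).not_ge hsb]
  obtain ⟨e, he, hξe⟩ : ∃ e ∈ Icc 0 s, ξ e = b :=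
    intermediate_value_Icc hs hξc.continuousOn ⟨h0, hsb.le⟩
  have hafter : ∀ τ, e ≤ τ → ξ τ = b + β b * (τ - e) := fun τ h => by
    rw [eq_add_mul_of_le hξ hβ hK hc.le hξe.ge h, hξe]
  have hexit : ∫ τ in e..s, (Ioi b).indicator β (ξ τ) = ∫ _ in e..s, β b :=
    intervalIntegral.integral_congr_ae <| Filter.Eventually.of_forall fun τ hτ => by
      rw [uIoc_of_le he.2] at hτ
      have hτb : b < ξ τ := by rw [hafter τ hτ.1.le]; nlinarith [hτ.1]
      rw [indicator_of_mem (show ξ τ ∈ Ioi b from hτb), hβ _ hτb.le]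
  rw [← intervalIntegral.integral_add_adjacent_intervals (hint 0 e) (hint e s),
    hzero e he.1 fun τ hτ => not_lt.1 fun h => (hstay τ e hτ.2 h).ne' hξe, hexit,
    intervalIntegral.integral_const, smul_eq_mul, max_eq_left (by linarith), hafter s he.2]
  ring

end FieldConstantAbove

section FieldConstantBelow

variable {β ξ : ℝ → ℝ} {a : ℝ} (hξ : ∀ s, HasDerivAt ξ (β (ξ s)) s)
  (hβ : ∀ x, x ≤ a → β x = β a)
include hξ hβ

theorem apply_neg_of_lt (h0 : a ≤ ξ 0) {s : ℝ} (hs : 0 ≤ s) (ha : ξ s < a) : β a < 0 := by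
  by_contra! hc
  have := le_of_apply_nonpos (β := fun x => -β (-x)) (ξ := fun s => -ξ s) (b := -a)
    (fun s => by simpa using (hξ s).fun_neg) (fun x hx => by simp [hβ (-x) (by linarith)])
    (by simpa using hc) (by simpa using h0) hs
  simp only [neg_le_neg_iff] at this
  linarith

theorem max_sub_eq_neg_integral_indicator {K : NNReal} (hK : LipschitzWith K β) (h0 : a ≤ ξ 0)
    {s : ℝ} (hs : 0 ≤ s) :
    max (a - ξ s) 0 = -∫ τ in 0..s, (Iio a).indicator β (ξ τ) := by
  have h := max_sub_eq_integral_indicator (β := fun x => -β (-x)) (ξ := fun s => -ξ s) (b := -a)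
    (fun s => by simpa using (hξ s).fun_neg) (fun x hx => by simp [hβ (-x) (by linarith)])
    (hK.comp LipschitzWith.id.neg).neg (by simpa using h0) hs
  rw [← intervalIntegral.integral_neg, show a - ξ s = -ξ s - -a by ring, h]
  refine intervalIntegral.integral_congr fun τ _ => ?_
  by_cases hτ : ξ τ < a <;> simp [hτ]

end FieldConstantBelow

theorem coe_projIcc_eq_sub_add {a b : ℝ} (h : a ≤ b) (x : ℝ) :
    (projIcc a b h x : ℝ) = x - max (x - b) 0 + max (a - x) 0 := by
  rw [coe_projIcc]
  rcases le_total x a with hxa | hax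
  · rw [min_eq_right (hxa.trans h), max_eq_left hxa, max_eq_right (by linarith : x - b ≤ 0),
      max_eq_left (by linarith : 0 ≤ a - x)]
    ring
  rcases le_total x b with hxb | hbx
  · rw [min_eq_right hxb, max_eq_right hax, max_eq_right (by linarith : x - b ≤ 0),
      max_eq_right (by linarith : a - x ≤ 0)]
    ring
  · rw [min_eq_left hbx, max_eq_right h, max_eq_left (by linarith : 0 ≤ x - b),
      max_eq_right (by linarith : a - x ≤ 0)]
    ring

theorem indicator_sub_indicator_mul_bdryNormal {a b : ℝ} (hab : a < b) (f : ℝ → ℝ) (x : ℝ) :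
    ((Ioi b).indicator f x - (Iio a).indicator f x) * bdryNormal a b (projIcc a b hab.le x) =
      (Ioi b).indicator f x + (Iio a).indicator f x := by
  by_cases hb : b < x
  · have ha : ¬ x < a := by linarith
    simp [hb, ha, projIcc_of_right_le hab.le hb.le, bdryNormal, hab.ne']
  by_cases ha : x < a
  · simp [hb, ha, projIcc_of_le_left hab.le ha.le, bdryNormal]
  · simp [hb, ha]

section Construction

variable {a b : ℝ} (hab : a < b) {β ξ : ℝ → ℝ} (hξ : ∀ s, HasDerivAt ξ (β (ξ s)) s)
  (hβb : ∀ x, b ≤ x → β x = β b) (hβa : ∀ x, x ≤ a → β x = β a) (h0 : ξ 0 ∈ Icc a b)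
include hab hξ hβb hβa h0

theorem indicator_sub_indicator_nonneg {s : ℝ} (hs : 0 ≤ s) :
    0 ≤ (Ioi b).indicator β (ξ s) - (Iio a).indicator β (ξ s) := by
  by_cases hb : b < ξ s
  · have hc : 0 < β b := not_le.1 fun hc => (le_of_apply_nonpos hξ hβb hc h0.2 hs).not_gt hb
    simp [hb, show ¬ ξ s < a by linarith, hβb _ hb.le, hc.le]
  by_cases ha : ξ s < a
  · simp [hb, ha, hβa _ ha.le, (apply_neg_of_lt hξ hβa h0.1 hs ha).le]
  · simp [hb, ha]

theorem projIcc_eq_add_integral {K : NNReal} (hK : LipschitzWith K β) {s : ℝ} (hs : 0 ≤ s) :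
    (projIcc a b hab.le (ξ s) : ℝ) = ξ 0 + ∫ τ in 0..s, (β (ξ τ) -
      ((Ioi b).indicator β (ξ τ) - (Iio a).indicator β (ξ τ)) *
        bdryNormal a b (projIcc a b hab.le (ξ τ))) := by
  have hξc : Continuous ξ := continuous_iff_continuousAt.2 fun τ => (hξ τ).continuousAt
  have hint : ∀ g : ℝ → ℝ, LocallyIntegrable g volume → IntervalIntegrable g volume 0 s :=
    fun g hg => (hg.integrableOn_isCompact isCompact_uIcc).intervalIntegrable
  have hup := hint _ <|
    locallyIntegrable_indicator_comp hK.continuous hξc (measurableSet_Ioi (a := b))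
  have hlow := hint _ <|
    locallyIntegrable_indicator_comp hK.continuous hξc (measurableSet_Iio (a := a))
  have hβξ : IntervalIntegrable (fun τ => β (ξ τ)) volume 0 s :=
    hint _ (hK.continuous.comp hξc).locallyIntegrable
  rw [intervalIntegral.integral_congr fun τ _ => congrArg (β (ξ τ) - ·)
      (indicator_sub_indicator_mul_bdryNormal hab β (ξ τ)),
    intervalIntegral.integral_sub hβξ (hup.add hlow), intervalIntegral.integral_add hup hlow,
    intervalIntegral.integral_eq_sub_of_hasDerivAt (fun τ _ => hξ τ) hβξ,
    ← max_sub_eq_integral_indicator hξ hβb hK h0.2 hs,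
    ← neg_neg (∫ τ in 0..s, (Iio a).indicator β (ξ τ)),
    ← max_sub_eq_neg_integral_indicator hξ hβa hK h0.1 hs, coe_projIcc_eq_sub_add]
  ring

theorem skorokhodSol_projIcc {K : NNReal} (hK : LipschitzWith K β) :
    SkorokhodSol a b (ξ 0) (fun s => β (ξ s)) (fun s => projIcc a b hab.le (ξ s))
      (fun s => (Ioi b).indicator β (ξ s) - (Iio a).indicator β (ξ s)) := by
  have hξc : Continuous ξ := continuous_iff_continuousAt.2 fun τ => (hξ τ).continuousAt
  have hl := (locallyIntegrable_indicator_comp hK.continuous hξc (measurableSet_Ioi (a := b))).sub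
    (locallyIntegrable_indicator_comp hK.continuous hξc (measurableSet_Iio (a := a)))
  refine ⟨by simp [projIcc_of_mem hab.le h0], fun s _ => (projIcc a b hab.le (ξ s)).2,
    hl.locallyIntegrableOn _,
    ae_restrict_of_forall_mem measurableSet_Ici fun s hs =>
      indicator_sub_indicator_nonneg hab hξ hβb hβa h0 hs,
    fun s hs => projIcc_eq_add_integral hab hξ hβb hβa h0 hK hs,
    ae_restrict_of_forall_mem measurableSet_Ici fun s _ hs => ?_⟩
  have hb : ¬ b < ξ s := fun hb => by simp [projIcc_of_right_le hab.le hb.le] at hs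
  have ha : ¬ ξ s < a := fun ha => by simp [projIcc_of_le_left hab.le ha.le] at hs
  simp [hb, ha]

end Construction

theorem exists_skorokhodSol_of_lipschitzOnWith {a b α : ℝ} (hab : a < b) {f : ℝ → ℝ}
    {K : NNReal} (hf : LipschitzOnWith K f (Icc a b)) (hα : α ∈ Icc a b) :
    ∃ η l : ℝ → ℝ, LocallyIntegrableOn (fun s => f (η s)) (Ici 0) volume ∧
      SkorokhodSol a b α (fun s => f (η s)) η l := by
  set β : ℝ → ℝ := fun x => f (projIcc a b hab.le x)
  have hβK : LipschitzWith K β := by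
    have := hf.comp (s := univ)
      ((LipschitzWith.subtype_val _).comp (LipschitzWith.projIcc hab.le)).lipschitzOnWith
      fun x _ => (projIcc a b hab.le x).2
    rw [lipschitzOnWith_univ, mul_one, mul_one] at this
    exact this
  have hβbdd : Bornology.IsBounded (range β) :=
    (isCompact_Icc.image_of_continuousOn hf.continuousOn).isBounded.subset <|
      range_subset_iff.2 fun x => mem_image_of_mem f (projIcc a b hab.le x).2
  obtain ⟨ξ, hξ0, hξ⟩ := exists_forall_hasDerivAt_of_lipschitzWith hβK hβbdd α
  have hsol := skorokhodSol_projIcc hab hξ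
    (fun x hx => by simp [β, projIcc_of_right_le hab.le hx])
    (fun x hx => by simp [β, projIcc_of_le_left hab.le hx]) (hξ0 ▸ hα) hβK
  rw [hξ0] at hsol
  have hξc : Continuous ξ := continuous_iff_continuousAt.2 fun τ => (hξ τ).continuousAt
  exact ⟨_, _, (hβK.continuous.comp hξc).locallyIntegrable.locallyIntegrableOn _, hsol⟩

theorem measurable_bdryNormal (a b : ℝ) : Measurable (bdryNormal a b) :=
  Measurable.ite (measurableSet_singleton a) measurable_const <|
    Measurable.ite (measurableSet_singleton b) measurable_const measurable_const

theorem abs_bdryNormal_le (a b x : ℝ) : |bdryNormal a b x| ≤ 1 := by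
  unfold bdryNormal
  split_ifs <;> norm_num

theorem aemeasurable_intervalIntegral_primitive (F : ℝ → ℝ) (T : ℝ) :
    AEMeasurable (fun s => ∫ τ in 0..s, F τ) (volume.restrict (Ioc 0 T)) := by
  classical
  rcases lt_or_ge T 0 with hT | hT
  · simp [Ioc_eq_empty_of_le hT.le, aemeasurable_zero_measure]
  -- the primitive is continuous up to the supremum `u` of the times up to which `F` is
  -- integrable, and vanishes (by convention) beyond it
  set S := {x ∈ Icc 0 T | IntervalIntegrable F volume 0 x}
  set u := sSup S
  have h0S : (0 : ℝ) ∈ S := ⟨⟨le_rfl, hT⟩, .refl⟩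
  have hSbdd : BddAbove S := ⟨T, fun x hx => hx.1.2⟩
  have hcont : ContinuousOn (fun s => ∫ τ in 0..s, F τ) (Ioo 0 u) := fun s hs => by
    obtain ⟨x, hxS, hsx⟩ := exists_lt_of_lt_csSup ⟨0, h0S⟩ hs.2
    have hc := intervalIntegral.continuousOn_primitive_interval' hxS.2 left_mem_uIcc
    rw [uIcc_of_le hxS.1.1] at hc
    exact (hc.continuousAt (Icc_mem_nhds hs.1 hsx)).continuousWithinAt
  have hzero : ∀ s ∈ Ioc u T, ∫ τ in 0..s, F τ = 0 := fun s hs =>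
    intervalIntegral.integral_undef fun hF =>
      hs.1.not_ge (le_csSup hSbdd ⟨⟨(le_csSup hSbdd h0S).trans hs.1.le, hs.2⟩, hF⟩)
  refine (hcont.measurable_piecewise (continuousOn_const (c := (0 : ℝ))) measurableSet_Ioo)
    |>.aemeasurable.congr ?_
  have hne : ∀ᵐ s ∂volume, s ≠ u := by simp [ae_iff, measure_singleton]
  filter_upwards [ae_restrict_of_ae hne, ae_restrict_mem measurableSet_Ioc] with s hsu hs
  rcases hsu.lt_or_gt with hlt | hgt
  · exact piecewise_eq_of_mem _ _ _ ⟨hs.1, hlt⟩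
  · rw [piecewise_eq_of_notMem _ _ _ fun h => h.2.not_gt hgt, hzero s ⟨hgt, hs.2⟩]

theorem SkorokhodSol.intervalIntegrable {a b α : ℝ} {v η l : ℝ → ℝ}
    (hv : LocallyIntegrableOn v (Ici 0) volume) (h : SkorokhodSol a b α v η l) {T : ℝ}
    (hT : 0 ≤ T) : IntervalIntegrable (fun τ => v τ - l τ * bdryNormal a b (η τ)) volume 0 T := by
  obtain ⟨-, -, hl, -, hid, -⟩ := h
  have hvI := (hv.integrableOn_compact_subset Icc_subset_Ici_self isCompact_Icc).mono_set
    (Ioc_subset_Icc_self (a := 0) (b := T))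
  have hlI := (hl.integrableOn_compact_subset Icc_subset_Ici_self isCompact_Icc).mono_set
    (Ioc_subset_Icc_self (a := 0) (b := T))
  -- `η` is not assumed measurable; it is, being a primitive
  have hη : AEMeasurable η (volume.restrict (Ioc 0 T)) :=
    ((aemeasurable_intervalIntegral_primitive _ T).const_add α).congr <|
      ae_restrict_of_forall_mem measurableSet_Ioc fun s hs => (hid s hs.1.le).symm
  rw [intervalIntegrable_iff_integrableOn_Ioc_of_le hT]
  refine Integrable.mono' (hvI.norm.add hlI.norm) (hvI.aestronglyMeasurable.sub
    (hlI.aestronglyMeasurable.mul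
      ((measurable_bdryNormal a b).comp_aemeasurable hη).aestronglyMeasurable))
    (Filter.Eventually.of_forall fun τ => ?_)
  calc ‖v τ - l τ * bdryNormal a b (η τ)‖ ≤ ‖v τ‖ + ‖l τ‖ * |bdryNormal a b (η τ)| := by
        simpa [norm_mul] using norm_sub_le (v τ) (l τ * bdryNormal a b (η τ))
    _ ≤ ‖v τ‖ + ‖l τ‖ := by
        gcongr
        exact mul_le_of_le_one_right (norm_nonneg _) (abs_bdryNormal_le a b _)

theorem mul_bdryNormal_mul_sub_nonneg {a b x y l : ℝ} (hx : x ∈ Icc a b) (hy : y ∈ Icc a b)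
    (hl : 0 ≤ l) (hl0 : x ∈ Ioo a b → l = 0) : 0 ≤ l * bdryNormal a b x * (x - y) := by
  unfold bdryNormal
  split_ifs with ha hb
  · nlinarith [hy.1]
  · nlinarith [hy.2]
  · rw [hl0 ⟨lt_of_le_of_ne hx.1 (Ne.symm ha), lt_of_le_of_ne hx.2 hb⟩]
    simp

theorem sub_mul_sub_le_of_lipschitzOnWith {f : ℝ → ℝ} {K : NNReal} {s : Set ℝ}
    (hf : LipschitzOnWith K f s) {x y : ℝ} (hx : x ∈ s) (hy : y ∈ s) :
    (f x - f y) * (x - y) ≤ K * (x - y) ^ 2 := by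
  have h := hf.dist_le_mul x hx y hy
  rw [Real.dist_eq, Real.dist_eq] at h
  calc (f x - f y) * (x - y) ≤ |f x - f y| * |x - y| := by
        rw [← abs_mul]; exact le_abs_self _
    _ ≤ K * |x - y| * |x - y| := by gcongr
    _ = K * (x - y) ^ 2 := by rw [mul_assoc, ← sq, sq_abs]

theorem intervalIntegral_eq_zero_of_mul_le_sq {G : ℝ → ℝ} {K t : ℝ}
    (hG : IntervalIntegrable G volume 0 t)
    (hGP : ∀ᵐ x, x ∈ Ioc 0 t → G x * (∫ y in 0..x, G y) ≤ K * (∫ y in 0..x, G y) ^ 2)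
    {s : ℝ} (hs : s ∈ Icc 0 t) : ∫ y in 0..s, G y = 0 := by
  set P := fun x => ∫ y in 0..x, G y
  have hGs : IntervalIntegrable G volume 0 s :=
    hG.mono_set (uIcc_subset_uIcc_left (uIcc_of_le (hs.1.trans hs.2) ▸ hs))
  -- Grönwall: `P² e^{-2Kx}` is absolutely continuous with a.e. nonpositive derivative
  have hP := hGs.absolutelyContinuousOnInterval_intervalIntegral left_mem_uIcc
  have hE : AbsolutelyContinuousOnInterval (fun x => Real.exp (-(2 * K) * x)) 0 s :=
    ContDiffOn.absolutelyContinuousOnInterval (by fun_prop)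
  have hFTC := ((hP.fun_mul hP).fun_mul hE).integral_deriv_eq_sub
  have hderiv : ∀ᵐ x, x ∈ Ioc 0 s →
      deriv (fun x => P x * P x * Real.exp (-(2 * K) * x)) x ≤ 0 := by
    filter_upwards [hGs.ae_hasDerivAt_integral, hGP] with x hPx hGPx hx
    have hxI : x ∈ uIcc 0 s := by rw [uIcc_of_le hs.1]; exact Ioc_subset_Icc_self hx
    have hD : HasDerivAt (fun x => P x * P x * Real.exp (-(2 * K) * x))
        ((G x * P x + P x * G x) * Real.exp (-(2 * K) * x)
          + P x * P x * (Real.exp (-(2 * K) * x) * (-(2 * K) * 1))) x :=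
      ((hPx hxI 0 left_mem_uIcc).fun_mul (hPx hxI 0 left_mem_uIcc)).fun_mul
        ((hasDerivAt_id' x).const_mul (-(2 * K))).exp
    rw [hD.deriv]
    have hGP' := hGPx ⟨hx.1, hx.2.trans hs.2⟩
    have := Real.exp_pos (-(2 * K) * x)
    nlinarith
  have hle : P s * P s * Real.exp (-(2 * K) * s) ≤ 0 := by
    have h0 : P 0 = 0 := intervalIntegral.integral_same
    have := integral_nonpos_of_ae ((ae_restrict_iff' measurableSet_Ioc).2 hderiv)
    rw [← intervalIntegral.integral_of_le hs.1, hFTC] at this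
    simpa [h0] using this
  have hsq : P s * P s ≤ 0 := by
    by_contra! h
    nlinarith [mul_pos h (Real.exp_pos (-(2 * K) * s))]
  exact mul_self_eq_zero.1 (le_antisymm hsq (mul_self_nonneg _))

theorem SkorokhodSol.eqOn_of_ae_eq {a b α t : ℝ} {f : ℝ → ℝ} {K : NNReal}
    (hf : LipschitzOnWith K f (Icc a b)) {v η l v' η' l' : ℝ → ℝ}
    (hv : LocallyIntegrableOn v (Ici 0) volume) (h : SkorokhodSol a b α v η l)
    (hvf : ∀ᵐ τ, τ ∈ Ioc 0 t → v τ = f (η τ))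
    (hv' : LocallyIntegrableOn v' (Ici 0) volume) (h' : SkorokhodSol a b α v' η' l')
    (hvf' : ∀ᵐ τ, τ ∈ Ioc 0 t → v' τ = f (η' τ)) :
    EqOn η η' (Icc 0 t) := by
  intro s hs
  have ht : 0 ≤ t := hs.1.trans hs.2
  have hF := h.intervalIntegrable hv ht
  have hF' := h'.intervalIntegrable hv' ht
  obtain ⟨-, hmem, -, hl, hid, hl0⟩ := h
  obtain ⟨-, hmem', -, hl', hid', hl0'⟩ := h'
  set G := fun τ => (v τ - l τ * bdryNormal a b (η τ)) - (v' τ - l' τ * bdryNormal a b (η' τ))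
  have hdiff : ∀ x ∈ Icc 0 t, η x - η' x = ∫ y in 0..x, G y := fun x hx => by
    have hsub : uIcc 0 x ⊆ uIcc 0 t := uIcc_subset_uIcc_left (by rw [uIcc_of_le ht]; exact hx)
    rw [hid x hx.1, hid' x hx.1, intervalIntegral.integral_sub (hF.mono_set hsub)
      (hF'.mono_set hsub)]
    ring
  have hGP : ∀ᵐ x, x ∈ Ioc 0 t → G x * (∫ y in 0..x, G y) ≤ K * (∫ y in 0..x, G y) ^ 2 := by
    filter_upwards [hvf, hvf', (ae_restrict_iff' measurableSet_Ici).1 hl,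
      (ae_restrict_iff' measurableSet_Ici).1 hl', (ae_restrict_iff' measurableSet_Ici).1 hl0,
      (ae_restrict_iff' measurableSet_Ici).1 hl0'] with x hvx hvx' hlx hlx' hl0x hl0x' hx
    have hx0 : x ∈ Ici 0 := hx.1.le
    rw [← hdiff x ⟨hx.1.le, hx.2⟩]
    have hrefl := mul_bdryNormal_mul_sub_nonneg (hmem x hx0) (hmem' x hx0) (hlx hx0) (hl0x hx0)
    have hrefl' :=
      mul_bdryNormal_mul_sub_nonneg (hmem' x hx0) (hmem x hx0) (hlx' hx0) (hl0x' hx0)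
    have hdrift := sub_mul_sub_le_of_lipschitzOnWith hf (hmem x hx0) (hmem' x hx0)
    simp only [G, hvx hx, hvx' hx]
    nlinarith
  linarith [hdiff s hs, intervalIntegral_eq_zero_of_mul_le_sq (hF.sub hF') hGP hs]

theorem ae_eq_of_integral_Lag1_eq_zero {Φp Φm : ℝ → ℝ} {a b t : ℝ} {η v : ℝ → ℝ}
    (hΦp : ∀ x ∈ Icc a b, 0 < Φp x) (hΦm : ∀ x ∈ Icc a b, 0 < Φm x)
    (hη : ∀ s ∈ Ici (0 : ℝ), η s ∈ Icc a b) (ht : 0 ≤ t)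
    (hi : IntervalIntegrable (fun s => Lag1 Φp Φm (η s) (v s)) volume 0 t)
    (h0 : ∫ s in 0..t, Lag1 Φp Φm (η s) (v s) = 0) :
    ∀ᵐ τ, τ ∈ Ioc 0 t → v τ = Φp (η τ) - Φm (η τ) := by
  have hz := (intervalIntegral.integral_eq_zero_iff_of_le_of_nonneg_ae ht
    (Filter.Eventually.of_forall fun τ => Lag1_nonneg _ _ _ _) hi).1 h0
  filter_upwards [(ae_restrict_iff' measurableSet_Ioc).1 hz] with τ hτ hτt
  have hmem := hη τ hτt.1.le
  exact (Lag1_eq_zero_iff (hΦp _ hmem) (hΦm _ hmem)).1 (hτ hτt)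

/-- **Existence and uniqueness of the zero-action reflected path**: there is a
triple `(η, v, l)` solving the Skorokhod problem on `[a,b]` started from `α` with
zero action `∫₀ᵗ L̃(η, v) = 0`, and any two such zero-action triples have the same
path on `[0, t]`. -/
theorem zero_action_path_exists_unique
    (a b : ℝ) (hab : a < b)
    (Φp Φm : ℝ → ℝ) (Kp Km : NNReal)
    (hΦpLip : LipschitzOnWith Kp Φp (Set.Icc a b))
    (hΦmLip : LipschitzOnWith Km Φm (Set.Icc a b))
    (c0 : ℝ) (hc0 : 0 < c0)
    (hΦp : ∀ α ∈ Set.Icc a b, c0 ≤ Φp α)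
    (hΦm : ∀ α ∈ Set.Icc a b, c0 ≤ Φm α)
    (t : ℝ) (ht : 0 < t) (α : ℝ) (hα : α ∈ Set.Icc a b) :
    (∃ η v l : ℝ → ℝ,
      MeasureTheory.LocallyIntegrableOn v (Set.Ici 0) MeasureTheory.volume ∧
      SkorokhodSol a b α v η l ∧
      IntervalIntegrable (fun s => Lag1 Φp Φm (η s) (v s))
        MeasureTheory.volume 0 t ∧
      ∫ s in (0:ℝ)..t, Lag1 Φp Φm (η s) (v s) = 0) ∧
    (∀ η v l η' v' l' : ℝ → ℝ,
      MeasureTheory.LocallyIntegrableOn v (Set.Ici 0) MeasureTheory.volume →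
      SkorokhodSol a b α v η l →
      IntervalIntegrable (fun s => Lag1 Φp Φm (η s) (v s))
        MeasureTheory.volume 0 t →
      (∫ s in (0:ℝ)..t, Lag1 Φp Φm (η s) (v s)) = 0 →
      MeasureTheory.LocallyIntegrableOn v' (Set.Ici 0) MeasureTheory.volume →
      SkorokhodSol a b α v' η' l' →
      IntervalIntegrable (fun s => Lag1 Φp Φm (η' s) (v' s))
        MeasureTheory.volume 0 t →
      (∫ s in (0:ℝ)..t, Lag1 Φp Φm (η' s) (v' s)) = 0 →
      ∀ s ∈ Set.Icc (0:ℝ) t, η s = η' s) := by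
  have hpos_p : ∀ x ∈ Icc a b, 0 < Φp x := fun x hx => hc0.trans_le (hΦp x hx)
  have hpos_m : ∀ x ∈ Icc a b, 0 < Φm x := fun x hx => hc0.trans_le (hΦm x hx)
  have hdrift := hΦpLip.sub hΦmLip
  refine ⟨?_, fun η v l η' v' l' hv h hi h0 hv' h' hi' h0' =>
    h.eqOn_of_ae_eq hdrift hv
      (ae_eq_of_integral_Lag1_eq_zero hpos_p hpos_m h.2.1 ht.le hi h0) hv' h'
      (ae_eq_of_integral_Lag1_eq_zero hpos_p hpos_m h'.2.1 ht.le hi' h0')⟩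
  obtain ⟨η, l, hv, h⟩ := exists_skorokhodSol_of_lipschitzOnWith hab hdrift hα
  have hLag : EqOn (fun s => Lag1 Φp Φm (η s) (Φp (η s) - Φm (η s))) 0 (Icc 0 t) :=
    fun s hs => (Lag1_eq_zero_iff (hpos_p _ (h.2.1 s hs.1)) (hpos_m _ (h.2.1 s hs.1))).2 rfl
  refine ⟨η, _, l, hv, h, ?_, ?_⟩
  · exact (intervalIntegrable_iff_integrableOn_Icc_of_le ht.le).2
      (integrableOn_zero.congr_fun hLag.symm measurableSet_Icc)
  · rw [intervalIntegral.integral_congr (uIcc_of_le ht.le ▸ hLag)]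
    simp
end
end

section
/- Let 0 < c₁ ≤ c₂ and C₁ > 0. Then there exists a constant C > 0, depending only on c₁, c₂ and C₁, such that for all a, b, a′, b′ ∈ [c₁, c₂] and all v ∈ ℝ with |v| ≤ C₁: |L_{a,b}(v) − L_{a′,b′}(v)| ≤ C·(|a − a′| + |b − b′|), where L_{a,b}(v) := sup_{p ∈ ℝ} (p·v − a·(exp(p) − 1) − b·(exp(−p) − 1)). -/
noncomputable section

/-- The Lagrangian `L_{a,b}(v) = sup_p (p·v − a·(eᵖ−1) − b·(e⁻ᵖ−1))` is Lipschitz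
in the coefficients `(a, b) ∈ [c₁, c₂]²`, uniformly for `|v| ≤ C₁`, with a
constant depending only on `c₁`, `c₂`, `C₁`. -/
theorem lagrangian_coefficient_lipschitz
    (c1 c2 C1 : ℝ) (hc1 : 0 < c1) (hc12 : c1 ≤ c2) (hC1 : 0 < C1) :
    ∃ C > 0, ∀ a b a' b' : ℝ,
      a ∈ Set.Icc c1 c2 → b ∈ Set.Icc c1 c2 →
      a' ∈ Set.Icc c1 c2 → b' ∈ Set.Icc c1 c2 →
      ∀ v : ℝ, |v| ≤ C1 →
        |sSup (Set.range fun p : ℝ =>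
            p * v - a * (Real.exp p - 1) - b * (Real.exp (-p) - 1))
          - sSup (Set.range fun p : ℝ =>
            p * v - a' * (Real.exp p - 1) - b' * (Real.exp (-p) - 1))|
          ≤ C * (|a - a'| + |b - b'|) := by
  have hc2 : 0 < c2 := lt_of_lt_of_le hc1 hc12
  set P : ℝ := 4 * (C1 + c2) / c1 + 1 with hPdef
  have hP1 : 1 ≤ P := by
    have h : 0 ≤ 4 * (C1 + c2) / c1 := by positivity
    rw [hPdef]; linarith
  have hP0 : 0 < P := by linarith
  -- tail bound: for p ≥ P the function is nonpositive
  have tail : ∀ a b : ℝ, a ∈ Set.Icc c1 c2 → b ∈ Set.Icc c1 c2 → ∀ v : ℝ, |v| ≤ C1 →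
      ∀ p : ℝ, P ≤ p → p * v - a * (Real.exp p - 1) - b * (Real.exp (-p) - 1) ≤ 0 := by
    intro a b ha hb v hv p hp
    have hp1 : 1 ≤ p := le_trans hP1 hp
    have hp0 : 0 ≤ p := by linarith
    have hexp2 : p / 2 + 1 ≤ Real.exp (p / 2) := Real.add_one_le_exp _
    have hsq : Real.exp p = Real.exp (p / 2) * Real.exp (p / 2) := by
      rw [← Real.exp_add]; ring_nf
    have hquad : 1 + p + p ^ 2 / 4 ≤ Real.exp p := by
      rw [hsq]; nlinarith [Real.exp_pos (p / 2)]
    have hpv : p * v ≤ p * C1 :=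
      mul_le_mul_of_nonneg_left (le_trans (le_abs_self v) hv) hp0
    have hae : c1 * (Real.exp p - 1) ≤ a * (Real.exp p - 1) := by
      have h1 : (0:ℝ) ≤ Real.exp p - 1 := by nlinarith
      exact mul_le_mul_of_nonneg_right ha.1 h1
    have hbe : -(b * (Real.exp (-p) - 1)) ≤ c2 := by
      have h1 : 0 < Real.exp (-p) := Real.exp_pos _
      nlinarith [hb.1, hb.2]
    have hPp : 4 * (C1 + c2) ≤ c1 * p := by
      rw [hPdef] at hp
      rw [div_add' _ _ _ (ne_of_gt hc1)] at hp
      rw [div_le_iff₀ hc1] at hp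
      nlinarith
    -- c1 * (exp p - 1) ≥ c1*p + c1*p^2/4 ≥ p*C1 + c2
    have hmul : c1 * p * p ≥ 4 * (C1 + c2) * p := by nlinarith
    nlinarith [mul_le_mul_of_nonneg_left hquad (le_of_lt hc1)]
  -- uniform upper bound on the whole range
  have bdd : ∀ a b : ℝ, a ∈ Set.Icc c1 c2 → b ∈ Set.Icc c1 c2 → ∀ v : ℝ, |v| ≤ C1 →
      ∀ p : ℝ, p * v - a * (Real.exp p - 1) - b * (Real.exp (-p) - 1) ≤ P * C1 + 2 * c2 := by
    intro a b ha hb v hv p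
    have hB0 : 0 ≤ P * C1 + 2 * c2 := by positivity
    rcases le_or_gt p (-P) with hneg | h1
    · have := tail b a hb ha (-v) (by rwa [abs_neg]) (-p) (by linarith)
      have heq : (-p) * (-v) - b * (Real.exp (-p) - 1) - a * (Real.exp (-(-p)) - 1)
          = p * v - a * (Real.exp p - 1) - b * (Real.exp (-p) - 1) := by
        rw [neg_neg]; ring
      rw [heq] at this; linarith
    rcases le_or_gt P p with hpos | h2
    · have := tail a b ha hb v hv p hpos; linarith
    · -- |p| ≤ P
      have hpv : p * v ≤ P * C1 := by
        calc p * v ≤ |p * v| := le_abs_self _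
          _ = |p| * |v| := abs_mul _ _
          _ ≤ P * C1 := by
              apply mul_le_mul _ hv (abs_nonneg _) (le_of_lt hP0)
              rw [abs_le]; constructor <;> linarith
      have h3 : -(a * (Real.exp p - 1)) ≤ c2 := by
        have := Real.exp_pos p; nlinarith [ha.1, ha.2]
      have h4 : -(b * (Real.exp (-p) - 1)) ≤ c2 := by
        have := Real.exp_pos (-p); nlinarith [hb.1, hb.2]
      linarith
  -- one-sided comparison
  have key : ∀ a b a' b' : ℝ,
      a ∈ Set.Icc c1 c2 → b ∈ Set.Icc c1 c2 →
      a' ∈ Set.Icc c1 c2 → b' ∈ Set.Icc c1 c2 →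
      ∀ v : ℝ, |v| ≤ C1 →
      sSup (Set.range fun p : ℝ =>
          p * v - a * (Real.exp p - 1) - b * (Real.exp (-p) - 1))
        ≤ sSup (Set.range fun p : ℝ =>
          p * v - a' * (Real.exp p - 1) - b' * (Real.exp (-p) - 1))
          + Real.exp P * (|a - a'| + |b - b'|) := by
    intro a b a' b' ha hb ha' hb' v hv
    set g' : ℝ → ℝ := fun p => p * v - a' * (Real.exp p - 1) - b' * (Real.exp (-p) - 1) with hg'
    have hbdd' : BddAbove (Set.range g') :=
      ⟨P * C1 + 2 * c2, by rintro x ⟨p, rfl⟩; exact bdd a' b' ha' hb' v hv p⟩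
    have hsup0 : 0 ≤ sSup (Set.range g') := by
      have h0 : g' 0 = 0 := by simp [hg']
      have := le_csSup hbdd' (Set.mem_range_self 0)
      rwa [h0] at this
    have hε : 0 ≤ Real.exp P * (|a - a'| + |b - b'|) := by positivity
    apply csSup_le (Set.range_nonempty _)
    rintro x ⟨p, rfl⟩
    show p * v - a * (Real.exp p - 1) - b * (Real.exp (-p) - 1)
      ≤ sSup (Set.range g') + Real.exp P * (|a - a'| + |b - b'|)
    by_cases hcase : |p| ≤ P
    · -- compare pointwise
      have he1 : |Real.exp p - 1| ≤ Real.exp P := by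
        have h1 : Real.exp p ≤ Real.exp P :=
          Real.exp_le_exp.2 (le_trans (le_abs_self p) hcase)
        have h2 : 0 < Real.exp p := Real.exp_pos p
        have h3 : 1 ≤ Real.exp P := Real.one_le_exp (le_of_lt hP0)
        rw [abs_le]; constructor <;> linarith
      have he2 : |Real.exp (-p) - 1| ≤ Real.exp P := by
        have h1 : Real.exp (-p) ≤ Real.exp P :=
          Real.exp_le_exp.2 (le_trans (neg_le_abs p) hcase)
        have h2 : 0 < Real.exp (-p) := Real.exp_pos _
        have h3 : 1 ≤ Real.exp P := Real.one_le_exp (le_of_lt hP0)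
        rw [abs_le]; constructor <;> linarith
      have hdiff : (p * v - a * (Real.exp p - 1) - b * (Real.exp (-p) - 1)) - g' p
          ≤ Real.exp P * (|a - a'| + |b - b'|) := by
        have heq : (p * v - a * (Real.exp p - 1) - b * (Real.exp (-p) - 1)) - g' p
            = (a' - a) * (Real.exp p - 1) + (b' - b) * (Real.exp (-p) - 1) := by
          simp only [hg']; ring
        rw [heq]
        have h1 : (a' - a) * (Real.exp p - 1) ≤ |a - a'| * Real.exp P := by
          calc (a' - a) * (Real.exp p - 1) ≤ |(a' - a) * (Real.exp p - 1)| := le_abs_self _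
            _ = |a' - a| * |Real.exp p - 1| := abs_mul _ _
            _ ≤ |a - a'| * Real.exp P := by
                rw [abs_sub_comm a' a]
                exact mul_le_mul_of_nonneg_left he1 (abs_nonneg _)
        have h2 : (b' - b) * (Real.exp (-p) - 1) ≤ |b - b'| * Real.exp P := by
          calc (b' - b) * (Real.exp (-p) - 1) ≤ |(b' - b) * (Real.exp (-p) - 1)| := le_abs_self _
            _ = |b' - b| * |Real.exp (-p) - 1| := abs_mul _ _
            _ ≤ |b - b'| * Real.exp P := by
                rw [abs_sub_comm b' b]
                exact mul_le_mul_of_nonneg_left he2 (abs_nonneg _)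
        nlinarith
      have hle : g' p ≤ sSup (Set.range g') := le_csSup hbdd' (Set.mem_range_self p)
      linarith
    · push_neg at hcase
      have h0 : p * v - a * (Real.exp p - 1) - b * (Real.exp (-p) - 1) ≤ 0 := by
        rcases le_or_gt P p with hpos | h2
        · exact tail a b ha hb v hv p hpos
        · have hneg : p ≤ -P := by
            rcases abs_cases p with ⟨h, _⟩ | ⟨h, _⟩ <;> linarith
          have := tail b a hb ha (-v) (by rwa [abs_neg]) (-p) (by linarith)
          have heq : (-p) * (-v) - b * (Real.exp (-p) - 1) - a * (Real.exp (-(-p)) - 1)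
              = p * v - a * (Real.exp p - 1) - b * (Real.exp (-p) - 1) := by
            rw [neg_neg]; ring
          rw [heq] at this; exact this
      linarith
  refine ⟨Real.exp P, Real.exp_pos P, ?_⟩
  intro a b a' b' ha hb ha' hb' v hv
  rw [abs_sub_le_iff]
  constructor
  · have := key a b a' b' ha hb ha' hb' v hv
    linarith
  · have := key a' b' a b ha' hb' ha hb v hv
    rw [abs_sub_comm a' a, abs_sub_comm b' b] at this
    linarith
end
end
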